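/- arXiv:2603.17084 — 8 statements merged into one kernel-verified Lean document; each statement's English description precedes it below -/
import Mathlib

section
/- Let F_2 = ⟨a, b⟩ be the free group on a and b, and let x be an element generating a proper free factor of F_2 such that ⟨b⟩ * ⟨x⟩ = F_2 (i.e., {b, x} is a basis). Then x = b^m a^δ b^k for some integers m, k and δ ∈ {1, -1}, up to replacing x by x^{-1}. -/
open Subgroup

abbrev F2 := FreeGroup (Fin 2)

def ga : F2 := FreeGroup.of 0
def gb : F2 := FreeGroup.of 1

def IsBasis (x y : F2) : Prop :=
  Function.Bijective (FreeGroup.lift ![x, y] : FreeGroup (Fin 2) →* F2)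

namespace BasisAux

abbrev Ltr := (Fin 2) × Bool

/-- inverse of a single letter -/
def invL (l : Ltr) : Ltr := (l.1, !l.2)

@[simp] lemma invL_invL (l : Ltr) : invL (invL l) = l := by simp [invL]

/-- non-cancelling adjacency -/
def R (l1 l2 : Ltr) : Prop := ¬(l1.1 = l2.1 ∧ l1.2 = !l2.2)

lemma R_symm {l1 l2 : Ltr} (h : R l1 l2) : R l2 l1 := by
  unfold R at *
  rintro ⟨h1, h2⟩
  exact h ⟨h1.symm, by simp [h2]⟩

lemma R_invL_invL {l1 l2 : Ltr} : R (invL l1) (invL l2) ↔ R l2 l1 := by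
  unfold R invL
  constructor
  · rintro h ⟨h1, h2⟩; exact h ⟨h1.symm, by simp [h2]⟩
  · rintro h ⟨h1, h2⟩; simp at h2; exact h ⟨h1.symm, by simp [h2]⟩

lemma R_iff_ne_invL {l1 l2 : Ltr} : R l1 l2 ↔ l2 ≠ invL l1 := by
  unfold R invL
  constructor
  · intro h heq; exact h ⟨by rw [heq], by rw [heq]; simp⟩
  · rintro h ⟨h1, h2⟩
    apply h
    cases l2; cases l1; simp_all

lemma R_self (l : Ltr) : R l l := by simp [R]

def IsRed (w : List Ltr) : Prop := List.IsChain R w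

lemma IsRed.nil : IsRed [] := List.isChain_nil

lemma isRed_singleton (l : Ltr) : IsRed [l] := List.isChain_singleton l

lemma IsRed.reduce_eq {w : List Ltr} (h : IsRed w) : FreeGroup.reduce w = w := by
  induction w with
  | nil => rfl
  | cons a t ih =>
    have ht : IsRed t := h.tail
    rw [FreeGroup.reduce.cons, ih ht]
    cases t with
    | nil => rfl
    | cons b t' =>
      have hR : R a b := List.isChain_cons_cons.1 h |>.1
      simp only []
      rw [if_neg]
      exact fun hc => hR hc

lemma IsRed.toWord_mk {w : List Ltr} (h : IsRed w) : (FreeGroup.mk w).toWord = w := by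
  rw [FreeGroup.toWord_mk, h.reduce_eq]

lemma isRed_toWord (z : F2) : IsRed z.toWord := by
  rw [IsRed, List.isChain_iff_getElem]
  intro i hi
  by_contra hR
  unfold R at hR
  push_neg at hR
  obtain ⟨h1, h2⟩ := hR
  set w := z.toWord with hw
  have hi2 : i + 1 < w.length := by omega
  have hdec : w = w.take i ++ (w.get ⟨i, by omega⟩) :: (w.get ⟨i+1, hi2⟩) :: w.drop (i+2) := by
    conv_lhs => rw [← List.take_append_drop i w]
    congr 1
    rw [List.drop_eq_getElem_cons (by omega)]
    congr 1
    rw [List.drop_eq_getElem_cons (by omega)]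
    simp
  have hred : FreeGroup.reduce w = w := by rw [hw, FreeGroup.reduce_toWord]
  have hpair : w.get ⟨i+1, hi2⟩ = ((w.get ⟨i, by omega⟩).1, !(w.get ⟨i, by omega⟩).2) := by
    apply Prod.ext
    · exact h1.symm
    · show (w.get ⟨i + 1, hi2⟩).2 = !(w.get ⟨i, by omega⟩).2
      simp only [List.get_eq_getElem, hw]
      rw [h2]
      simp
  rw [hpair] at hdec
  have : FreeGroup.reduce w = w.take i ++ ((w.get ⟨i, by omega⟩).1, (w.get ⟨i, by omega⟩).2) :: ((w.get ⟨i, by omega⟩).1, !(w.get ⟨i, by omega⟩).2) :: w.drop (i+2) := by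
    rw [hred]
    conv_lhs => rw [hdec]
  exact FreeGroup.reduce.not this

lemma IsRed.append {u v : List Ltr} (hu : IsRed u) (hv : IsRed v)
    (hj : ∀ a ∈ u.getLast?, ∀ b ∈ v.head?, R a b) : IsRed (u ++ v) :=
  List.isChain_append.2 ⟨hu, hv, hj⟩

lemma IsRed.infix {u w : List Ltr} (h : IsRed w) (hui : u <:+: w) : IsRed u :=
  List.IsChain.infix h hui

lemma invRev_eq (w : List Ltr) : FreeGroup.invRev w = (w.map invL).reverse := by
  simp [FreeGroup.invRev, invL]

lemma isRed_invRev {w : List Ltr} (h : IsRed w) : IsRed (FreeGroup.invRev w) := by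
  unfold IsRed at *
  rw [invRev_eq, List.isChain_reverse, List.isChain_map]
  refine List.IsChain.imp ?_ h
  intro a b hab
  exact R_invL_invL.2 hab

end BasisAux
namespace BasisAux

lemma isRed_replicate (k : ℕ) (l : Ltr) : IsRed (List.replicate k l) := by
  induction k with
  | zero => exact IsRed.nil
  | succ n ih =>
    cases n with
    | zero => exact isRed_singleton l
    | succ m =>
      rw [List.replicate_succ]
      refine List.isChain_cons_cons.2 ⟨R_self l, ?_⟩
      simpa [List.replicate_succ, IsRed] using ih

/-- word for gb ^ m -/
def bw (m : ℤ) : List Ltr := List.replicate m.natAbs ((1 : Fin 2), decide (0 < m))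

lemma isRed_bw (m : ℤ) : IsRed (bw m) := isRed_replicate _ _

lemma bw_fst {m : ℤ} : ∀ a ∈ bw m, a.1 = (1 : Fin 2) := by
  intro a ha
  rw [bw, List.mem_replicate] at ha
  rw [ha.2]

lemma bw_length (m : ℤ) : (bw m).length = m.natAbs := by simp [bw]

lemma flatten_replicate_singleton (k : ℕ) (l : Ltr) :
    (List.replicate k [l]).flatten = List.replicate k l := by
  induction k with
  | zero => rfl
  | succ n ih => simp [List.replicate_succ, ih]

lemma mk_replicate (k : ℕ) (l : Ltr) :
    FreeGroup.mk (List.replicate k l) = (FreeGroup.mk [l]) ^ k := by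
  rw [FreeGroup.pow_mk, flatten_replicate_singleton]

lemma gb_eq_mk : gb = FreeGroup.mk [((1 : Fin 2), true)] := rfl

lemma gb_inv_eq_mk : gb⁻¹ = FreeGroup.mk [((1 : Fin 2), false)] := by
  rw [gb_eq_mk, FreeGroup.inv_mk]
  rfl

lemma ga_eq_mk : ga = FreeGroup.mk [((0 : Fin 2), true)] := rfl

lemma ga_inv_eq_mk : ga⁻¹ = FreeGroup.mk [((0 : Fin 2), false)] := by
  rw [ga_eq_mk, FreeGroup.inv_mk]
  rfl

lemma mk_bw (m : ℤ) : FreeGroup.mk (bw m) = gb ^ m := by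
  rcases lt_trichotomy 0 m with h | h | h
  · rw [bw, decide_eq_true h, mk_replicate, ← gb_eq_mk]
    rw [← zpow_natCast]
    congr 1
    omega
  · subst h; simp [bw]; rfl
  · have : decide (0 < m) = false := by simp; omega
    rw [bw, this, mk_replicate, ← gb_inv_eq_mk]
    rw [← zpow_natCast, inv_zpow']
    congr 1
    omega

lemma isRed_join {u : List Ltr} (hu : IsRed u) (hne : u ≠ [])
    (hj : ∀ a ∈ u.getLast?, ∀ b ∈ u.head?, R a b) :
    ∀ k, 1 ≤ k → IsRed ((List.replicate k u).flatten) ∧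
      ((List.replicate k u).flatten).head? = u.head? ∧
      ((List.replicate k u).flatten).getLast? = u.getLast? := by
  intro k
  induction k with
  | zero => omega
  | succ n ih =>
    intro _
    rcases Nat.eq_zero_or_pos n with hn | hn
    · subst hn
      refine ⟨by simpa using hu, by simp, by simp⟩
    · obtain ⟨ihred, ihh, ihl⟩ := ih hn
      have hflat : (List.replicate (n+1) u).flatten = u ++ (List.replicate n u).flatten := by
        rw [List.replicate_succ, List.flatten_cons]
      have hfne : (List.replicate n u).flatten ≠ [] := by
        intro hc
        rw [hc] at ihh
        simp at ihh
        cases u with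
        | nil => exact hne rfl
        | cons c t => simp at ihh
      refine ⟨?_, ?_, ?_⟩
      · rw [hflat]
        refine hu.append ihred ?_
        intro a ha b hb
        rw [ihh] at hb
        exact hj a ha b hb
      · rw [hflat, List.head?_append]
        cases u with
        | nil => exact absurd rfl hne
        | cons c t => simp
      · rw [hflat, List.getLast?_append, ihl]
        cases u.getLast?.eq_none_or_eq_some with
        | inl h =>
          exfalso
          rw [List.getLast?_eq_none_iff] at h
          exact hne h
        | inr h =>
          obtain ⟨a, ha⟩ := h
          rw [ha]
          rfl

end BasisAux
namespace BasisAux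

lemma head?_append_left {u t : List Ltr} (h : u ≠ []) : (u ++ t).head? = u.head? := by
  cases u with
  | nil => exact absurd rfl h
  | cons c s => simp

lemma getLast?_append_right {u t : List Ltr} (h : t ≠ []) : (u ++ t).getLast? = t.getLast? := by
  rw [List.getLast?_append]
  cases t.getLast?.eq_none_or_eq_some with
  | inl hn => rw [List.getLast?_eq_none_iff] at hn; exact absurd hn h
  | inr hs => obtain ⟨a, ha⟩ := hs; rw [ha]; rfl

lemma invRev_head? (u : List Ltr) : (FreeGroup.invRev u).head? = u.getLast?.map invL := by
  rw [invRev_eq, List.head?_reverse, List.getLast?_map]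

lemma invRev_getLast? (u : List Ltr) : (FreeGroup.invRev u).getLast? = u.head?.map invL := by
  rw [invRev_eq, List.getLast?_reverse, List.head?_map]

lemma invL_fst (l : Ltr) : (invL l).1 = l.1 := rfl

lemma Rswap {a b : Ltr} : R a (invL b) ↔ R b (invL a) := by
  rw [R_iff_ne_invL, R_iff_ne_invL]
  constructor
  · intro h hc; apply h; rw [hc]
  · intro h hc; apply h; rw [hc]

lemma invRev_ne_nil {u : List Ltr} (h : u ≠ []) : FreeGroup.invRev u ≠ [] := by
  intro hc
  apply h
  have := congrArg List.length hc
  rw [FreeGroup.invRev_length] at this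
  exact List.length_eq_zero_iff.1 this

/-- word for Y^e where Y = mk y -/
def yw (y : List Ltr) (e : ℤ) : List Ltr :=
  (List.replicate e.natAbs (if 0 ≤ e then y else FreeGroup.invRev y)).flatten

/-- word for x^e where x = mk (v ++ y ++ invRev v) -/
def uw (v y : List Ltr) (e : ℤ) : List Ltr := v ++ (yw y e ++ FreeGroup.invRev v)

lemma yw_length (y : List Ltr) (e : ℤ) : (yw y e).length = e.natAbs * y.length := by
  unfold yw
  by_cases h : 0 ≤ e
  · rw [if_pos h]
    simp [List.length_flatten, List.map_replicate, List.sum_replicate, smul_eq_mul]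
  · rw [if_neg h]
    simp [List.length_flatten, List.map_replicate, List.sum_replicate, smul_eq_mul,
      FreeGroup.invRev_length]

lemma yw_ne_nil {y : List Ltr} (hyne : y ≠ []) {e : ℤ} (he : e ≠ 0) : yw y e ≠ [] := by
  intro hc
  have := congrArg List.length hc
  rw [yw_length] at this
  simp at this
  rcases this with h | h
  · exact he (by omega)
  · exact hyne h

lemma mk_yw (y : List Ltr) (e : ℤ) : FreeGroup.mk (yw y e) = (FreeGroup.mk y) ^ e := by
  unfold yw
  by_cases h : 0 ≤ e
  · rw [if_pos h, ← FreeGroup.pow_mk, ← zpow_natCast]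
    congr 1
    omega
  · rw [if_neg h, ← FreeGroup.pow_mk, ← FreeGroup.inv_mk, inv_pow, ← zpow_natCast, ← zpow_neg]
    congr 1
    omega

lemma mk_uw (v y : List Ltr) (e : ℤ) :
    FreeGroup.mk (uw v y e) = (FreeGroup.mk (v ++ y ++ FreeGroup.invRev v)) ^ e := by
  unfold uw
  rw [← FreeGroup.mul_mk, ← FreeGroup.mul_mk, mk_yw, ← FreeGroup.inv_mk]
  rw [List.append_assoc, ← FreeGroup.mul_mk, ← FreeGroup.mul_mk, ← FreeGroup.inv_mk]
  rw [show FreeGroup.mk v * (FreeGroup.mk y * (FreeGroup.mk v)⁻¹)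
      = FreeGroup.mk v * FreeGroup.mk y * (FreeGroup.mk v)⁻¹ from by group]
  rw [conj_zpow]
  group

lemma uw_length (v y : List Ltr) {e : ℤ} (he : e ≠ 0) :
    (v ++ y ++ FreeGroup.invRev v).length ≤ (uw v y e).length := by
  unfold uw
  simp only [List.length_append, yw_length, FreeGroup.invRev_length]
  have : 1 ≤ e.natAbs := by omega
  nlinarith [List.Sublist.length_le (List.nil_sublist y)]

lemma uw_bundle (v y : List Ltr) (hyne : y ≠ [])
    (hvy : IsRed (v ++ y ++ FreeGroup.invRev v))
    (hcyc : ∀ a ∈ y.getLast?, ∀ b ∈ y.head?, R a b)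
    (hA1 : ∀ a ∈ (v ++ y ++ FreeGroup.invRev v).head?, a.1 = 0)
    (hA2 : ∀ a ∈ (v ++ y ++ FreeGroup.invRev v).getLast?, a.1 = 0)
    {e : ℤ} (he : e ≠ 0) :
    IsRed (uw v y e) ∧ uw v y e ≠ [] ∧
      (∀ a ∈ (uw v y e).head?, a.1 = 0) ∧ (∀ a ∈ (uw v y e).getLast?, a.1 = 0) := by
  have hvy' : IsRed (v ++ (y ++ FreeGroup.invRev v)) := by
    rw [← List.append_assoc]; exact hvy
  obtain ⟨hv, hyvi, j1⟩ := List.isChain_append.1 hvy'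
  obtain ⟨hy, hvi, j2⟩ := List.isChain_append.1 hyvi
  have hyhead : (y ++ FreeGroup.invRev v).head? = y.head? := head?_append_left hyne
  have jvy : ∀ a ∈ v.getLast?, ∀ b ∈ y.head?, R a b := by
    intro a ha b hb
    exact j1 a ha b (by rw [hyhead]; exact hb)
  -- junction facts for yw
  have hywred : IsRed (yw y e) ∧ (yw y e).head? = (if 0 ≤ e then y else FreeGroup.invRev y).head?
      ∧ (yw y e).getLast? = (if 0 ≤ e then y else FreeGroup.invRev y).getLast? := by
    unfold yw
    by_cases h : 0 ≤ e
    · rw [if_pos h]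
      exact isRed_join hy hyne hcyc e.natAbs (by omega)
    · rw [if_neg h]
      have hcyc' : ∀ a ∈ (FreeGroup.invRev y).getLast?, ∀ b ∈ (FreeGroup.invRev y).head?, R a b := by
        rw [invRev_head?, invRev_getLast?]
        intro a ha b hb
        simp only [Option.mem_def, Option.map_eq_some_iff] at ha hb
        obtain ⟨a', ha', rfl⟩ := ha
        obtain ⟨b', hb', rfl⟩ := hb
        exact R_invL_invL.2 (hcyc b' hb' a' ha')
      exact isRed_join (isRed_invRev hy) (invRev_ne_nil hyne) hcyc' e.natAbs (by omega)
  have jv_yw : ∀ a ∈ v.getLast?, ∀ b ∈ (yw y e).head?, R a b := by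
    intro a ha b hb
    rw [hywred.2.1] at hb
    by_cases h : 0 ≤ e
    · rw [if_pos h] at hb; exact jvy a ha b hb
    · rw [if_neg h, invRev_head?] at hb
      simp only [Option.mem_def, Option.map_eq_some_iff] at hb
      obtain ⟨c, hc, rfl⟩ := hb
      rw [Rswap]
      refine j2 c hc (invL a) ?_
      rw [invRev_head?]
      simp only [Option.mem_def, Option.map_eq_some_iff]
      exact ⟨a, ha, rfl⟩
  have jyw_vi : ∀ a ∈ (yw y e).getLast?, ∀ b ∈ (FreeGroup.invRev v).head?, R a b := by
    intro a ha b hb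
    rw [hywred.2.2] at ha
    by_cases h : 0 ≤ e
    · rw [if_pos h] at ha; exact j2 a ha b hb
    · rw [if_neg h, invRev_getLast?] at ha
      rw [invRev_head?] at hb
      simp only [Option.mem_def, Option.map_eq_some_iff] at ha hb
      obtain ⟨c, hc, rfl⟩ := ha
      obtain ⟨d', hd, rfl⟩ := hb
      exact R_invL_invL.2 (jvy d' hd c hc)
  have hywne := yw_ne_nil hyne he
  have hred : IsRed (uw v y e) := by
    unfold uw
    refine hv.append ((hywred.1).append hvi jyw_vi) ?_
    intro a ha b hb
    rw [head?_append_left hywne] at hb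
    exact jv_yw a ha b hb
  have hne : uw v y e ≠ [] := by
    unfold uw
    intro hc
    simp only [List.append_eq_nil_iff] at hc
    exact hywne hc.2.1
  refine ⟨hred, hne, ?_, ?_⟩
  · -- head has fst 0
    intro a ha
    unfold uw at ha
    by_cases hv0 : v = []
    · subst hv0
      simp only [List.nil_append] at ha
      rw [head?_append_left hywne, hywred.2.1] at ha
      by_cases h : 0 ≤ e
      · rw [if_pos h] at ha
        apply hA1
        simpa [FreeGroup.invRev_empty] using ha
      · rw [if_neg h, invRev_head?] at ha
        simp only [Option.mem_def, Option.map_eq_some_iff] at ha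
        obtain ⟨c, hc, rfl⟩ := ha
        rw [invL_fst]
        apply hA2
        simpa [FreeGroup.invRev_empty] using hc
    · rw [head?_append_left hv0] at ha
      apply hA1
      rw [head?_append_left (by simp [hv0] : v ++ y ≠ []), head?_append_left hv0]
      exact ha
  · -- last has fst 0
    intro a ha
    unfold uw at ha
    by_cases hv0 : v = []
    · subst hv0
      simp only [List.nil_append, FreeGroup.invRev_empty, List.append_nil] at ha
      rw [hywred.2.2] at ha
      by_cases h : 0 ≤ e
      · rw [if_pos h] at ha
        apply hA2
        simpa [FreeGroup.invRev_empty] using ha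
      · rw [if_neg h, invRev_getLast?] at ha
        simp only [Option.mem_def, Option.map_eq_some_iff] at ha
        obtain ⟨c, hc, rfl⟩ := ha
        rw [invL_fst]
        apply hA1
        simpa [FreeGroup.invRev_empty] using hc
    · have hvine : FreeGroup.invRev v ≠ [] := invRev_ne_nil hv0
      rw [getLast?_append_right (by simp [hvine] : yw y e ++ FreeGroup.invRev v ≠ []),
        getLast?_append_right hvine, invRev_getLast?] at ha
      simp only [Option.mem_def, Option.map_eq_some_iff] at ha
      obtain ⟨c, hc, rfl⟩ := ha
      rw [invL_fst]
      apply hA1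
      rw [head?_append_left (by simp [hv0] : v ++ y ≠ []), head?_append_left hv0]
      exact hc

end BasisAux
namespace BasisAux

def Wr (v y : List Ltr) (n0 : ℤ) : List (ℤ × ℤ) → List Ltr
  | [] => bw n0
  | (e, n) :: t => Wr v y n0 t ++ uw v y e ++ bw n

def val (x : F2) (n0 : ℤ) : List (ℤ × ℤ) → F2
  | [] => gb ^ n0
  | (e, n) :: t => val x n0 t * x ^ e * gb ^ n

def OK : List (ℤ × ℤ) → Prop
  | [] => True
  | en :: t => en.1 ≠ 0 ∧ ∀ q ∈ t, q.1 ≠ 0 ∧ q.2 ≠ 0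

lemma OK_of_strong {t : List (ℤ × ℤ)} (h : ∀ q ∈ t, q.1 ≠ 0 ∧ q.2 ≠ 0) : OK t := by
  cases t with
  | nil => trivial
  | cons en t' =>
    exact ⟨(h en (by simp)).1, fun q hq => h q (by simp [hq])⟩

lemma mk_Wr (v y : List Ltr) (n0 : ℤ) :
    ∀ t, FreeGroup.mk (Wr v y n0 t) = val (FreeGroup.mk (v ++ y ++ FreeGroup.invRev v)) n0 t := by
  intro t
  induction t with
  | nil => exact mk_bw n0
  | cons en t ih =>
    obtain ⟨e, n⟩ := en
    show FreeGroup.mk (Wr v y n0 t ++ uw v y e ++ bw n) = _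
    rw [← FreeGroup.mul_mk, ← FreeGroup.mul_mk, ih, mk_uw, mk_bw]
    rfl

lemma R_of_fst_ne {a b : Ltr} (h : a.1 ≠ b.1) : R a b := fun hc => h hc.1

lemma Wr_red_strong (v y : List Ltr) (hyne : y ≠ [])
    (hvy : IsRed (v ++ y ++ FreeGroup.invRev v))
    (hcyc : ∀ a ∈ y.getLast?, ∀ b ∈ y.head?, R a b)
    (hA1 : ∀ a ∈ (v ++ y ++ FreeGroup.invRev v).head?, a.1 = 0)
    (hA2 : ∀ a ∈ (v ++ y ++ FreeGroup.invRev v).getLast?, a.1 = 0)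
    (n0 : ℤ) :
    ∀ t, (∀ q ∈ t, q.1 ≠ 0 ∧ q.2 ≠ 0) →
      IsRed (Wr v y n0 t) ∧ (∀ a ∈ (Wr v y n0 t).getLast?, a.1 = 1) := by
  intro t
  induction t with
  | nil =>
    intro _
    refine ⟨isRed_bw n0, ?_⟩
    intro a ha
    exact bw_fst a (List.mem_of_mem_getLast? ha)
  | cons en t ih =>
    intro ht
    obtain ⟨e, n⟩ := en
    have he : e ≠ 0 := (ht (e, n) (by simp)).1
    have hn : n ≠ 0 := (ht (e, n) (by simp)).2
    obtain ⟨ihred, ihlast⟩ := ih (fun q hq => ht q (by simp [hq]))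
    obtain ⟨hured, hune, huh, hul⟩ := uw_bundle v y hyne hvy hcyc hA1 hA2 he
    have hred2 : IsRed (Wr v y n0 t ++ uw v y e) := by
      refine ihred.append hured ?_
      intro a ha b hb
      refine R_of_fst_ne ?_
      rw [ihlast a ha, huh b hb]
      decide
    have hbne : bw n ≠ [] := by
      intro hc
      have := congrArg List.length hc
      rw [bw_length] at this
      simp at this
      omega
    refine ⟨?_, ?_⟩
    · show IsRed (Wr v y n0 t ++ uw v y e ++ bw n)
      refine hred2.append (isRed_bw n) ?_
      intro a ha b hb
      refine R_of_fst_ne ?_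
      rw [getLast?_append_right hune] at ha
      rw [hul a ha, bw_fst b (List.mem_of_mem_head? hb)]
      decide
    · intro a ha
      show a.1 = 1
      rw [show Wr v y n0 ((e,n)::t) = Wr v y n0 t ++ uw v y e ++ bw n from rfl] at ha
      rw [getLast?_append_right hbne] at ha
      exact bw_fst a (List.mem_of_mem_getLast? ha)

lemma Wr_red_cons (v y : List Ltr) (hyne : y ≠ [])
    (hvy : IsRed (v ++ y ++ FreeGroup.invRev v))
    (hcyc : ∀ a ∈ y.getLast?, ∀ b ∈ y.head?, R a b)
    (hA1 : ∀ a ∈ (v ++ y ++ FreeGroup.invRev v).head?, a.1 = 0)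
    (hA2 : ∀ a ∈ (v ++ y ++ FreeGroup.invRev v).getLast?, a.1 = 0)
    (n0 : ℤ) {e : ℤ} (he : e ≠ 0) {n : ℤ} {t : List (ℤ × ℤ)}
    (ht : ∀ q ∈ t, q.1 ≠ 0 ∧ q.2 ≠ 0) :
    IsRed (Wr v y n0 ((e, n) :: t)) := by
  obtain ⟨ihred, ihlast⟩ := Wr_red_strong v y hyne hvy hcyc hA1 hA2 n0 t ht
  obtain ⟨hured, hune, huh, hul⟩ := uw_bundle v y hyne hvy hcyc hA1 hA2 he
  have hred2 : IsRed (Wr v y n0 t ++ uw v y e) := by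
    refine ihred.append hured ?_
    intro a ha b hb
    refine R_of_fst_ne ?_
    rw [ihlast a ha, huh b hb]
    decide
  show IsRed (Wr v y n0 t ++ uw v y e ++ bw n)
  refine hred2.append (isRed_bw n) ?_
  intro a ha b hb
  refine R_of_fst_ne ?_
  rw [getLast?_append_right hune] at ha
  rw [hul a ha, bw_fst b (List.mem_of_mem_head? hb)]
  decide

lemma Wr_cons_length (v y : List Ltr) {e : ℤ} (he : e ≠ 0) (n n0 : ℤ) (t : List (ℤ × ℤ)) :
    (v ++ y ++ FreeGroup.invRev v).length ≤ (Wr v y n0 ((e, n) :: t)).length := by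
  show _ ≤ (Wr v y n0 t ++ uw v y e ++ bw n).length
  have h1 := uw_length v y he
  simp only [List.length_append] at h1 ⊢
  omega

/-- The invariant: `g` has a normal form. -/
def Good (x g : F2) : Prop := ∃ (n0 : ℤ) (t : List (ℤ × ℤ)), OK t ∧ g = val x n0 t

lemma good_one (x : F2) : Good x 1 := ⟨0, [], trivial, by simp [val]⟩

lemma good_mul_gb (x g : F2) (ε : ℤ) (h : Good x g) : Good x (g * gb ^ ε) := by
  obtain ⟨n0, t, hOK, rfl⟩ := h
  cases t with
  | nil =>
    exact ⟨n0 + ε, [], trivial, by simp [val, zpow_add]⟩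
  | cons en t' =>
    obtain ⟨e, n⟩ := en
    refine ⟨n0, (e, n + ε) :: t', ?_, ?_⟩
    · exact ⟨hOK.1, hOK.2⟩
    · show val x n0 ((e,n)::t') * gb ^ ε = val x n0 t' * x ^ e * gb ^ (n + ε)
      show val x n0 t' * x ^ e * gb ^ n * gb ^ ε = _
      rw [mul_assoc, ← zpow_add]
    
lemma good_mul_x (x g : F2) {ε : ℤ} (hε : ε ≠ 0) (h : Good x g) : Good x (g * x ^ ε) := by
  obtain ⟨n0, t, hOK, rfl⟩ := h
  cases t with
  | nil =>
    refine ⟨n0, [(ε, 0)], ⟨hε, by simp⟩, ?_⟩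
    show val x n0 [] * x ^ ε = val x n0 [] * x ^ ε * gb ^ (0:ℤ)
    simp
  | cons en t' =>
    obtain ⟨e, n⟩ := en
    by_cases hn : n = 0
    · subst hn
      by_cases hee : e + ε = 0
      · refine ⟨n0, t', OK_of_strong hOK.2, ?_⟩
        show val x n0 ((e,(0:ℤ))::t') * x ^ ε = val x n0 t'
        show val x n0 t' * x ^ e * gb ^ (0:ℤ) * x ^ ε = val x n0 t'
        rw [zpow_zero, mul_one, mul_assoc, ← zpow_add]
        rw [hee, zpow_zero, mul_one]
      · refine ⟨n0, (e + ε, 0) :: t', ⟨hee, hOK.2⟩, ?_⟩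
        show val x n0 ((e,(0:ℤ))::t') * x ^ ε = val x n0 t' * x ^ (e + ε) * gb ^ (0:ℤ)
        show val x n0 t' * x ^ e * gb ^ (0:ℤ) * x ^ ε = _
        rw [zpow_zero, mul_one, mul_one, mul_assoc, ← zpow_add]
    · refine ⟨n0, (ε, 0) :: (e, n) :: t', ⟨hε, ?_⟩, ?_⟩
      · intro q hq
        rcases List.mem_cons.1 hq with hq1 | hq2
        · subst hq1; exact ⟨hOK.1, hn⟩
        · exact hOK.2 q hq2
      · show val x n0 ((e,n)::t') * x ^ ε = val x n0 ((e,n)::t') * x ^ ε * gb ^ (0:ℤ)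
        simp

lemma good_of_mem_closure (x g : F2) (hg : g ∈ Subgroup.closure {gb, x}) : Good x g := by
  refine Subgroup.closure_induction_right ?_ ?_ ?_ hg
  · exact good_one x
  · intro h _ z hz hgood
    rcases hz with hz | hz
    · subst hz; simpa using good_mul_gb x h 1 hgood
    · simp only [Set.mem_singleton_iff] at hz
      rw [hz]
      simpa using good_mul_x x h (by norm_num : (1:ℤ) ≠ 0) hgood
  · intro h _ z hz hgood
    rcases hz with hz | hz
    · subst hz
      have := good_mul_gb x h (-1) hgood
      simpa [zpow_neg_one] using this
    · simp only [Set.mem_singleton_iff] at hz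
      rw [hz]
      have := good_mul_x x h (by norm_num : (-1:ℤ) ≠ 0) hgood
      simpa [zpow_neg_one] using this

end BasisAux
namespace BasisAux

def dflt : Ltr := ((0 : Fin 2), true)

def Qp (w : List Ltr) (j : ℕ) : Prop :=
  ∀ i, i < j → w.getD i dflt = invL (w.getD (w.length - 1 - i) dflt)

instance (w : List Ltr) : DecidablePred (Qp w) := fun j => by
  unfold Qp; exact Nat.decidableBallLT j _

theorem core (x : F2) (hlen : 2 ≤ x.toWord.length)
    (hhead : ∀ a ∈ x.toWord.head?, a.1 = (0 : Fin 2))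
    (hlast : ∀ a ∈ x.toWord.getLast?, a.1 = (0 : Fin 2)) :
    ga ∉ Subgroup.closure {gb, x} := by
  intro hmem
  set w := x.toWord with hw
  set n := w.length with hn
  have hred : IsRed w := isRed_toWord x
  have hadj : ∀ i, i + 1 < n → R (w.getD i dflt) (w.getD (i+1) dflt) := by
    intro i hi
    have h1 : i < n := by omega
    have := List.isChain_iff_getElem.1 hred i (by omega)
    rwa [List.getD_eq_getElem w dflt h1, List.getD_eq_getElem w dflt hi]
  set p := Nat.findGreatest (Qp w) (n / 2) with hp
  have hQ : Qp w p :=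
    Nat.findGreatest_spec (Nat.zero_le _) (fun i hi => absurd hi (Nat.not_lt_zero i))
  have hple : p ≤ n / 2 := Nat.findGreatest_le _
  have h2p : 2 * p < n := by
    by_contra hcon
    push_neg at hcon
    have hnp : n = 2 * p := by omega
    have hp1 : 1 ≤ p := by omega
    have heq := hQ (p - 1) (by omega)
    have hidx : n - 1 - (p - 1) = p := by omega
    rw [hidx] at heq
    have hR := hadj (p - 1) (by omega)
    rw [show p - 1 + 1 = p from by omega] at hR
    rw [heq, R_iff_ne_invL, invL_invL] at hR
    exact hR rfl
  set v := w.take p with hv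
  set y := (w.drop p).take (n - 2 * p) with hy
  have hvlen : v.length = p := by
    rw [hv, List.length_take]
    omega
  have hylen : y.length = n - 2 * p := by
    rw [hy, List.length_take, List.length_drop]
    omega
  have hyne : y ≠ [] := by
    intro hc
    rw [hc] at hylen
    simp at hylen
    omega
  have hdrop : w.drop (n - p) = FreeGroup.invRev v := by
    apply List.ext_getElem
    · rw [List.length_drop, FreeGroup.invRev_length, hvlen]
      omega
    · intro i h1 h2
      have hip : i < p := by
        rw [List.length_drop] at h1
        omega
      simp only [hv, invRev_eq] at h2 ⊢
      simp only [List.getElem_drop, List.getElem_reverse, List.getElem_map, List.getElem_take,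
        List.length_reverse, List.length_map, List.length_take]
      simp only [show p ⊓ w.length = p from min_eq_left (by omega)]
      rw [← List.getD_eq_getElem w dflt (show n - p + i < n from by omega),
          ← List.getD_eq_getElem w dflt (show p - 1 - i < n from by omega)]
      rw [hQ (p - 1 - i) (by omega), invL_invL]
      congr 1
      omega
  have hdp : w.drop p = y ++ w.drop (n - p) := by
    rw [show n - p = p + (n - 2 * p) from by omega, ← List.drop_drop]
    rw [hy]
    rw [List.take_append_drop]
  have hw_eq : w = v ++ y ++ FreeGroup.invRev v := by
    rw [← hdrop, List.append_assoc, ← hdp, hv, List.take_append_drop]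
  -- cyclic reducedness
  have hcycD : R (w.getD (n - p - 1) dflt) (w.getD p dflt) := by
    by_cases hc : p + 1 ≤ n / 2
    · have hng : ¬ Qp w (p + 1) :=
        Nat.findGreatest_is_greatest (by omega) hc
      by_contra hcon
      rw [R_iff_ne_invL] at hcon
      push_neg at hcon
      apply hng
      intro i hi
      by_cases hilt : i < p
      · exact hQ i hilt
      · have hieq : i = p := by omega
        rw [hieq, show n - 1 - p = n - p - 1 from by omega]
        exact hcon
    · have : n = 2 * p + 1 := by omega
      rw [show n - p - 1 = p from by omega]
      exact R_self _
  have hyget : ∀ (i : ℕ) (hilt : i < y.length), y[i] = w.getD (p + i) dflt := by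
    intro i hilt
    have h1 : y[i] = w[p + i]'(by omega) := by
      simp only [hy, List.getElem_take, List.getElem_drop]
    rw [h1]
    exact (List.getD_eq_getElem w dflt (by omega)).symm
  have hcycO : ∀ a ∈ y.getLast?, ∀ b ∈ y.head?, R a b := by
    intro a ha b hb
    have hyl : 0 < y.length := by omega
    rw [List.getLast?_eq_getElem?, List.getElem?_eq_getElem (by omega)] at ha
    rw [List.head?_eq_getElem?, List.getElem?_eq_getElem (by omega)] at hb
    simp only [Option.mem_def, Option.some_inj] at ha hb
    subst ha; subst hb
    rw [hyget (y.length - 1) (by omega), hyget 0 (by omega)]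
    rw [show p + (y.length - 1) = n - p - 1 from by omega, Nat.add_zero]
    exact hcycD
  have hvyred : IsRed (v ++ y ++ FreeGroup.invRev v) := by rw [← hw_eq]; exact hred
  have hA1 : ∀ a ∈ (v ++ y ++ FreeGroup.invRev v).head?, a.1 = (0 : Fin 2) := by
    rw [← hw_eq]; exact hhead
  have hA2 : ∀ a ∈ (v ++ y ++ FreeGroup.invRev v).getLast?, a.1 = (0 : Fin 2) := by
    rw [← hw_eq]; exact hlast
  have hxval : x = FreeGroup.mk (v ++ y ++ FreeGroup.invRev v) := by
    rw [← hw_eq, hw, FreeGroup.mk_toWord]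
  -- the invariant
  obtain ⟨n0, t, hOK, hval⟩ := good_of_mem_closure x ga hmem
  have hvalW : val x n0 t = FreeGroup.mk (Wr v y n0 t) := by
    rw [mk_Wr v y n0 t, ← hxval]
  have hgaw : ga.toWord = [((0 : Fin 2), true)] := FreeGroup.toWord_of 0
  cases t with
  | nil =>
    have : ga = FreeGroup.mk (bw n0) := by
      rw [hval, hvalW]; rfl
    have htw : [((0 : Fin 2), true)] = bw n0 := by
      rw [← hgaw, this, (isRed_bw n0).toWord_mk]
    have hmem0 : ((0 : Fin 2), true) ∈ bw n0 := by
      rw [← htw]; simp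
    have := bw_fst _ hmem0
    simp at this
  | cons en t' =>
    obtain ⟨e, nn⟩ := en
    obtain ⟨he0, hstrong⟩ := hOK
    have he : e ≠ 0 := he0
    have hredW : IsRed (Wr v y n0 ((e, nn) :: t')) :=
      Wr_red_cons v y hyne hvyred hcycO hA1 hA2 n0 he hstrong
    have htw : [((0 : Fin 2), true)] = Wr v y n0 ((e, nn) :: t') := by
      rw [← hgaw, hval, hvalW, hredW.toWord_mk]
    have hlenW := Wr_cons_length v y he nn n0 t'
    have hlenvy : (v ++ y ++ FreeGroup.invRev v).length = n := by
      rw [← hw_eq]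
    have := congrArg List.length htw
    simp only [List.length_cons, List.length_nil] at this
    omega

end BasisAux
namespace BasisAux

lemma ga_notin_closure_gb : ga ∉ Subgroup.closure ({gb} : Set F2) := by
  intro h
  obtain ⟨nn, hnn⟩ := Subgroup.mem_closure_singleton.1 h
  have h1 : [((0 : Fin 2), true)] = bw nn := by
    rw [← FreeGroup.toWord_of (0 : Fin 2)]
    show ga.toWord = bw nn
    rw [← hnn, ← mk_bw, (isRed_bw nn).toWord_mk]
  have hmem0 : ((0 : Fin 2), true) ∈ bw nn := by rw [← h1]; simp
  have := bw_fst _ hmem0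
  simp at this

lemma base_case {x : F2} (hnil : x.toWord = []) (hmem : ga ∈ Subgroup.closure ({gb, x} : Set F2)) :
    False := by
  have hx1 : x = 1 := by
    rw [← FreeGroup.mk_toWord (x := x), hnil]
    rfl
  rw [hx1] at hmem
  apply ga_notin_closure_gb
  have h1 : Subgroup.closure ({gb, (1:F2)} : Set F2) ≤ Subgroup.closure {gb} := by
    rw [Subgroup.closure_le]
    rintro z (rfl | hz)
    · exact Subgroup.subset_closure rfl
    · simp only [Set.mem_singleton_iff] at hz
      subst hz
      exact one_mem _
  exact h1 hmem

lemma closure_pair (ε : ℤ) (x' : F2) :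
    Subgroup.closure ({gb, gb ^ ε * x'} : Set F2) = Subgroup.closure {gb, x'} := by
  have hgb : ∀ (s : F2), gb ∈ ({gb, s} : Set F2) := fun s => by simp
  have hsnd : ∀ (s : F2), s ∈ ({gb, s} : Set F2) := fun s => by simp
  apply le_antisymm
  · rw [Subgroup.closure_le]
    rintro z (rfl | hz)
    · exact Subgroup.subset_closure (hgb _)
    · simp only [Set.mem_singleton_iff] at hz
      subst hz
      exact mul_mem (zpow_mem (Subgroup.subset_closure (hgb _)) ε)
        (Subgroup.subset_closure (hsnd _))
  · rw [Subgroup.closure_le]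
    rintro z (rfl | hz)
    · exact Subgroup.subset_closure (hgb _)
    · simp only [Set.mem_singleton_iff] at hz
      subst hz
      have hin : gb ^ (-ε) * (gb ^ ε * z) ∈ Subgroup.closure ({gb, gb ^ ε * z} : Set F2) :=
        mul_mem (zpow_mem (Subgroup.subset_closure (hgb _)) (-ε))
          (Subgroup.subset_closure (hsnd _))
      have heq : gb ^ (-ε) * (gb ^ ε * z) = z := by group
      rwa [heq] at hin

lemma closure_pair' (ε : ℤ) (x' : F2) :
    Subgroup.closure ({gb, x' * gb ^ ε} : Set F2) = Subgroup.closure {gb, x'} := by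
  have hgb : ∀ (s : F2), gb ∈ ({gb, s} : Set F2) := fun s => by simp
  have hsnd : ∀ (s : F2), s ∈ ({gb, s} : Set F2) := fun s => by simp
  apply le_antisymm
  · rw [Subgroup.closure_le]
    rintro z (rfl | hz)
    · exact Subgroup.subset_closure (hgb _)
    · simp only [Set.mem_singleton_iff] at hz
      subst hz
      exact mul_mem (Subgroup.subset_closure (hsnd _))
        (zpow_mem (Subgroup.subset_closure (hgb _)) ε)
  · rw [Subgroup.closure_le]
    rintro z (rfl | hz)
    · exact Subgroup.subset_closure (hgb _)
    · simp only [Set.mem_singleton_iff] at hz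
      subst hz
      have hin : (z * gb ^ ε) * gb ^ (-ε) ∈ Subgroup.closure ({gb, z * gb ^ ε} : Set F2) :=
        mul_mem (Subgroup.subset_closure (hsnd _))
          (zpow_mem (Subgroup.subset_closure (hgb _)) (-ε))
      have heq : (z * gb ^ ε) * gb ^ (-ε) = z := by group
      rwa [heq] at hin

lemma mk_single_b (l : Ltr) (hb : l.1 = (1 : Fin 2)) :
    FreeGroup.mk [l] = gb ^ (if l.2 then (1:ℤ) else -1) := by
  obtain ⟨i, s⟩ := l
  simp only at hb
  subst hb
  cases s
  · rw [if_neg (by simp), zpow_neg_one, gb_inv_eq_mk]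
  · rw [if_pos rfl, zpow_one, gb_eq_mk]

lemma mk_single_a (l : Ltr) (ha : l.1 = (0 : Fin 2)) :
    FreeGroup.mk [l] = ga ^ (if l.2 then (1:ℤ) else -1) := by
  obtain ⟨i, s⟩ := l
  simp only at ha
  subst ha
  cases s
  · rw [if_neg (by simp), zpow_neg_one, ga_inv_eq_mk]
  · rw [if_pos rfl, zpow_one, ga_eq_mk]

lemma main_aux : ∀ (N : ℕ) (x : F2), x.toWord.length ≤ N →
    ga ∈ Subgroup.closure ({gb, x} : Set F2) →
    ∃ m k δ : ℤ, (δ = 1 ∨ δ = -1) ∧ x = gb ^ m * ga ^ δ * gb ^ k := by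
  intro N
  induction N with
  | zero =>
    intro x hlen hmem
    exact absurd hmem (by
      intro hmem'
      exact base_case (List.length_eq_zero_iff.1 (by omega)) hmem')
  | succ N ih =>
    intro x hlen hmem
    cases hwx : x.toWord with
    | nil => exact absurd (base_case hwx hmem) id
    | cons l rest =>
      have hred : IsRed (l :: rest) := by rw [← hwx]; exact isRed_toWord x
      have hxmk : x = FreeGroup.mk (l :: rest) := by rw [← hwx, FreeGroup.mk_toWord]
      have hlen' : rest.length + 1 ≤ N + 1 := by
        have := congrArg List.length hwx
        simp only [List.length_cons] at this
        omega
      by_cases hb : l.1 = (1 : Fin 2)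
      · -- strip leading b-letter
        set ε : ℤ := if l.2 then (1:ℤ) else -1 with hε
        set x' := FreeGroup.mk rest with hx'
        have hrt : IsRed rest := hred.tail
        have hx'w : x'.toWord = rest := hrt.toWord_mk
        have hsplit : x = gb ^ ε * x' := by
          rw [hxmk, hx', show (l :: rest) = [l] ++ rest from rfl, ← FreeGroup.mul_mk,
            mk_single_b l hb]
        have hmem' : ga ∈ Subgroup.closure ({gb, x'} : Set F2) := by
          have hcl := closure_pair ε x'
          rw [← hsplit] at hcl
          rwa [hcl] at hmem
        obtain ⟨m, k, δ, hδ, hval⟩ := ih x' (by rw [hx'w]; omega) hmem'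
        refine ⟨ε + m, k, δ, hδ, ?_⟩
        rw [hsplit, hval, ← mul_assoc, ← mul_assoc, ← zpow_add]
      · have hafst : l.1 = (0 : Fin 2) := by omega
        set ll := (l :: rest).getLast (by simp) with hll
        by_cases hbl : ll.1 = (1 : Fin 2)
        · -- strip trailing b-letter
          set ε : ℤ := if ll.2 then (1:ℤ) else -1 with hε
          set x' := FreeGroup.mk (l :: rest).dropLast with hx'
          have hx'red : IsRed (l :: rest).dropLast :=
            List.IsChain.prefix hred (List.dropLast_prefix _)
          have hx'w : x'.toWord = (l :: rest).dropLast := hx'red.toWord_mk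
          have hsplit : x = x' * gb ^ ε := by
            rw [hxmk, hx', ← mk_single_b ll hbl, FreeGroup.mul_mk,
              List.dropLast_append_getLast (by simp : (l :: rest) ≠ [])]
          have hmem' : ga ∈ Subgroup.closure ({gb, x'} : Set F2) := by
            have hcl := closure_pair' ε x'
            rw [← hsplit] at hcl
            rwa [hcl] at hmem
          obtain ⟨m, k, δ, hδ, hval⟩ := ih x' (by
            rw [hx'w]
            have : (l :: rest).dropLast.length = rest.length := by simp
            omega) hmem'
          refine ⟨m, k + ε, δ, hδ, ?_⟩
          rw [hsplit, hval, mul_assoc, mul_assoc, ← zpow_add]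
          rw [mul_assoc]
        · have hlfst : ll.1 = (0 : Fin 2) := by omega
          cases hrest : rest with
          | nil =>
            -- x is a single a-letter
            refine ⟨0, 0, if l.2 then (1:ℤ) else -1, by by_cases h : l.2 <;> simp [h], ?_⟩
            rw [hxmk, hrest, mk_single_a l hafst]
            simp
          | cons l2 rest2 =>
            exfalso
            refine core x ?_ ?_ ?_ hmem
            · rw [hwx, hrest]
              simp
            · rw [hwx]
              intro a ha
              simp only [List.head?_cons, Option.mem_def, Option.some_inj] at ha
              exact ha ▸ hafst
            · rw [hwx]
              intro a ha
              rw [List.getLast?_eq_getLast (by simp)] at ha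
              simp only [Option.mem_def, Option.some_inj] at ha
              have hlla : ll = a := by rw [hll]; exact ha
              exact hlla ▸ hlfst

end BasisAux

/-- If `{b, x}` is a basis of `F2 = ⟨a, b⟩`, then (up to replacing `x` by `x⁻¹`)
`x = b^m a^δ b^k` for some `m, k ∈ ℤ` and `δ ∈ {1, -1}`. -/
theorem basis_with_b_characterization (x : F2) (hx : IsBasis gb x) :
    ∃ (m k δ : ℤ), (δ = 1 ∨ δ = -1) ∧
      (x = gb ^ m * ga ^ δ * gb ^ k ∨ x⁻¹ = gb ^ m * ga ^ δ * gb ^ k) := by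
  obtain ⟨g, hg⟩ := hx.2 ga
  have hmem : ga ∈ Subgroup.closure ({gb, x} : Set F2) := by
    have hrange : ga ∈ (FreeGroup.lift ![gb, x]).range := ⟨g, hg⟩
    rw [FreeGroup.range_lift_eq_closure] at hrange
    have hs : Set.range ![gb, x] = {gb, x} := by
      ext z
      simp only [Set.mem_range, Fin.exists_fin_two, Matrix.cons_val_zero, Matrix.cons_val_one,
        Matrix.head_cons, Set.mem_insert_iff, Set.mem_singleton_iff]
      tauto
    rwa [hs] at hrange
  obtain ⟨m, k, δ, hδ, hv⟩ := BasisAux.main_aux x.toWord.length x le_rfl hmem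
  exact ⟨m, k, δ, hδ, Or.inl hv⟩
end

section
/- Let F_2 = ⟨a, b⟩ and let {x, y} be a basis of F_2. Then the cyclic subgroups ⟨z⟩ with the property that both {x, z} and {y, z} are bases of F_2 are exactly the four subgroups ⟨xy⟩, ⟨xy^{-1}⟩, ⟨x^{-1}y⟩, ⟨x^{-1}y^{-1}⟩. -/
open Subgroup

namespace StickAux
open FreeGroup List

abbrev L2 := List (Fin 2 × Bool)

def A : F2 := FreeGroup.of 0
def B : F2 := FreeGroup.of 1

def R (p q : Fin 2 × Bool) : Prop := ¬(p.1 = q.1 ∧ p.2 = !q.2)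

def Rd (L : L2) : Prop := List.Chain' R L

lemma R_of_ne (p q : Fin 2 × Bool) (h : p.1 ≠ q.1) : R p q := fun hc => h hc.1

lemma rd_nil : Rd [] := List.isChain_nil

lemma reduce_eq_self {L : L2} (h : Rd L) : FreeGroup.reduce L = L := by
  induction L with
  | nil => rfl
  | cons x L ih =>
    rw [reduce.cons, ih h.tail]
    cases L with
    | nil => rfl
    | cons y t =>
      have hR : R x y := (List.isChain_cons_cons.mp h).1
      simp only [R] at hR
      simp [if_neg hR]

lemma toWord_mk_rd {L : L2} (h : Rd L) : (FreeGroup.mk L).toWord = L := by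
  rw [toWord_mk, reduce_eq_self h]

lemma not_rd_split {L : L2} (h : ¬ Rd L) :
    ∃ (L₂ : L2) (x : Fin 2) (s : Bool) (L₃ : L2), L = L₂ ++ (x, s) :: (x, !s) :: L₃ := by
  induction L with
  | nil => exact absurd List.isChain_nil h
  | cons p L ih =>
    cases L with
    | nil => exact absurd (List.isChain_singleton p) h
    | cons q t =>
      simp only [Rd, List.Chain', List.isChain_cons_cons] at h
      by_cases hR : R p q
      · have : ¬ Rd (q :: t) := fun hc => h ⟨hR, hc⟩
        obtain ⟨L₂, x, s, L₃, hs⟩ := ih this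
        exact ⟨p :: L₂, x, s, L₃, by rw [hs]; rfl⟩
      · simp only [R, not_not] at hR
        refine ⟨[], p.1, p.2, t, ?_⟩
        obtain ⟨h1, h2⟩ := hR
        have : q = (p.1, !p.2) := by
          have h3 : q.2 = !p.2 := by cases hq : q.2 <;> simp_all
          exact Prod.ext h1.symm h3
        simp [this]

lemma rd_reduce (L : L2) : Rd (FreeGroup.reduce L) := by
  by_contra h
  obtain ⟨L₂, x, s, L₃, hs⟩ := not_rd_split h
  exact FreeGroup.reduce.not hs

lemma rd_toWord (x : F2) : Rd x.toWord := by
  rw [← reduce_toWord]; exact rd_reduce _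

def linv (p : Fin 2 × Bool) : Fin 2 × Bool := (p.1, !p.2)

lemma invRev_eq (L : L2) : invRev L = (L.map linv).reverse := rfl

lemma invRev_cons (p : Fin 2 × Bool) (L : L2) :
    invRev (p :: L) = invRev L ++ [linv p] := by
  simp [invRev_eq]

lemma rd_invRev {L : L2} (h : Rd L) : Rd (invRev L) := by
  rw [invRev_eq, Rd, List.Chain', List.isChain_reverse, List.isChain_map]
  refine List.IsChain.imp ?_ h
  intro p q hpq
  rintro ⟨h1, h2⟩
  simp only [linv] at h1 h2
  exact hpq ⟨h1.symm, by cases hp : p.2 <;> cases hq : q.2 <;> simp_all⟩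

lemma head?_invRev (L : L2) : (invRev L).head? = L.getLast?.map linv := by
  rw [invRev_eq, List.head?_reverse, List.getLast?_map]

lemma getLast?_invRev (L : L2) : (invRev L).getLast? = L.head?.map linv := by
  rw [invRev_eq, List.getLast?_reverse, List.head?_map]

lemma rd_replicate (n : ℕ) (p : Fin 2 × Bool) : Rd (List.replicate n p) := by
  induction n with
  | zero => exact rd_nil
  | succ n ih =>
    cases n with
    | zero => exact List.isChain_singleton p
    | succ m =>
      rw [List.replicate_succ, Rd, List.Chain', List.isChain_cons]
      refine ⟨?_, ih⟩
      intro y hy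
      have : y = p := by
        have := List.mem_of_mem_head? hy
        exact List.eq_of_mem_replicate this
      subst this
      intro hc
      simp at hc

/-- the word for `of i ^ k` -/
def wP (i : Fin 2) (k : ℤ) : L2 := List.replicate k.natAbs (i, decide (0 ≤ k))

lemma rd_wP (i : Fin 2) (k : ℤ) : Rd (wP i k) := rd_replicate _ _

lemma length_wP (i : Fin 2) (k : ℤ) : (wP i k).length = k.natAbs := by
  simp [wP]

lemma mem_wP {i : Fin 2} {k : ℤ} {x : Fin 2 × Bool} (h : x ∈ wP i k) : x.1 = i := by
  have := List.eq_of_mem_replicate h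
  rw [this]

lemma invRev_replicate (n : ℕ) (p : Fin 2 × Bool) :
    invRev (List.replicate n p) = List.replicate n (linv p) := by
  simp [invRev_eq, List.map_replicate]

lemma mk_replicate_true (i : Fin 2) (n : ℕ) :
    FreeGroup.mk (List.replicate n (i, true)) = (FreeGroup.of i) ^ n := by
  rw [← FreeGroup.toWord_of_pow, mk_toWord]

lemma mk_wP (i : Fin 2) (k : ℤ) : FreeGroup.mk (wP i k) = (FreeGroup.of i) ^ k := by
  rcases k with n | n
  · have hd : decide (0 ≤ (Int.ofNat n)) = true := by simp
    simp only [wP, Int.natAbs_natCast, hd]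
    rw [mk_replicate_true]
    simp [Int.ofNat_eq_coe, zpow_natCast]
  · have hd : decide (0 ≤ (Int.negSucc n)) = false := decide_eq_false (by
      simp)
    simp only [wP, Int.natAbs_negSucc, hd]
    have h1 : (List.replicate (n+1) ((i, false) : Fin 2 × Bool)) =
        invRev (List.replicate (n+1) (i, true)) := by
      rw [invRev_replicate]; rfl
    rw [h1, ← inv_mk, mk_replicate_true, zpow_negSucc]

section Wpow

variable (C : L2)

def wfl (n : ℕ) : L2 := (List.replicate n C).flatten

lemma wfl_succ (n : ℕ) : wfl C (n+1) = C ++ wfl C n := by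
  simp [wfl, List.replicate_succ]

lemma wfl_succ' (n : ℕ) : wfl C (n+1) = wfl C n ++ C := by
  simp [wfl, List.replicate_succ']

lemma mk_wfl (n : ℕ) : FreeGroup.mk (wfl C n) = (FreeGroup.mk C) ^ n :=
  (FreeGroup.pow_mk n).symm

lemma length_wfl (n : ℕ) : (wfl C n).length = n * C.length := by
  induction n with
  | zero => simp [wfl]
  | succ m ih => rw [wfl_succ, List.length_append, ih]; ring

lemma head?_wfl (hC0 : C ≠ []) (n : ℕ) (hn : n ≠ 0) : (wfl C n).head? = C.head? := by
  cases n with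
  | zero => exact absurd rfl hn
  | succ m =>
    rw [wfl_succ, List.head?_append]
    obtain ⟨c, t, rfl⟩ := List.exists_cons_of_ne_nil hC0
    rfl

lemma getLast?_wfl (hC0 : C ≠ []) (n : ℕ) (hn : n ≠ 0) : (wfl C n).getLast? = C.getLast? := by
  cases n with
  | zero => exact absurd rfl hn
  | succ m =>
    rw [wfl_succ', List.getLast?_append]
    have : C.getLast? ≠ none := by
      simpa [List.getLast?_eq_none_iff] using hC0
    obtain ⟨c, hc⟩ := Option.ne_none_iff_exists'.mp this
    rw [hc]; rfl

lemma rd_C (hC : Rd (C ++ C)) : Rd C := (List.isChain_append.mp hC).1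

lemma rd_wfl (hC0 : C ≠ []) (hC : Rd (C ++ C)) (n : ℕ) : Rd (wfl C n) := by
  induction n with
  | zero => exact rd_nil
  | succ m ih =>
    rw [wfl_succ]
    refine List.isChain_append.mpr ⟨rd_C C hC, ih, ?_⟩
    intro x hx y hy
    cases m with
    | zero => simp [wfl] at hy
    | succ k =>
      rw [head?_wfl C hC0 _ (Nat.succ_ne_zero k)] at hy
      exact (List.isChain_append.mp hC).2.2 x hx y hy

def wpow (e : ℤ) : L2 := if 0 ≤ e then wfl C e.toNat else invRev (wfl C (-e).toNat)

lemma mk_wpow (e : ℤ) : FreeGroup.mk (wpow C e) = (FreeGroup.mk C) ^ e := by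
  rcases le_or_gt 0 e with he | he
  · rw [wpow, if_pos he, mk_wfl, ← zpow_natCast, Int.toNat_of_nonneg he]
  · rw [wpow, if_neg (not_le.mpr he), ← inv_mk, mk_wfl, ← zpow_natCast,
      Int.toNat_of_nonneg (by omega : (0:ℤ) ≤ -e), ← zpow_neg, neg_neg]

lemma length_wpow (e : ℤ) : (wpow C e).length = e.natAbs * C.length := by
  rcases le_or_gt 0 e with he | he
  · rw [wpow, if_pos he, length_wfl]
    congr 1; omega
  · rw [wpow, if_neg (not_le.mpr he), invRev_length, length_wfl]
    congr 1; omega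

lemma rd_wpow (hC0 : C ≠ []) (hC : Rd (C ++ C)) (e : ℤ) : Rd (wpow C e) := by
  rcases le_or_gt 0 e with he | he
  · rw [wpow, if_pos he]; exact rd_wfl C hC0 hC _
  · rw [wpow, if_neg (not_le.mpr he)]; exact rd_invRev (rd_wfl C hC0 hC _)

lemma head?_wpow_pos (hC0 : C ≠ []) {e : ℤ} (he : 0 < e) : (wpow C e).head? = C.head? := by
  rw [wpow, if_pos he.le]; exact head?_wfl C hC0 _ (by omega)

lemma head?_wpow_neg (hC0 : C ≠ []) {e : ℤ} (he : e < 0) :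
    (wpow C e).head? = C.getLast?.map linv := by
  rw [wpow, if_neg (not_le.mpr he), head?_invRev, getLast?_wfl C hC0 _ (by omega)]

lemma getLast?_wpow_pos (hC0 : C ≠ []) {e : ℤ} (he : 0 < e) : (wpow C e).getLast? = C.getLast? := by
  rw [wpow, if_pos he.le]; exact getLast?_wfl C hC0 _ (by omega)

lemma getLast?_wpow_neg (hC0 : C ≠ []) {e : ℤ} (he : e < 0) :
    (wpow C e).getLast? = C.head?.map linv := by
  rw [wpow, if_neg (not_le.mpr he), getLast?_invRev, head?_wfl C hC0 _ (by omega)]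

end Wpow

lemma mk_single (i : Fin 2) (s : Bool) :
    FreeGroup.mk [(i, s)] = (FreeGroup.of i) ^ (if s then (1:ℤ) else -1) := by
  cases s
  · simp only [if_neg Bool.false_ne_true]
    have : ([((i : Fin 2), false)] : L2) = invRev [(i, true)] := rfl
    rw [this, ← inv_mk, zpow_neg, zpow_one]
    rfl
  · simp only [if_pos rfl, zpow_one]
    rfl

/-- head of a word: it's an `(index, sign)` pair -/
def HeadIs (L : L2) (i : Fin 2) : Prop := ∃ s t, L = ((i, s) : Fin 2 × Bool) :: t

lemma stripL (z : F2) :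
    ∃ (m : ℤ) (z' : F2), z = A ^ m * z' ∧ (z'.toWord = [] ∨ HeadIs z'.toWord 1) := by
  generalize hn : z.toWord.length = n
  induction n using Nat.strong_induction_on generalizing z with
  | _ n ih =>
  cases hW : z.toWord with
  | nil => exact ⟨0, z, by simp, Or.inl hW⟩
  | cons p T =>
    rcases (by omega : p.1 = 1 ∨ p.1 = 0) with hp | hp
    · refine ⟨0, z, by simp, Or.inr ⟨p.2, T, ?_⟩⟩
      rw [hW]
      congr 1
      exact Prod.ext hp rfl
    · have hrd : Rd (p :: T) := by rw [← hW]; exact rd_toWord z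
      set z' := FreeGroup.mk T with hz'
      have hz'W : z'.toWord = T := toWord_mk_rd hrd.tail
      have hzeq : z = A ^ (if p.2 then (1:ℤ) else -1) * z' := by
        conv_lhs => rw [← mk_toWord (x := z), hW]
        have : (p :: T : L2) = [p] ++ T := rfl
        rw [this, ← mul_mk, hz']
        congr 1
        have hp' : p = ((0 : Fin 2), p.2) := Prod.ext hp rfl
        rw [hp', mk_single]
        rfl
      obtain ⟨m', z'', hz'', hh⟩ := ih T.length (by rw [← hn, hW]; simp) z' (by rw [hz'W])
      refine ⟨(if p.2 then (1:ℤ) else -1) + m', z'', ?_, hh⟩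
      rw [hzeq, hz'', ← mul_assoc, ← zpow_add]

lemma stripR (z : F2) (hz : z.toWord = [] ∨ HeadIs z.toWord 1) :
    ∃ (n : ℤ) (u : F2), z = u * A ^ n ∧
      (u.toWord = [] ∨ (HeadIs u.toWord 1 ∧ ∃ s, u.toWord.getLast? = some ((1 : Fin 2), s))) := by
  generalize hn : z.toWord.length = n
  induction n using Nat.strong_induction_on generalizing z with
  | _ n ih =>
  rcases hz with hz | hz
  · exact ⟨0, z, by simp, Or.inl hz⟩
  obtain ⟨s, t, hW⟩ := hz
  have hne : z.toWord ≠ [] := by rw [hW]; simp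
  have hrd : Rd z.toWord := rd_toWord z
  set q := z.toWord.getLast hne with hq
  rcases (by omega : q.1 = 1 ∨ q.1 = 0) with hq1 | hq0
  · refine ⟨0, z, by simp, Or.inr ⟨⟨s, t, hW⟩, q.2, ?_⟩⟩
    rw [List.getLast?_eq_getLast hne, ← hq]
    congr 1
    exact Prod.ext hq1 rfl
  · -- last letter has index 0: strip it
    have hsplit : z.toWord = z.toWord.dropLast ++ [q] := (List.dropLast_append_getLast hne).symm
    have hTne : z.toWord.dropLast ≠ [] := by
      intro hc
      rw [hc, List.nil_append] at hsplit
      rw [hsplit] at hW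
      have : q = ((1:Fin 2), s) := by
        have := hW
        simp at this
        exact Prod.ext (by simp [this.1]) (by simp [this.1])
      rw [this] at hq0
      simp at hq0
    set u₁ := FreeGroup.mk z.toWord.dropLast with hu₁
    have hrdT : Rd z.toWord.dropLast := hrd.prefix (List.dropLast_prefix _)
    have hu₁W : u₁.toWord = z.toWord.dropLast := toWord_mk_rd hrdT
    have hzeq0 : z = u₁ * FreeGroup.mk [q] := by
      rw [hu₁, mul_mk, ← hsplit, mk_toWord]
    have hzeq : z = u₁ * A ^ (if q.2 then (1:ℤ) else -1) := by
      rw [hzeq0]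
      congr 1
      have hq' : q = ((0 : Fin 2), q.2) := Prod.ext hq0 rfl
      rw [hq', mk_single]
      rfl
    have ht : t ≠ [] := by
      intro hc
      rw [hW, hc] at hTne
      simp at hTne
    have hhead : u₁.toWord = [] ∨ HeadIs u₁.toWord 1 := by
      right
      rw [hu₁W, hW, List.dropLast_cons_of_ne_nil ht]
      exact ⟨s, _, rfl⟩
    have hlen : u₁.toWord.length < n := by
      rw [hu₁W, ← hn, hW]
      simp [List.length_dropLast]
    obtain ⟨n', u, hu, hh⟩ := ih u₁.toWord.length hlen u₁ hhead rfl
    refine ⟨n' + (if q.2 then (1:ℤ) else -1), u, ?_, hh⟩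
    rw [hzeq, hu, mul_assoc, ← zpow_add]

lemma strip (z : F2) :
    ∃ (m n : ℤ) (u : F2), z = A ^ m * u * A ^ n ∧
      (u.toWord = [] ∨ (HeadIs u.toWord 1 ∧ ∃ s, u.toWord.getLast? = some ((1 : Fin 2), s))) := by
  obtain ⟨m, z₁, hz₁, hh⟩ := stripL z
  obtain ⟨n, u, hu, hh'⟩ := stripR z₁ hh
  exact ⟨m, n, u, by rw [hz₁, hu, mul_assoc], hh'⟩

lemma R_inv_symm {p q : Fin 2 × Bool} (h : R p q) : R (linv q) (linv p) := by
  rintro ⟨h1, h2⟩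
  apply h
  simp only [linv] at h1 h2
  refine ⟨h1.symm, ?_⟩
  simp only [Bool.not_not] at h2
  exact h2.symm

lemma R_linv_comm {p q : Fin 2 × Bool} (h : R p (linv q)) : R q (linv p) := by
  rintro ⟨h1, h2⟩
  apply h
  simp only [linv] at h1 h2 ⊢
  refine ⟨h1.symm, ?_⟩
  simp only [Bool.not_not] at h2 ⊢
  exact h2.symm

lemma mem_or_left {α : Type*} {o₁ o₂ : Option α} {x : α} (h : x ∈ o₁) : x ∈ o₁.or o₂ := by
  cases o₁ <;> simp_all

/-- every letter in (the) head position has index `i` -/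
def HeadIdx (L : L2) (i : Fin 2) : Prop := ∀ x ∈ L.head?, x.1 = i

def LastIdx (L : L2) (i : Fin 2) : Prop := ∀ x ∈ L.getLast?, x.1 = i

lemma headIdx_nil (i : Fin 2) : HeadIdx [] i := by intro x hx; simp at hx

lemma lastIdx_nil (i : Fin 2) : LastIdx [] i := by intro x hx; simp at hx

lemma headIdx_append {L1 L2 : L2} {i : Fin 2} (h1 : HeadIdx L1 i) (h2 : HeadIdx L2 i) :
    HeadIdx (L1 ++ L2) i := by
  intro x hx
  rw [List.head?_append] at hx
  cases hL : L1.head? with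
  | none => rw [hL] at hx; simp at hx; exact h2 x hx
  | some y => rw [hL] at hx; simp at hx; subst hx; exact h1 y (by rw [hL]; rfl)

lemma lastIdx_append {L1 L2 : L2} {i : Fin 2} (h1 : LastIdx L1 i) (h2 : LastIdx L2 i) :
    LastIdx (L1 ++ L2) i := by
  intro x hx
  rw [List.getLast?_append] at hx
  cases hL : L2.getLast? with
  | none => rw [hL] at hx; simp at hx; exact h1 x hx
  | some y => rw [hL] at hx; simp at hx; subst hx; exact h2 y (by rw [hL]; rfl)

lemma head?_append_left {L1 L2 : L2} (h : L1 ≠ []) : (L1 ++ L2).head? = L1.head? := by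
  rw [List.head?_append]
  obtain ⟨c, t, rfl⟩ := List.exists_cons_of_ne_nil h
  rfl

lemma getLast?_append_right {L1 L2 : L2} (h : L2 ≠ []) : (L1 ++ L2).getLast? = L2.getLast? := by
  rw [List.getLast?_append]
  have : L2.getLast? ≠ none := by simpa [List.getLast?_eq_none_iff] using h
  obtain ⟨c, hc⟩ := Option.ne_none_iff_exists'.mp this
  rw [hc]; rfl

lemma headIdx_wP' (i : Fin 2) (k : ℤ) : HeadIdx (wP i k) i :=
  fun _ hx => mem_wP (List.mem_of_mem_head? hx)

lemma lastIdx_wP' (i : Fin 2) (k : ℤ) : LastIdx (wP i k) i :=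
  fun _ hx => mem_wP (List.mem_of_mem_getLast? hx)

lemma headIdx_wP (k : ℤ) : HeadIdx (wP 0 k) 0 := headIdx_wP' 0 k

lemma lastIdx_wP (k : ℤ) : LastIdx (wP 0 k) 0 := lastIdx_wP' 0 k

lemma rd_glue {L1 L2 : L2} (h1 : Rd L1) (h2 : Rd L2)
    (hb : ∀ x ∈ L1.getLast?, ∀ y ∈ L2.head?, R x y) : Rd (L1 ++ L2) :=
  List.isChain_append.mpr ⟨h1, h2, hb⟩

lemma bound_of_idx {L1 L2 : L2} {i j : Fin 2} (h1 : LastIdx L1 i) (h2 : HeadIdx L2 j)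
    (hij : i ≠ j) : ∀ x ∈ L1.getLast?, ∀ y ∈ L2.head?, R x y := by
  intro x hx y hy
  exact R_of_ne _ _ (by rw [h1 x hx, h2 y hy]; exact hij)

lemma headIdx_linv {L : L2} {i : Fin 2} (hL : LastIdx L i) : HeadIdx (invRev L) i := by
  intro x hx
  rw [head?_invRev] at hx
  cases hG : L.getLast? with
  | none => rw [hG] at hx; simp at hx
  | some y =>
    rw [hG] at hx
    simp at hx
    subst hx
    exact hL y (by rw [hG]; rfl)

lemma lastIdx_linv {L : L2} {i : Fin 2} (hL : HeadIdx L i) : LastIdx (invRev L) i := by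
  intro x hx
  rw [getLast?_invRev] at hx
  cases hG : L.head? with
  | none => rw [hG] at hx; simp at hx
  | some y =>
    rw [hG] at hx
    simp at hx
    subst hx
    exact hL y (by rw [hG]; rfl)

/-- cyclic decomposition of a nonempty reduced word -/
lemma cyc_aux : ∀ (N : ℕ) (L : L2), L.length ≤ N → Rd L → L ≠ [] →
    ∃ V C, C ≠ [] ∧ Rd (C ++ C) ∧ L = V ++ C ++ invRev V := by
  intro N
  induction N with
  | zero =>
    intro L h _ hne
    have : L.length = 0 := by omega
    exact absurd (List.length_eq_zero_iff.mp this) hne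
  | succ N ih =>
    intro L hlen hrd hne
    by_cases hRqp : R (L.getLast hne) (L.head hne)
    · refine ⟨[], L, hne, ?_, by simp [invRev_empty]⟩
      refine List.isChain_append.mpr ⟨hrd, hrd, ?_⟩
      intro x hx y hy
      rw [List.getLast?_eq_getLast hne] at hx
      rw [List.head?_eq_head hne] at hy
      simp only [Option.mem_def, Option.some_inj] at hx hy
      rw [← hx, ← hy]
      exact hRqp
    · obtain ⟨p, T, rfl⟩ := List.exists_cons_of_ne_nil hne
      have hTne : T ≠ [] := by
        rintro rfl
        apply hRqp
        simp only [List.getLast_singleton, List.head_cons]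
        exact fun hc => by simp at hc
      have hgl : (p :: T).getLast hne = T.getLast hTne := List.getLast_cons hTne
      simp only [R, not_not, hgl, List.head_cons] at hRqp
      have hqp : T.getLast hTne = linv p := Prod.ext hRqp.1 hRqp.2
      have hTM : T = T.dropLast ++ [linv p] := by
        conv_lhs => rw [← List.dropLast_append_getLast hTne]
        rw [hqp]
      have hMne : T.dropLast ≠ [] := by
        rintro hMnil
        rw [hMnil] at hTM
        simp at hTM
        rw [hTM] at hrd
        have hRpq : R p (linv p) := (List.isChain_cons_cons.mp hrd).1
        exact hRpq ⟨rfl, by simp [linv]⟩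
      have hrdM : Rd T.dropLast := (hrd.tail).prefix (List.dropLast_prefix T)
      have hMlen : T.dropLast.length ≤ N := by
        have h1 : (p :: T).length = T.length + 1 := by simp
        have h2 : T.dropLast.length = T.length - 1 := by simp [List.length_dropLast]
        omega
      obtain ⟨V', C, hC0, hC, hMdec⟩ := ih T.dropLast hMlen hrdM hMne
      refine ⟨p :: V', C, hC0, hC, ?_⟩
      conv_lhs => rw [hTM, hMdec]
      rw [invRev_cons]
      simp [List.append_assoc]

structure Cyc (u : F2) (V C : L2) : Prop where
  hC0 : C ≠ []
  hC : Rd (C ++ C)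
  hU : u.toWord = V ++ C ++ invRev V
  hh : HeadIdx u.toWord 1
  hl : LastIdx u.toWord 1

namespace Cyc

variable {u : F2} {V C : L2}

lemma rdU (h : Cyc u V C) : Rd (V ++ C ++ invRev V) := by rw [← h.hU]; exact rd_toWord u

lemma rdVC (h : Cyc u V C) : Rd (V ++ C) := (List.isChain_append.mp h.rdU).1

lemma rdV (h : Cyc u V C) : Rd V := (List.isChain_append.mp h.rdVC).1

lemma rdiV (h : Cyc u V C) : Rd (invRev V) := rd_invRev h.rdV

lemma boundVC (h : Cyc u V C) : ∀ x ∈ V.getLast?, ∀ y ∈ C.head?, R x y :=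
  (List.isChain_append.mp h.rdVC).2.2

lemma boundCiV (h : Cyc u V C) : ∀ x ∈ C.getLast?, ∀ y ∈ (invRev V).head?, R x y := by
  intro x hx y hy
  refine (List.isChain_append.mp h.rdU).2.2 x ?_ y hy
  rw [getLast?_append_right h.hC0]
  exact hx

lemma headIdxU (h : Cyc u V C) : HeadIdx (V ++ C ++ invRev V) 1 := by
  rw [← h.hU]; exact h.hh

lemma lastIdxU (h : Cyc u V C) : LastIdx (V ++ C ++ invRev V) 1 := by
  rw [← h.hU]; exact h.hl

lemma headIdxV (h : Cyc u V C) : HeadIdx V 1 := by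
  intro x hx
  have hVne : V ≠ [] := by intro hc; rw [hc] at hx; simp at hx
  apply h.headIdxU x
  rw [List.append_assoc, head?_append_left hVne]
  exact hx

lemma lastIdxiV (h : Cyc u V C) : LastIdx (invRev V) 1 := by
  intro x hx
  have hVne : invRev V ≠ [] := by intro hc; rw [hc] at hx; simp at hx
  apply h.lastIdxU x
  rw [getLast?_append_right hVne]
  exact hx

lemma headIdxC_of_nilV (h : Cyc u V C) (hV : V = []) : HeadIdx C 1 := by
  intro x hx
  apply h.headIdxU x
  rw [hV, invRev_empty, List.append_nil, List.nil_append]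
  exact hx

lemma lastIdxC_of_nilV (h : Cyc u V C) (hV : V = []) : LastIdx C 1 := by
  intro x hx
  apply h.lastIdxU x
  rw [hV, invRev_empty, List.append_nil, List.nil_append]
  exact hx

end Cyc

def blockP (V C : L2) (e : ℤ) : L2 := V ++ wpow C e ++ invRev V

namespace Cyc

variable {u : F2} {V C : L2}

lemma wpow_ne_nil (h : Cyc u V C) {e : ℤ} (he : e ≠ 0) : wpow C e ≠ [] := by
  intro hc
  have := length_wpow C e
  rw [hc] at this
  simp at this
  rcases this with h1 | h1
  · omega
  · exact h.hC0 h1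

lemma boundVW (h : Cyc u V C) {e : ℤ} (he : e ≠ 0) :
    ∀ x ∈ V.getLast?, ∀ y ∈ (wpow C e).head?, R x y := by
  intro x hx y hy
  rcases he.lt_or_gt with hlt | hgt
  · rw [head?_wpow_neg C h.hC0 hlt] at hy
    cases hG : C.getLast? with
    | none => rw [hG] at hy; simp at hy
    | some z =>
      rw [hG] at hy
      simp at hy
      subst hy
      refine R_linv_comm (R_linv_comm ?_)
      have hxm : linv x ∈ (invRev V).head? := by
        rw [head?_invRev]
        cases hV : V.getLast? with
        | none => rw [hV] at hx; simp at hx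
        | some w => rw [hV] at hx; simp at hx; subst hx; simp [hV]
      exact R_linv_comm (h.boundCiV z (by rw [hG]; rfl) (linv x) hxm)
  · rw [head?_wpow_pos C h.hC0 hgt] at hy
    exact h.boundVC x hx y hy
  
lemma boundWiV (h : Cyc u V C) {e : ℤ} (he : e ≠ 0) :
    ∀ x ∈ (wpow C e).getLast?, ∀ y ∈ (invRev V).head?, R x y := by
  intro x hx y hy
  rcases he.lt_or_gt with hlt | hgt
  · rw [getLast?_wpow_neg C h.hC0 hlt] at hx
    cases hG : C.head? with
    | none => rw [hG] at hx; simp at hx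
    | some z =>
      rw [hG] at hx
      simp at hx
      subst hx
      rw [head?_invRev] at hy
      cases hV : V.getLast? with
      | none => rw [hV] at hy; simp at hy
      | some w =>
        rw [hV] at hy
        simp at hy
        subst hy
        exact R_inv_symm (h.boundVC w (by rw [hV]; rfl) z (by rw [hG]; rfl))
  · rw [getLast?_wpow_pos C h.hC0 hgt] at hx
    exact h.boundCiV x hx y hy

lemma pu_rd (h : Cyc u V C) {e : ℤ} (he : e ≠ 0) : Rd (blockP V C e) := by
  refine rd_glue (rd_glue h.rdV (rd_wpow C h.hC0 h.hC e) (h.boundVW he)) h.rdiV ?_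
  intro x hx y hy
  rw [getLast?_append_right (h.wpow_ne_nil he)] at hx
  exact h.boundWiV he x hx y hy

lemma pu_mk (h : Cyc u V C) (e : ℤ) : FreeGroup.mk (blockP V C e) = u ^ e := by
  have hu : u = FreeGroup.mk V * FreeGroup.mk C * (FreeGroup.mk V)⁻¹ := by
    conv_lhs => rw [← mk_toWord (x := u), h.hU]
    rw [inv_mk, mul_mk, mul_mk]
  rw [hu, conj_zpow, blockP, ← mul_mk, ← mul_mk, mk_wpow, inv_mk]

lemma pu_headIdx (h : Cyc u V C) {e : ℤ} (he : e ≠ 0) : HeadIdx (blockP V C e) 1 := by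
  by_cases hV : V = []
  · subst hV
    intro x hx
    rw [blockP, invRev_empty, List.append_nil, List.nil_append] at hx
    rcases he.lt_or_gt with hlt | hgt
    · rw [head?_wpow_neg C h.hC0 hlt] at hx
      cases hG : C.getLast? with
      | none => rw [hG] at hx; simp at hx
      | some z =>
        rw [hG] at hx; simp at hx; subst hx
        exact h.lastIdxC_of_nilV rfl z (by rw [hG]; rfl)
    · rw [head?_wpow_pos C h.hC0 hgt] at hx
      exact h.headIdxC_of_nilV rfl x hx
  · intro x hx
    rw [blockP, List.append_assoc, head?_append_left hV] at hx
    exact h.headIdxV x hx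

lemma pu_lastIdx (h : Cyc u V C) {e : ℤ} (he : e ≠ 0) : LastIdx (blockP V C e) 1 := by
  by_cases hV : V = []
  · subst hV
    intro x hx
    rw [blockP, invRev_empty, List.append_nil, List.nil_append] at hx
    rcases he.lt_or_gt with hlt | hgt
    · rw [getLast?_wpow_neg C h.hC0 hlt] at hx
      cases hG : C.head? with
      | none => rw [hG] at hx; simp at hx
      | some z =>
        rw [hG] at hx; simp at hx; subst hx
        exact h.headIdxC_of_nilV rfl z (by rw [hG]; rfl)
    · rw [getLast?_wpow_pos C h.hC0 hgt] at hx
      exact h.lastIdxC_of_nilV rfl x hx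
  · intro x hx
    have hiV : invRev V ≠ [] := by
      intro hc
      have := invRev_length (L₁ := V)
      rw [hc] at this
      simp at this
      exact hV (List.length_eq_zero_iff.mp this.symm)
    rw [blockP, getLast?_append_right hiV] at hx
    exact h.lastIdxiV x hx

lemma pu_ne_nil (h : Cyc u V C) {e : ℤ} (he : e ≠ 0) : blockP V C e ≠ [] := by
  intro hc
  have hl := congrArg List.length hc
  rw [blockP, List.length_append, List.length_append] at hl
  simp only [List.length_nil] at hl
  have h2 : (wpow C e).length = 0 := by omega
  exact h.wpow_ne_nil he (List.length_eq_zero_iff.mp h2)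

end Cyc

def core (V C : L2) : List (ℤ × ℤ) → L2
  | [] => []
  | [(e, k)] => blockP V C e ++ wP 0 k
  | (e, k) :: r :: rest => blockP V C e ++ wP 0 k ++ core V C (r :: rest)

def nfProd (u : F2) (ps : List (ℤ × ℤ)) : F2 :=
  (ps.map (fun p => u ^ p.1 * A ^ p.2)).prod

namespace Cyc

variable {u : F2} {V C : L2}

lemma eval (h : Cyc u V C) : ∀ ps : List (ℤ × ℤ), ps ≠ [] →
    (∀ p ∈ ps, p.1 ≠ 0) → (∀ p ∈ ps.dropLast, p.2 ≠ 0) →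
    Rd (core V C ps) ∧
    FreeGroup.mk (core V C ps) = nfProd u ps ∧
    HeadIdx (core V C ps) 1 ∧ core V C ps ≠ [] := by
  intro ps
  induction ps with
  | nil => intro hne; exact absurd rfl hne
  | cons p rest ih =>
    intro _ he hk
    obtain ⟨e, k⟩ := p
    have he0 : e ≠ 0 := he (e, k) (by simp)
    cases rest with
    | nil =>
      refine ⟨?_, ?_, ?_, ?_⟩
      · refine rd_glue (h.pu_rd he0) (rd_wP 0 k) ?_
        exact bound_of_idx (h.pu_lastIdx he0) (headIdx_wP k) (by decide)
      · rw [core, ← mul_mk, h.pu_mk, mk_wP, nfProd]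
        simp [A]
      · show HeadIdx (blockP V C e ++ wP 0 k) 1
        intro x hx
        rw [head?_append_left (h.pu_ne_nil he0)] at hx
        exact h.pu_headIdx he0 x hx
      · show blockP V C e ++ wP 0 k ≠ []
        simp [List.append_eq_nil_iff, h.pu_ne_nil he0]
    | cons r rest' =>
      have hk0 : k ≠ 0 := hk (e, k) (by simp)
      have hrest : r :: rest' ≠ [] := by simp
      obtain ⟨ihrd, ihmk, ihhd, ihne⟩ := ih hrest
        (fun q hq => he q (List.mem_cons_of_mem _ hq))
        (fun q hq => hk q (by
          rw [List.dropLast_cons_of_ne_nil hrest]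
          exact List.mem_cons_of_mem _ hq))
      have hwPne : wP 0 k ≠ [] := by
        intro hc
        have := congrArg List.length hc
        rw [length_wP] at this
        simp at this
        exact hk0 this
      have heq : core V C ((e, k) :: r :: rest')
          = (blockP V C e ++ wP 0 k) ++ core V C (r :: rest') := by
        rw [core]
      refine ⟨?_, ?_, ?_, ?_⟩
      · rw [heq]
        refine rd_glue ?_ ihrd ?_
        · exact rd_glue (h.pu_rd he0) (rd_wP 0 k) 
            (bound_of_idx (h.pu_lastIdx he0) (headIdx_wP k) (by decide))
        · intro x hx y hy
          rw [getLast?_append_right hwPne] at hx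
          exact bound_of_idx (lastIdx_wP k) ihhd (by decide) x hx y hy
      · rw [heq, ← mul_mk, ← mul_mk, h.pu_mk, mk_wP, ihmk, nfProd]
        simp [A, nfProd, mul_assoc]
      · intro x hx
        rw [heq, head?_append_left (by simp [List.append_eq_nil_iff, h.pu_ne_nil he0]),
          head?_append_left (h.pu_ne_nil he0)] at hx
        exact h.pu_headIdx he0 x hx
      · rw [heq]
        simp [List.append_eq_nil_iff, h.pu_ne_nil he0]

lemma nf_toWord (h : Cyc u V C) (k0 : ℤ) (ps : List (ℤ × ℤ)) (hne : ps ≠ [])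
    (he : ∀ p ∈ ps, p.1 ≠ 0) (hk : ∀ p ∈ ps.dropLast, p.2 ≠ 0) :
    (A ^ k0 * nfProd u ps).toWord = wP 0 k0 ++ core V C ps := by
  obtain ⟨hrd, hmk, hhd, hne'⟩ := h.eval ps hne he hk
  have : A ^ k0 * nfProd u ps = FreeGroup.mk (wP 0 k0 ++ core V C ps) := by
    rw [← mul_mk, mk_wP, hmk]
    rfl
  rw [this]
  exact toWord_mk_rd (rd_glue (rd_wP 0 k0) hrd (bound_of_idx (lastIdx_wP k0) hhd (by decide)))

end Cyc

def NF (u z : F2) : Prop := ∃ (k0 : ℤ) (ps : List (ℤ × ℤ)),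
  (∀ p ∈ ps, p.1 ≠ 0) ∧ (∀ p ∈ ps.dropLast, p.2 ≠ 0) ∧ z = A ^ k0 * nfProd u ps

lemma nfProd_nil (u : F2) : nfProd u [] = 1 := rfl

lemma nfProd_cons (u : F2) (e k : ℤ) (ps : List (ℤ × ℤ)) :
    nfProd u ((e, k) :: ps) = u ^ e * A ^ k * nfProd u ps := by
  simp [nfProd, mul_assoc]

lemma nf_one (u : F2) : NF u 1 :=
  ⟨0, [], by simp, by simp, by simp [nfProd_nil]⟩

lemma nf_mul_a (u z : F2) (δ : ℤ) (h : NF u z) : NF u (A ^ δ * z) := by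
  obtain ⟨k0, ps, he, hk, rfl⟩ := h
  exact ⟨δ + k0, ps, he, hk, by rw [zpow_add, mul_assoc]⟩

lemma dl2 {α : Type*} (x y : α) (l : List α) :
    (x :: y :: l).dropLast = x :: (y :: l).dropLast := rfl

lemma nf_mul_u (u z : F2) (δ : ℤ) (hδ : δ ≠ 0) (h : NF u z) : NF u (u ^ δ * z) := by
  obtain ⟨k0, ps, he, hk, rfl⟩ := h
  cases ps with
  | nil =>
    refine ⟨0, [(δ, k0)], by simpa using hδ, by simp, ?_⟩
    simp [nfProd_cons, nfProd_nil]
  | cons p rest =>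
    obtain ⟨e1, k1⟩ := p
    by_cases hk0 : k0 = 0
    · subst hk0
      by_cases hde : δ + e1 = 0
      · obtain rfl : δ = -e1 := by omega
        refine ⟨k1, rest, fun q hq => he q (List.mem_cons_of_mem _ hq), ?_, ?_⟩
        · intro q hq
          cases rest with
          | nil => simp at hq
          | cons r rest' =>
            apply hk q
            rw [dl2]
            exact List.mem_cons_of_mem _ hq
        · rw [nfProd_cons]
          group
      · refine ⟨0, (δ + e1, k1) :: rest, ?_, ?_, ?_⟩
        · intro q hq
          rcases List.mem_cons.mp hq with rfl | hq'
          · exact hde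
          · exact he q (List.mem_cons_of_mem _ hq')
        · intro q hq
          cases rest with
          | nil => simp at hq
          | cons r rest' =>
            rw [dl2] at hq
            rcases List.mem_cons.mp hq with rfl | hq'
            · exact hk (e1, k1) (by rw [dl2]; exact List.mem_cons_self)
            · exact hk q (by rw [dl2]; exact List.mem_cons_of_mem _ hq')
        · rw [nfProd_cons, nfProd_cons, zpow_add]
          group
    · refine ⟨0, (δ, k0) :: (e1, k1) :: rest, ?_, ?_, ?_⟩
      · intro q hq
        rcases List.mem_cons.mp hq with rfl | hq'
        · exact hδ
        · exact he q hq'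
      · intro q hq
        rw [dl2] at hq
        rcases List.mem_cons.mp hq with rfl | hq'
        · exact hk0
        · exact hk q hq'
      · simp only [nfProd_cons]
        group

lemma nf_of_mem (u : F2) {z : F2} (hz : z ∈ Subgroup.closure {A, u}) : NF u z := by
  rw [← Subgroup.mem_toSubmonoid, Subgroup.closure_toSubmonoid] at hz
  obtain ⟨l, hl, rfl⟩ := Submonoid.exists_list_of_mem_closure hz
  clear hz
  induction l with
  | nil => exact nf_one u
  | cons t l ih =>
    have ht := hl t (by simp)
    have hnf : NF u l.prod := ih (fun y hy => hl y (List.mem_cons_of_mem _ hy))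
    rw [List.prod_cons]
    simp only [Set.mem_union, Set.mem_insert_iff, Set.mem_singleton_iff, Set.mem_inv] at ht
    rcases ht with (h' | h') | (h' | h')
    · rw [h']
      simpa using nf_mul_a u l.prod 1 hnf
    · rw [h']
      simpa using nf_mul_u u l.prod 1 one_ne_zero hnf
    · have hA : t = A⁻¹ := by rw [← inv_inv t, h']
      subst hA
      simpa using nf_mul_a u l.prod (-1) hnf
    · have hU : t = u⁻¹ := by rw [← inv_inv t, h']
      subst hU
      simpa using nf_mul_u u l.prod (-1) (by norm_num) hnf

def sigma (i : Fin 2) : F2 →* Multiplicative ℤ :=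
  FreeGroup.lift (fun j => Multiplicative.ofAdd (if j = i then 1 else 0))

lemma b_ne_zpow_A (k : ℤ) : B ≠ A ^ k := by
  intro hc
  have h1 : sigma 1 B = Multiplicative.ofAdd 1 := by
    rw [sigma, B, FreeGroup.lift_apply_of, if_pos rfl]
  have h2 : sigma 1 (A ^ k) = 1 := by
    rw [map_zpow, sigma, A, FreeGroup.lift_apply_of, if_neg (by decide)]
    simp
  rw [hc, h2] at h1
  exact (by decide : Multiplicative.ofAdd (1:ℤ) ≠ 1) h1.symm

lemma nfProd_one_eq (ps : List (ℤ × ℤ)) : ∃ K : ℤ, nfProd 1 ps = A ^ K := by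
  induction ps with
  | nil => exact ⟨0, by simp [nfProd_nil]⟩
  | cons p rest ih =>
    obtain ⟨K, hK⟩ := ih
    obtain ⟨e, k⟩ := p
    exact ⟨k + K, by rw [nfProd_cons, hK, one_zpow, one_mul, zpow_add]⟩

theorem core_basis {z : F2} (hgen : B ∈ Subgroup.closure {A, z}) :
    ∃ m n ε : ℤ, (ε = 1 ∨ ε = -1) ∧ z = A ^ m * B ^ ε * A ^ n := by
  obtain ⟨m, n, u, hz, hu⟩ := strip z
  have hAm : A ∈ Subgroup.closure {A, u} := Subgroup.subset_closure (by simp)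
  have hum : u ∈ Subgroup.closure {A, u} := Subgroup.subset_closure (by simp)
  have hzm : z ∈ Subgroup.closure {A, u} := by
    rw [hz]
    exact mul_mem (mul_mem (zpow_mem hAm m) hum) (zpow_mem hAm n)
  have hcl : Subgroup.closure {A, z} ≤ Subgroup.closure {A, u} := by
    rw [Subgroup.closure_le]
    intro y hy
    rcases Set.mem_insert_iff.mp hy with rfl | hy'
    · exact hAm
    · rw [Set.mem_singleton_iff.mp hy']
      exact hzm
  have hB : B ∈ Subgroup.closure {A, u} := hcl hgen
  obtain ⟨k0, ps, he, hk, hBeq⟩ := nf_of_mem u hB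
  suffices hu2 : u = B ∨ u = B⁻¹ by
    rcases hu2 with rfl | rfl
    · exact ⟨m, n, 1, Or.inl rfl, by rw [hz, zpow_one]⟩
    · exact ⟨m, n, -1, Or.inr rfl, by rw [hz, zpow_neg_one]⟩
  rcases hu with hu0 | ⟨hhead, hlast⟩
  · exfalso
    have hu1 : u = 1 := toWord_eq_nil_iff.mp hu0
    subst hu1
    obtain ⟨K, hK⟩ := nfProd_one_eq ps
    rw [hK, ← zpow_add] at hBeq
    exact b_ne_zpow_A _ hBeq
  · obtain ⟨s, t, hW⟩ := hhead
    have hUne : u.toWord ≠ [] := by rw [hW]; simp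
    obtain ⟨V, C, hC0, hC, hdec⟩ := cyc_aux u.toWord.length u.toWord le_rfl (rd_toWord u) hUne
    have hhd : HeadIdx u.toWord 1 := by
      intro x hx
      rw [hW] at hx
      simp at hx
      rw [← hx]
    have hld : LastIdx u.toWord 1 := by
      obtain ⟨s', hs'⟩ := hlast
      intro x hx
      rw [hs'] at hx
      simp at hx
      rw [← hx]
    have hcyc : Cyc u V C := ⟨hC0, hC, hdec, hhd, hld⟩
    cases ps with
    | nil =>
      exfalso
      rw [nfProd_nil, mul_one] at hBeq
      exact b_ne_zpow_A k0 hBeq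
    | cons p rest =>
      obtain ⟨e, k⟩ := p
      have he0 : e ≠ 0 := he (e, k) (by simp)
      have htW := hcyc.nf_toWord k0 ((e, k) :: rest) (by simp) he hk
      rw [← hBeq] at htW
      have hBW : B.toWord = [((1 : Fin 2), true)] := toWord_of 1
      rw [hBW] at htW
      have hlen := congrArg List.length htW
      rw [List.length_append, length_wP] at hlen
      simp only [List.length_cons, List.length_nil] at hlen
      cases rest with
      | cons r rest' =>
        exfalso
        obtain ⟨_, _, _, hcne⟩ := hcyc.eval (r :: rest') (by simp)
          (fun q hq => he q (List.mem_cons_of_mem _ hq))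
          (fun q hq => hk q (by rw [dl2]; exact List.mem_cons_of_mem _ hq))
        have hblock : blockP V C e ≠ [] := hcyc.pu_ne_nil he0
        have hcore : core V C ((e, k) :: r :: rest')
            = blockP V C e ++ wP 0 k ++ core V C (r :: rest') := rfl
        rw [hcore] at hlen
        have h1 : 0 < (blockP V C e).length := List.length_pos_iff.mpr hblock
        have h2 : 0 < (core V C (r :: rest')).length := List.length_pos_iff.mpr hcne
        rw [List.length_append, List.length_append] at hlen
        omega
      | nil =>
        have hcore : core V C [(e, k)] = blockP V C e ++ wP 0 k := rfl
        rw [hcore, List.length_append, length_wP, blockP, List.length_append,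
          List.length_append, length_wpow, invRev_length] at hlen
        have hCpos : 0 < C.length := List.length_pos_iff.mpr hC0
        have hepos : 0 < e.natAbs := Int.natAbs_pos.mpr he0
        have hEL : 1 ≤ e.natAbs * C.length := Nat.one_le_iff_ne_zero.mpr (by positivity)
        have hk00 : k0.natAbs = 0 := by omega
        have hkk0 : k.natAbs = 0 := by omega
        have hV0 : V.length = 0 := by omega
        have hEL1 : e.natAbs * C.length = 1 := by omega
        have hE1 : e.natAbs = 1 := Nat.eq_one_of_mul_eq_one_right hEL1
        have hk0' : k0 = 0 := Int.natAbs_eq_zero.mp hk00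
        have hkk' : k = 0 := Int.natAbs_eq_zero.mp hkk0
        rw [hk0', hkk'] at hBeq
        rw [nfProd_cons, nfProd_nil] at hBeq
        simp only [zpow_zero, one_mul, mul_one] at hBeq
        have he1' : e = 1 ∨ e = -1 := by omega
        rcases he1' with he1 | he1
        · left
          rw [he1, zpow_one] at hBeq
          exact hBeq.symm
        · right
          rw [he1, zpow_neg_one] at hBeq
          rw [hBeq]
          simp

lemma basis_closure_top {x z : F2} (h : IsBasis x z) : Subgroup.closure {x, z} = ⊤ := by
  have hs : Set.range ![x, z] = {x, z} := by
    simp [Matrix.range_cons, Matrix.range_empty]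
    exact Set.pair_comm z x
  rw [← hs, ← FreeGroup.range_lift_eq_closure, MonoidHom.range_eq_top]
  exact h.surjective

lemma isBasis_of_comp (x y p q : F2)
    (h1 : FreeGroup.lift ![x, y] p = FreeGroup.of 0)
    (h2 : FreeGroup.lift ![x, y] q = FreeGroup.of 1)
    (h3 : FreeGroup.lift ![p, q] x = FreeGroup.of 0)
    (h4 : FreeGroup.lift ![p, q] y = FreeGroup.of 1) : IsBasis x y := by
  have hgf : (FreeGroup.lift ![p, q]).comp (FreeGroup.lift ![x, y])
      = MonoidHom.id (FreeGroup (Fin 2)) := by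
    apply FreeGroup.ext_hom
    intro i
    fin_cases i <;>
      simp [FreeGroup.lift_apply_of, Matrix.cons_val_zero, Matrix.cons_val_one, Matrix.head_cons,
        h3, h4]
  have hfg : (FreeGroup.lift ![x, y]).comp (FreeGroup.lift ![p, q])
      = MonoidHom.id (FreeGroup (Fin 2)) := by
    apply FreeGroup.ext_hom
    intro i
    fin_cases i <;>
      simp [FreeGroup.lift_apply_of, Matrix.cons_val_zero, Matrix.cons_val_one, Matrix.head_cons,
        h1, h2]
  refine Function.bijective_iff_has_inverse.mpr ⟨FreeGroup.lift ![p, q], ?_, ?_⟩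
  · intro w
    exact DFunLike.congr_fun hgf w
  · intro w
    exact DFunLike.congr_fun hfg w

lemma lift_A {x y : F2} : FreeGroup.lift ![x, y] A = x := by
  rw [A, FreeGroup.lift_apply_of]
  rfl

lemma lift_B {x y : F2} : FreeGroup.lift ![x, y] B = y := by
  rw [B, FreeGroup.lift_apply_of]
  rfl

lemma isBasis_gen (α β ε : ℤ) (hε : ε = 1 ∨ ε = -1) :
    IsBasis A (A ^ α * B ^ ε * A ^ β) := by
  apply isBasis_of_comp A (A ^ α * B ^ ε * A ^ β) A ((A ^ (-α) * B * A ^ (-β)) ^ ε)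
  · exact lift_A
  · rw [_root_.map_zpow, _root_.map_mul, _root_.map_mul, _root_.map_zpow, _root_.map_zpow,
      lift_A, lift_B]
    rcases hε with rfl | rfl <;> [skip; skip] <;>
      · show _ = B
        group
  · exact lift_A
  · rw [_root_.map_mul, _root_.map_mul, _root_.map_zpow, _root_.map_zpow, _root_.map_zpow,
      lift_A, lift_B]
    rcases hε with rfl | rfl <;>
      · show _ = B
        group

def tau : FreeGroup (Fin 2) →* F2 := FreeGroup.lift ![B, A]

lemma tau_tau (w : F2) : tau (tau w) = w := by
  have : tau.comp tau = MonoidHom.id (FreeGroup (Fin 2)) := by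
    apply FreeGroup.ext_hom
    intro i
    fin_cases i <;> simp [tau, FreeGroup.lift_apply_of, A, B, Matrix.cons_val_zero,
      Matrix.cons_val_one, Matrix.head_cons]
  exact DFunLike.congr_fun this w

lemma tau_bij : Function.Bijective tau :=
  Function.bijective_iff_has_inverse.mpr ⟨tau, tau_tau, tau_tau⟩

lemma tau_A : tau A = B := lift_A

lemma tau_B : tau B = A := lift_B

lemma isBasis_map {h : F2 →* F2} (hh : Function.Bijective h) {x y : F2} (hxy : IsBasis x y) :
    IsBasis (h x) (h y) := by
  have hcomp : (FreeGroup.lift ![h x, h y]) = h.comp (FreeGroup.lift ![x, y]) := by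
    apply FreeGroup.ext_hom
    intro i
    fin_cases i <;> simp [FreeGroup.lift_apply_of, Matrix.cons_val_zero, Matrix.cons_val_one,
      Matrix.head_cons]
  rw [IsBasis, hcomp, MonoidHom.coe_comp]
  exact (Function.Bijective.of_comp_iff' hh _).mpr hxy

lemma isBasis_genB (α β ε : ℤ) (hε : ε = 1 ∨ ε = -1) :
    IsBasis B (B ^ α * A ^ ε * B ^ β) := by
  have := isBasis_map tau_bij (isBasis_gen α β ε hε)
  rwa [_root_.map_mul, _root_.map_mul, _root_.map_zpow, _root_.map_zpow, _root_.map_zpow,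
    tau_A, tau_B] at this

lemma pow_fix (C : L2) (hC0 : C ≠ []) (hC : Rd (C ++ C)) (hinv : invRev C ≠ C) :
    ∀ j : ℤ, (FreeGroup.mk C) ^ j = FreeGroup.mk C → j = 1 := by
  intro j hj
  have hCW : (FreeGroup.mk C).toWord = C := toWord_mk_rd (rd_C C hC)
  have hjW : ((FreeGroup.mk C) ^ j).toWord = wpow C j := by
    rw [← mk_wpow]
    exact toWord_mk_rd (rd_wpow C hC0 hC j)
  rw [hj, hCW] at hjW
  have hlen := congrArg List.length hjW
  rw [length_wpow] at hlen
  have hCpos : 0 < C.length := List.length_pos_iff.mpr hC0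
  have hj1 : j.natAbs = 1 := by
    rcases Nat.eq_zero_or_pos j.natAbs with h0 | hpos
    · rw [h0] at hlen; omega
    · nlinarith [hlen]
  have : j = 1 ∨ j = -1 := by omega
  rcases this with rfl | rfl
  · rfl
  · exfalso
    apply hinv
    have heq : wpow C (-1) = invRev C := by
      rw [wpow, if_neg (by norm_num)]
      simp [wfl]
    rw [← heq]
    exact hjW.symm

lemma zpowers_cases {w z : F2} (hw : ∀ j : ℤ, w ^ j = w → j = 1)
    (h : Subgroup.zpowers z = Subgroup.zpowers w) : z = w ∨ z = w⁻¹ := by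
  have hz : z ∈ Subgroup.zpowers w := h ▸ Subgroup.mem_zpowers z
  have hw' : w ∈ Subgroup.zpowers z := h.symm ▸ Subgroup.mem_zpowers w
  obtain ⟨i, hi⟩ := Subgroup.mem_zpowers_iff.mp hz
  obtain ⟨j, hj⟩ := Subgroup.mem_zpowers_iff.mp hw'
  rw [← hi, ← zpow_mul] at hj
  have hij := hw _ hj
  have : (i = 1 ∧ j = 1) ∨ (i = -1 ∧ j = -1) := by
    rcases Int.eq_one_or_neg_one_of_mul_eq_one' hij with ⟨h1, h2⟩ | ⟨h1, h2⟩
    · exact Or.inl ⟨h1, h2⟩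
    · exact Or.inr ⟨h1, h2⟩
  rcases this with ⟨rfl, _⟩ | ⟨rfl, _⟩
  · left
    rw [← hi, zpow_one]
  · right
    rw [← hi, zpow_neg_one]

lemma A_def : A = FreeGroup.of 0 := rfl
lemma B_def : B = FreeGroup.of 1 := rfl

lemma wP_ne_nil {i : Fin 2} {k : ℤ} (hk : k ≠ 0) : wP i k ≠ [] := by
  intro hc
  have := congrArg List.length hc
  rw [length_wP] at this
  simp at this
  exact hk this

lemma xy_words (i j : Fin 2) (hij : i ≠ j) (m ε n : ℤ) (hε : ε ≠ 0) :
    (FreeGroup.of i ^ m * FreeGroup.of j ^ ε * FreeGroup.of i ^ n).toWord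
      = wP i m ++ wP j ε ++ wP i n := by
  have hmk : FreeGroup.of i ^ m * FreeGroup.of j ^ ε * FreeGroup.of i ^ n
      = FreeGroup.mk (wP i m ++ wP j ε ++ wP i n) := by
    rw [← mul_mk, ← mul_mk, mk_wP, mk_wP, mk_wP]
  rw [hmk]
  apply toWord_mk_rd
  refine rd_glue (rd_glue (rd_wP i m) (rd_wP j ε)
    (bound_of_idx (lastIdx_wP' i m) (headIdx_wP' j ε) hij)) (rd_wP i n) ?_
  intro x hx y hy
  rw [getLast?_append_right (wP_ne_nil hε)] at hx
  exact bound_of_idx (lastIdx_wP' j ε) (headIdx_wP' i n) (Ne.symm hij) x hx y hy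

def cnt0 (L : L2) : ℕ := L.countP (fun x => decide (x.1 = 0))

lemma cnt0_wP0 (k : ℤ) : cnt0 (wP 0 k) = k.natAbs := by
  rw [cnt0, wP, List.countP_replicate]
  simp

lemma cnt0_wP1 (k : ℤ) : cnt0 (wP 1 k) = 0 := by
  rw [cnt0, wP, List.countP_replicate]
  simp

lemma cnt0_append (L1 L2 : L2) : cnt0 (L1 ++ L2) = cnt0 L1 + cnt0 L2 :=
  List.countP_append

/-- the key comparison: if z has both forms, the `A`-exponents are tiny -/
lemma exps_small {z : F2} {m n ε p q δ : ℤ} (hε : ε ≠ 0) (hδ : δ.natAbs = 1)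
    (h1 : z = A ^ m * B ^ ε * A ^ n) (h2 : z = B ^ p * A ^ δ * B ^ q) :
    m.natAbs + n.natAbs = 1 := by
  have hδ0 : δ ≠ 0 := by omega
  have hW1 : z.toWord = wP 0 m ++ wP 1 ε ++ wP 0 n := by
    rw [h1, A_def, B_def]
    exact xy_words 0 1 (by decide) m ε n hε
  have hW2 : z.toWord = wP 1 p ++ wP 0 δ ++ wP 1 q := by
    rw [h2, A_def, B_def]
    exact xy_words 1 0 (by decide) p δ q hδ0
  have hc := congrArg cnt0 (hW1.symm.trans hW2)
  rw [cnt0_append, cnt0_append, cnt0_append, cnt0_append, cnt0_wP0, cnt0_wP0, cnt0_wP0,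
    cnt0_wP1, cnt0_wP1, cnt0_wP1] at hc
  omega

lemma isBasisA_of_form (z : F2) (α β ε : ℤ) (hε : ε = 1 ∨ ε = -1)
    (hz : z = A ^ α * B ^ ε * A ^ β) : IsBasis A z := hz ▸ isBasis_gen α β ε hε

lemma isBasisB_of_form (z : F2) (α β ε : ℤ) (hε : ε = 1 ∨ ε = -1)
    (hz : z = B ^ α * A ^ ε * B ^ β) : IsBasis B z := hz ▸ isBasis_genB α β ε hε

lemma pow_fix_of_word (w : F2) (C : L2) (hw : w = FreeGroup.mk C) (hC0 : C ≠ [])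
    (hC : Rd (C ++ C)) (hinv : invRev C ≠ C) : ∀ j : ℤ, w ^ j = w → j = 1 := by
  rw [hw]
  exact pow_fix C hC0 hC hinv

lemma fix_AB : ∀ j : ℤ, (A * B) ^ j = A * B → j = 1 :=
  pow_fix_of_word _ [(0, true), (1, true)] (by decide) (by simp)
    (by simp [Rd, List.Chain', R, List.isChain_cons_cons]) (by decide)

lemma fix_ABi : ∀ j : ℤ, (A * B⁻¹) ^ j = A * B⁻¹ → j = 1 :=
  pow_fix_of_word _ [(0, true), (1, false)] (by decide) (by simp)
    (by simp [Rd, List.Chain', R, List.isChain_cons_cons]) (by decide)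

lemma fix_AiB : ∀ j : ℤ, (A⁻¹ * B) ^ j = A⁻¹ * B → j = 1 :=
  pow_fix_of_word _ [(0, false), (1, true)] (by decide) (by simp)
    (by simp [Rd, List.Chain', R, List.isChain_cons_cons]) (by decide)

lemma fix_AiBi : ∀ j : ℤ, (A⁻¹ * B⁻¹) ^ j = A⁻¹ * B⁻¹ → j = 1 :=
  pow_fix_of_word _ [(0, false), (1, false)] (by decide) (by simp)
    (by simp [Rd, List.Chain', R, List.isChain_cons_cons]) (by decide)

theorem std (z : F2) : (IsBasis A z ∧ IsBasis B z) ↔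
    (Subgroup.zpowers z = Subgroup.zpowers (A * B) ∨
     Subgroup.zpowers z = Subgroup.zpowers (A * B⁻¹) ∨
     Subgroup.zpowers z = Subgroup.zpowers (A⁻¹ * B) ∨
     Subgroup.zpowers z = Subgroup.zpowers (A⁻¹ * B⁻¹)) := by
  constructor
  · rintro ⟨h1, h2⟩
    have hB1 : B ∈ Subgroup.closure {A, z} := by
      rw [basis_closure_top h1]
      exact Subgroup.mem_top B
    obtain ⟨m, n, ε, hε, hz1⟩ := core_basis hB1
    have h2' : IsBasis A (tau z) := by
      have := isBasis_map tau_bij h2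
      rwa [tau_B] at this
    have hB2 : B ∈ Subgroup.closure {A, tau z} := by
      rw [basis_closure_top h2']
      exact Subgroup.mem_top B
    obtain ⟨p, q, δ, hδ, hz2'⟩ := core_basis hB2
    have hz2 : z = B ^ p * A ^ δ * B ^ q := by
      have := congrArg tau hz2'
      rwa [tau_tau, _root_.map_mul, _root_.map_mul, _root_.map_zpow, _root_.map_zpow,
        _root_.map_zpow, tau_A, tau_B] at this
    have hsmall : m.natAbs + n.natAbs = 1 :=
      exps_small (by omega) (by rcases hδ with rfl | rfl <;> rfl) hz1 hz2
    have hcases : (m = 0 ∧ (n = 1 ∨ n = -1)) ∨ ((m = 1 ∨ m = -1) ∧ n = 0) := by omega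
    rcases hcases with ⟨rfl, rfl | rfl⟩ | ⟨rfl | rfl, rfl⟩ <;> rcases hε with rfl | rfl <;>
      simp only [zpow_zero, zpow_one, zpow_neg_one, one_mul, mul_one] at hz1
    · -- z = B * A
      refine Or.inr (Or.inr (Or.inr ?_))
      rw [hz1, show A⁻¹ * B⁻¹ = (B * A)⁻¹ by group, Subgroup.zpowers_inv]
    · -- z = B⁻¹ * A
      refine Or.inr (Or.inr (Or.inl ?_))
      rw [hz1, show A⁻¹ * B = (B⁻¹ * A)⁻¹ by group, Subgroup.zpowers_inv]
    · -- z = B * A⁻¹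
      refine Or.inr (Or.inl ?_)
      rw [hz1, show A * B⁻¹ = (B * A⁻¹)⁻¹ by group, Subgroup.zpowers_inv]
    · -- z = B⁻¹ * A⁻¹
      refine Or.inl ?_
      rw [hz1, show A * B = (B⁻¹ * A⁻¹)⁻¹ by group, Subgroup.zpowers_inv]
    · exact Or.inl (by rw [hz1])
    · exact Or.inr (Or.inl (by rw [hz1]))
    · exact Or.inr (Or.inr (Or.inl (by rw [hz1])))
    · exact Or.inr (Or.inr (Or.inr (by rw [hz1])))
  · intro hz
    rcases hz with hz | hz | hz | hz
    · rcases zpowers_cases fix_AB hz with rfl | rfl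
      · exact ⟨isBasisA_of_form _ 1 0 1 (Or.inl rfl) (by group),
          isBasisB_of_form _ 0 1 1 (Or.inl rfl) (by group)⟩
      · exact ⟨isBasisA_of_form _ 0 (-1) (-1) (Or.inr rfl) (by group),
          isBasisB_of_form _ (-1) 0 (-1) (Or.inr rfl) (by group)⟩
    · rcases zpowers_cases fix_ABi hz with rfl | rfl
      · exact ⟨isBasisA_of_form _ 1 0 (-1) (Or.inr rfl) (by group),
          isBasisB_of_form _ 0 (-1) 1 (Or.inl rfl) (by group)⟩
      · exact ⟨isBasisA_of_form _ 0 (-1) 1 (Or.inl rfl) (by group),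
          isBasisB_of_form _ 1 0 (-1) (Or.inr rfl) (by group)⟩
    · rcases zpowers_cases fix_AiB hz with rfl | rfl
      · exact ⟨isBasisA_of_form _ (-1) 0 1 (Or.inl rfl) (by group),
          isBasisB_of_form _ 0 1 (-1) (Or.inr rfl) (by group)⟩
      · exact ⟨isBasisA_of_form _ 0 1 (-1) (Or.inr rfl) (by group),
          isBasisB_of_form _ (-1) 0 1 (Or.inl rfl) (by group)⟩
    · rcases zpowers_cases fix_AiBi hz with rfl | rfl
      · exact ⟨isBasisA_of_form _ (-1) 0 (-1) (Or.inr rfl) (by group),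
          isBasisB_of_form _ 0 (-1) (-1) (Or.inr rfl) (by group)⟩
      · exact ⟨isBasisA_of_form _ 0 1 1 (Or.inl rfl) (by group),
          isBasisB_of_form _ 1 0 1 (Or.inl rfl) (by group)⟩

theorem std_distinct6 :
    (Subgroup.zpowers (A * B) ≠ Subgroup.zpowers (A * B⁻¹)) ∧
    (Subgroup.zpowers (A * B) ≠ Subgroup.zpowers (A⁻¹ * B)) ∧
    (Subgroup.zpowers (A * B) ≠ Subgroup.zpowers (A⁻¹ * B⁻¹)) ∧
    (Subgroup.zpowers (A * B⁻¹) ≠ Subgroup.zpowers (A⁻¹ * B)) ∧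
    (Subgroup.zpowers (A * B⁻¹) ≠ Subgroup.zpowers (A⁻¹ * B⁻¹)) ∧
    (Subgroup.zpowers (A⁻¹ * B) ≠ Subgroup.zpowers (A⁻¹ * B⁻¹)) := by
  refine ⟨?_, ?_, ?_, ?_, ?_, ?_⟩
  · intro h
    rcases zpowers_cases fix_ABi h with h' | h' <;> revert h' <;> decide
  · intro h
    rcases zpowers_cases fix_AiB h with h' | h' <;> revert h' <;> decide
  · intro h
    rcases zpowers_cases fix_AiBi h with h' | h' <;> revert h' <;> decide
  · intro h
    rcases zpowers_cases fix_AiB h with h' | h' <;> revert h' <;> decide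
  · intro h
    rcases zpowers_cases fix_AiBi h with h' | h' <;> revert h' <;> decide
  · intro h
    rcases zpowers_cases fix_AiBi h with h' | h' <;> revert h' <;> decide

theorem std_distinct :
    List.Pairwise (· ≠ ·)
      [Subgroup.zpowers (A * B), Subgroup.zpowers (A * B⁻¹),
       Subgroup.zpowers (A⁻¹ * B), Subgroup.zpowers (A⁻¹ * B⁻¹)] := by
  have d12 : Subgroup.zpowers (A * B) ≠ Subgroup.zpowers (A * B⁻¹) := by
    intro h
    rcases zpowers_cases fix_ABi h with h' | h' <;> revert h' <;> decide
  have d13 : Subgroup.zpowers (A * B) ≠ Subgroup.zpowers (A⁻¹ * B) := by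
    intro h
    rcases zpowers_cases fix_AiB h with h' | h' <;> revert h' <;> decide
  have d14 : Subgroup.zpowers (A * B) ≠ Subgroup.zpowers (A⁻¹ * B⁻¹) := by
    intro h
    rcases zpowers_cases fix_AiBi h with h' | h' <;> revert h' <;> decide
  have d23 : Subgroup.zpowers (A * B⁻¹) ≠ Subgroup.zpowers (A⁻¹ * B) := by
    intro h
    rcases zpowers_cases fix_AiB h with h' | h' <;> revert h' <;> decide
  have d24 : Subgroup.zpowers (A * B⁻¹) ≠ Subgroup.zpowers (A⁻¹ * B⁻¹) := by
    intro h
    rcases zpowers_cases fix_AiBi h with h' | h' <;> revert h' <;> decide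
  have d34 : Subgroup.zpowers (A⁻¹ * B) ≠ Subgroup.zpowers (A⁻¹ * B⁻¹) := by
    intro h
    rcases zpowers_cases fix_AiBi h with h' | h' <;> revert h' <;> decide
  simp [List.pairwise_cons, d12, d13, d14, d23, d24, d34]

end StickAux


open StickAux in
/-- If `{x, y}` is a basis of `F2`, the cyclic subgroups `⟨z⟩` such that both
`{x, z}` and `{y, z}` are bases are exactly the four distinct subgroups
`⟨xy⟩, ⟨xy⁻¹⟩, ⟨x⁻¹y⟩, ⟨x⁻¹y⁻¹⟩`. -/
theorem sticks_of_an_edge (x y : F2) (hxy : IsBasis x y) :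
    (∀ z : F2, (IsBasis x z ∧ IsBasis y z) ↔
      (zpowers z = zpowers (x * y) ∨ zpowers z = zpowers (x * y⁻¹) ∨
       zpowers z = zpowers (x⁻¹ * y) ∨ zpowers z = zpowers (x⁻¹ * y⁻¹))) ∧
    List.Pairwise (· ≠ ·)
      [zpowers (x * y), zpowers (x * y⁻¹), zpowers (x⁻¹ * y), zpowers (x⁻¹ * y⁻¹)] := by
  have hΦ : Function.Bijective (FreeGroup.lift ![x, y] : FreeGroup (Fin 2) →* F2) := hxy
  set Φ := (FreeGroup.lift ![x, y] : FreeGroup (Fin 2) →* F2) with hΦdef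
  have hΦA : Φ A = x := lift_A
  have hΦB : Φ B = y := lift_B
  have hzp : ∀ g g' : F2, zpowers (Φ g) = zpowers (Φ g') ↔ zpowers g = zpowers g' := by
    intro g g'
    rw [← MonoidHom.map_zpowers, ← MonoidHom.map_zpowers]
    constructor
    · intro h
      exact Subgroup.map_injective hΦ.injective h
    · intro h
      rw [h]
  have htrans : ∀ u v : F2, IsBasis (Φ u) (Φ v) ↔ IsBasis u v := by
    intro u v
    constructor
    · intro h
      have hb : Function.Bijective ((MulEquiv.ofBijective Φ hΦ).symm.toMonoidHom) :=
        (MulEquiv.ofBijective Φ hΦ).symm.bijective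
      have h2 := isBasis_map hb h
      have hu : (MulEquiv.ofBijective Φ hΦ).symm.toMonoidHom (Φ u) = u :=
        (MulEquiv.ofBijective Φ hΦ).symm_apply_apply u
      have hv : (MulEquiv.ofBijective Φ hΦ).symm.toMonoidHom (Φ v) = v :=
        (MulEquiv.ofBijective Φ hΦ).symm_apply_apply v
      rwa [hu, hv] at h2
    · intro h
      exact isBasis_map hΦ h
  have e1 : x * y = Φ (A * B) := by rw [_root_.map_mul, hΦA, hΦB]
  have e2 : x * y⁻¹ = Φ (A * B⁻¹) := by rw [_root_.map_mul, _root_.map_inv, hΦA, hΦB]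
  have e3 : x⁻¹ * y = Φ (A⁻¹ * B) := by rw [_root_.map_mul, _root_.map_inv, hΦA, hΦB]
  have e4 : x⁻¹ * y⁻¹ = Φ (A⁻¹ * B⁻¹) := by
    rw [_root_.map_mul, _root_.map_inv, _root_.map_inv, hΦA, hΦB]
  constructor
  · intro z
    obtain ⟨z', rfl⟩ := hΦ.surjective z
    rw [show x = Φ A from hΦA.symm, show y = Φ B from hΦB.symm] at e1 e2 e3 e4 ⊢
    rw [htrans A z', htrans B z', e1, e2, e3, e4, hzp z' (A * B), hzp z' (A * B⁻¹),
      hzp z' (A⁻¹ * B), hzp z' (A⁻¹ * B⁻¹)]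
    exact std z'
  · obtain ⟨d12, d13, d14, d23, d24, d34⟩ := std_distinct6
    rw [e1, e2, e3, e4]
    refine List.Pairwise.cons ?_ (List.Pairwise.cons ?_ (List.Pairwise.cons ?_ (List.pairwise_singleton _ _)))
    · intro s hs
      simp only [List.mem_cons, List.mem_singleton, List.not_mem_nil, or_false] at hs
      rcases hs with rfl | rfl | rfl
      · exact fun h => d12 ((hzp _ _).mp h)
      · exact fun h => d13 ((hzp _ _).mp h)
      · exact fun h => d14 ((hzp _ _).mp h)
    · intro s hs
      simp only [List.mem_cons, List.mem_singleton, List.not_mem_nil, or_false] at hs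
      rcases hs with rfl | rfl
      · exact fun h => d23 ((hzp _ _).mp h)
      · exact fun h => d24 ((hzp _ _).mp h)
    · intro s hs
      simp only [List.mem_singleton] at hs
      subst hs
      exact fun h => d34 ((hzp _ _).mp h)
end

section
/- Let F_2 = ⟨a, b⟩ and let y = t b t^{-1} where {b, t} is a basis of F_2. Then for every k ∈ ℤ, the element t b^k generates a vertex adjacent to both ⟨b⟩ and ⟨y⟩ in AF_2; in particular ⟨b⟩ and ⟨y⟩ have infinitely many common neighbors. -/
open Subgroup

/-- A two-sided inverse pair of monoid homs gives bijectivity. -/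
lemma bij_of_inv {f g : F2 →* F2} (h1 : g.comp f = MonoidHom.id F2)
    (h2 : f.comp g = MonoidHom.id F2) : Function.Bijective f :=
  Function.bijective_iff_has_inverse.mpr
    ⟨g, fun x => DFunLike.congr_fun h1 x, fun x => DFunLike.congr_fun h2 x⟩

lemma conj_aux1 {G : Type*} [Group G] (a b : G) (k : ℤ) :
    (a ^ k)⁻¹ * b * (b⁻¹ * a * b) ^ k = b := by
  rw [show b⁻¹ * a * b = b⁻¹ * a * (b⁻¹)⁻¹ by rw [inv_inv], conj_zpow]
  group

/-- The Nielsen transformation `a ↦ a, b ↦ b a^k` is an automorphism. -/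
lemma nielsen1_bij (k : ℤ) :
    Function.Bijective (FreeGroup.lift ![ga, gb * ga ^ k] : F2 →* F2) := by
  apply bij_of_inv (g := FreeGroup.lift ![ga, gb * ga ^ (-k)]) <;>
  · apply FreeGroup.ext_hom
    intro i
    fin_cases i <;> simp [ga, gb] <;> group

/-- The transformation `a ↦ b a b⁻¹, b ↦ b a^k` is an automorphism. -/
lemma nielsen2_bij (k : ℤ) :
    Function.Bijective (FreeGroup.lift ![gb * ga * gb⁻¹, gb * ga ^ k] : F2 →* F2) := by
  apply bij_of_inv (g := FreeGroup.lift ![gb⁻¹ * ga * gb, ga ^ (-k) * gb]) <;>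
  · apply FreeGroup.ext_hom
    intro i
    fin_cases i <;> simp [ga, gb, conj_aux1] <;> group

lemma lift_comp_eq (f g : F2 →* F2) (x y : F2)
    (h0 : f (g ga) = x) (h1 : f (g gb) = y) :
    (FreeGroup.lift ![x, y] : F2 →* F2) = f.comp g := by
  apply FreeGroup.ext_hom
  intro i
  fin_cases i <;> simp [← h0, ← h1, ga, gb]

/-- If `{b, t}` is a basis and `y = t b t⁻¹`, then for every `k ∈ ℤ` the vertex
`⟨t b^k⟩` is adjacent to both `⟨b⟩` and `⟨y⟩`; in particular `⟨b⟩` and `⟨y⟩` have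
infinitely many common neighbors. -/
theorem line_is_infinite (t : F2) (ht : IsBasis gb t) :
    (∀ k : ℤ, IsBasis gb (t * gb ^ k) ∧ IsBasis (t * gb * t⁻¹) (t * gb ^ k)) ∧
    Set.Infinite {S : Subgroup F2 | ∃ z : F2, S = zpowers z ∧
      IsBasis gb z ∧ IsBasis (t * gb * t⁻¹) z} := by
  set f : F2 →* F2 := FreeGroup.lift ![gb, t] with hf
  have hfa : f (FreeGroup.of 0) = FreeGroup.of 1 := by simp [hf, gb]
  have hfb : f (FreeGroup.of 1) = t := by simp [hf]
  have key : ∀ k : ℤ, IsBasis gb (t * gb ^ k) ∧ IsBasis (t * gb * t⁻¹) (t * gb ^ k) := by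
    intro k
    constructor
    · unfold IsBasis
      rw [lift_comp_eq f (FreeGroup.lift ![ga, gb * ga ^ k]) gb (t * gb ^ k)
          (by simp [ga, gb, hfa, hfb]) (by simp [ga, gb, hfa, hfb])]
      exact ht.comp (nielsen1_bij k)
    · unfold IsBasis
      rw [lift_comp_eq f (FreeGroup.lift ![gb * ga * gb⁻¹, gb * ga ^ k]) (t * gb * t⁻¹)
          (t * gb ^ k) (by simp [ga, gb, hfa, hfb]) (by simp [ga, gb, hfa, hfb])]
      exact ht.comp (nielsen2_bij k)
  refine ⟨key, ?_⟩
  apply Set.infinite_of_injective_forall_mem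
    (f := fun k : ℤ => zpowers (t * gb ^ k))
  · intro k j hkj
    have hkj' : zpowers (t * gb ^ k) = zpowers (t * gb ^ j) := hkj
    have hmem : t * gb ^ j ∈ zpowers (t * gb ^ k) := by
      rw [hkj']; exact mem_zpowers _
    obtain ⟨n, hn⟩ := hmem
    have hn0 : (t * gb ^ k) ^ n = t * gb ^ j := hn
    have hk' : t * gb ^ k = f (gb * ga ^ k) := by simp [ga, gb, hfa, hfb]
    have hj' : t * gb ^ j = f (gb * ga ^ j) := by simp [ga, gb, hfa, hfb]
    rw [hk', hj', ← map_zpow] at hn0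
    have hn' : (gb * ga ^ k) ^ n = gb * ga ^ j := ht.injective hn0
    set ψa : F2 →* Multiplicative ℤ := FreeGroup.lift ![Multiplicative.ofAdd 1, 1] with hψa
    set ψb : F2 →* Multiplicative ℤ := FreeGroup.lift ![1, Multiplicative.ofAdd 1] with hψb
    have hb : Multiplicative.toAdd (ψb ((gb * ga ^ k) ^ n)) =
        Multiplicative.toAdd (ψb (gb * ga ^ j)) := by rw [hn']
    have ha : Multiplicative.toAdd (ψa ((gb * ga ^ k) ^ n)) =
        Multiplicative.toAdd (ψa (gb * ga ^ j)) := by rw [hn']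
    simp [hψa, hψb, ga, gb, toAdd_zpow, smul_eq_mul] at hb ha
    have hn1 : n = 1 := by omega
    subst hn1
    simpa using ha
  · intro k
    exact ⟨t * gb ^ k, rfl, (key k).1, (key k).2⟩
end

section
/- In the Farey graph, any two distinct vertices have at most two common neighbors. -/
/-- Adjacency in the Farey graph on `ℚ ∪ {∞}` (with `∞ = none` thought of as `1/0`):
reduced fractions `p/q` and `r/s` are adjacent iff `|ps - qr| = 1`. -/
def fareyAdj : Option ℚ → Option ℚ → Prop
  | some q, some r => q ≠ r ∧ |q.num * (r.den : ℤ) - (q.den : ℤ) * r.num| = 1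
  | some q, none => q.den = 1
  | none, some r => r.den = 1
  | none, none => False

namespace FareyAux

/-- Encode a vertex as a primitive integer vector (numerator, denominator). -/
def E : Option ℚ → ℤ × ℤ
  | some q => (q.num, (q.den : ℤ))
  | none => (1, 0)

/-- Cross product / determinant. -/
def cross (a b : ℤ × ℤ) : ℤ := a.1 * b.2 - a.2 * b.1

lemma adj_abs (a b : Option ℚ) (h : fareyAdj a b) : |cross (E a) (E b)| = 1 := by
  cases a with
  | none =>
    cases b with
    | none => exact absurd h (by simp [fareyAdj])
    | some r =>
      simp only [fareyAdj] at h
      simp [cross, E, h]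
  | some q =>
    cases b with
    | none =>
      simp only [fareyAdj] at h
      simp [cross, E, h]
    | some r =>
      exact h.2

lemma ne_cross (u v : Option ℚ) (h : u ≠ v) : cross (E u) (E v) ≠ 0 := by
  cases u with
  | none =>
    cases v with
    | none => exact absurd rfl h
    | some r =>
      simp [cross, E, r.den_nz]
  | some q =>
    cases v with
    | none =>
      simp [cross, E, q.den_nz]
    | some r =>
      simp only [cross, E]
      intro hc
      apply h
      have hq : (q.num : ℚ) / (q.den : ℚ) = q := q.num_div_den
      have hr : (r.num : ℚ) / (r.den : ℚ) = r := r.num_div_den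
      have hqd : ((q.den : ℤ) : ℚ) ≠ 0 := by exact_mod_cast q.den_nz
      have hrd : ((r.den : ℤ) : ℚ) ≠ 0 := by exact_mod_cast r.den_nz
      have hzz : q.num * (r.den : ℤ) = (q.den : ℤ) * r.num := by linarith
      have hQQ : (q.num : ℚ) * (r.den : ℚ) = (q.den : ℚ) * (r.num : ℚ) := by
        exact_mod_cast hzz
      congr 1
      rw [← hq, ← hr]
      rw [div_eq_div_iff (by exact_mod_cast hqd) (by exact_mod_cast hrd)]
      linarith

lemma E_inj (w1 w2 : Option ℚ) (h : E w1 = E w2 ∨ E w1 = -E w2) : w1 = w2 := by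
  have hsnd : ∀ w : Option ℚ, 0 ≤ (E w).2 := by
    intro w
    cases w with
    | none => simp [E]
    | some q => simp [E]
  have heq : E w1 = E w2 := by
    rcases h with h | h
    · exact h
    · -- second coordinates are nonneg and opposite, hence zero; then only `none` possible
      have h2 : (E w1).2 = -(E w2).2 := by rw [h]; simp
      have hz1 : (E w1).2 = 0 := le_antisymm (by have := hsnd w2; omega) (hsnd w1)
      have hz2 : (E w2).2 = 0 := by omega
      have hn1 : w1 = none := by
        cases w1 with
        | none => rfl
        | some q => exact absurd hz1 (by simpa [E] using q.den_nz)
      have hn2 : w2 = none := by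
        cases w2 with
        | none => rfl
        | some q => exact absurd hz2 (by simpa [E] using q.den_nz)
      subst hn1; subst hn2
      simp [E] at h
  cases w1 with
  | none =>
    cases w2 with
    | none => rfl
    | some r =>
      exfalso
      have : (0 : ℤ) = (r.den : ℤ) := congrArg Prod.snd heq
      exact r.den_nz (by exact_mod_cast this.symm)
  | some q =>
    cases w2 with
    | none =>
      exfalso
      have : (q.den : ℤ) = 0 := congrArg Prod.snd heq
      exact q.den_nz (by exact_mod_cast this)
    | some r =>
      have h1 : q.num = r.num := congrArg Prod.fst heq
      have h2 : (q.den : ℤ) = (r.den : ℤ) := congrArg Prod.snd heq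
      have h2' : q.den = r.den := by exact_mod_cast h2
      exact congrArg some (Rat.ext h1 h2')

lemma sign_lemma (a1 b1 a2 b2 : ℤ) (ha1 : |a1| = 1) (hb1 : |b1| = 1)
    (ha2 : |a2| = 1) (hb2 : |b2| = 1) (hs : a1 * b1 = a2 * b2) :
    (a1 = a2 ∧ b1 = b2) ∨ (a1 = -a2 ∧ b1 = -b2) := by
  rw [abs_eq (by norm_num : (0:ℤ) ≤ 1)] at ha1 hb1 ha2 hb2
  rcases ha1 with rfl | rfl <;> rcases hb1 with rfl | rfl <;>
    rcases ha2 with rfl | rfl <;> rcases hb2 with rfl | rfl <;> omega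

lemma key (U V W : ℤ × ℤ) :
    cross U V * W.1 = cross U W * V.1 - cross V W * U.1 ∧
    cross U V * W.2 = cross U W * V.2 - cross V W * U.2 := by
  constructor <;> (simp only [cross]; ring)

lemma eq_of_same_sign (u v w1 w2 : Option ℚ) (hd : cross (E u) (E v) ≠ 0)
    (h1u : |cross (E u) (E w1)| = 1) (h1v : |cross (E v) (E w1)| = 1)
    (h2u : |cross (E u) (E w2)| = 1) (h2v : |cross (E v) (E w2)| = 1)
    (hs : cross (E u) (E w1) * cross (E v) (E w1)
        = cross (E u) (E w2) * cross (E v) (E w2)) : w1 = w2 := by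
  obtain hcase := sign_lemma _ _ _ _ h1u h1v h2u h2v hs
  have k1 := key (E u) (E v) (E w1)
  have k2 := key (E u) (E v) (E w2)
  rcases hcase with ⟨ha, hb⟩ | ⟨ha, hb⟩
  · apply E_inj; left
    have e1 : cross (E u) (E v) * (E w1).1 = cross (E u) (E v) * (E w2).1 := by
      rw [k1.1, k2.1, ha, hb]
    have e2 : cross (E u) (E v) * (E w1).2 = cross (E u) (E v) * (E w2).2 := by
      rw [k1.2, k2.2, ha, hb]
    exact Prod.ext (mul_left_cancel₀ hd e1) (mul_left_cancel₀ hd e2)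
  · apply E_inj; right
    have e1 : cross (E u) (E v) * (E w1).1 = cross (E u) (E v) * (-(E w2)).1 := by
      simp only [Prod.fst_neg, mul_neg]
      rw [k1.1, k2.1, ha, hb]; ring
    have e2 : cross (E u) (E v) * (E w1).2 = cross (E u) (E v) * (-(E w2)).2 := by
      simp only [Prod.snd_neg, mul_neg]
      rw [k1.2, k2.2, ha, hb]; ring
    exact Prod.ext (mul_left_cancel₀ hd e1) (mul_left_cancel₀ hd e2)

end FareyAux

open FareyAux in
/-- In the Farey graph, any two distinct vertices have at most two common neighbors. -/
theorem farey_common_neighbors_le_two (u v : Option ℚ) (huv : u ≠ v)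
    (w₁ w₂ w₃ : Option ℚ)
    (h₁ : fareyAdj u w₁ ∧ fareyAdj v w₁)
    (h₂ : fareyAdj u w₂ ∧ fareyAdj v w₂)
    (h₃ : fareyAdj u w₃ ∧ fareyAdj v w₃) :
    w₁ = w₂ ∨ w₁ = w₃ ∨ w₂ = w₃ := by
  have hd := ne_cross u v huv
  have a1 := adj_abs u w₁ h₁.1
  have b1 := adj_abs v w₁ h₁.2
  have a2 := adj_abs u w₂ h₂.1
  have b2 := adj_abs v w₂ h₂.2
  have a3 := adj_abs u w₃ h₃.1
  have b3 := adj_abs v w₃ h₃.2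
  have p1 : cross (E u) (E w₁) * cross (E v) (E w₁) = 1 ∨
      cross (E u) (E w₁) * cross (E v) (E w₁) = -1 := by
    rw [← abs_eq (by norm_num : (0:ℤ) ≤ 1), abs_mul, a1, b1]; norm_num
  have p2 : cross (E u) (E w₂) * cross (E v) (E w₂) = 1 ∨
      cross (E u) (E w₂) * cross (E v) (E w₂) = -1 := by
    rw [← abs_eq (by norm_num : (0:ℤ) ≤ 1), abs_mul, a2, b2]; norm_num
  have p3 : cross (E u) (E w₃) * cross (E v) (E w₃) = 1 ∨
      cross (E u) (E w₃) * cross (E v) (E w₃) = -1 := by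
    rw [← abs_eq (by norm_num : (0:ℤ) ≤ 1), abs_mul, a3, b3]; norm_num
  have hpig : cross (E u) (E w₁) * cross (E v) (E w₁)
        = cross (E u) (E w₂) * cross (E v) (E w₂) ∨
      cross (E u) (E w₁) * cross (E v) (E w₁)
        = cross (E u) (E w₃) * cross (E v) (E w₃) ∨
      cross (E u) (E w₂) * cross (E v) (E w₂)
        = cross (E u) (E w₃) * cross (E v) (E w₃) := by
    rcases p1 with h1' | h1' <;> rcases p2 with h2' | h2' <;> rcases p3 with h3' | h3' <;>
      rw [h1', h2', h3'] <;> norm_num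
  rcases hpig with h | h | h
  · exact Or.inl (eq_of_same_sign u v w₁ w₂ hd a1 b1 a2 b2 h)
  · exact Or.inr (Or.inl (eq_of_same_sign u v w₁ w₃ hd a1 b1 a3 b3 h))
  · exact Or.inr (Or.inr (eq_of_same_sign u v w₂ w₃ hd a2 b2 a3 b3 h))
end

section
/- Let F_2 = ⟨a, b⟩ and g ∈ F_2. Then for y ∈ F_2, the relation C(b^g, y) holds (i.e., there is a basis {b^g, x} of F_2 with ⟨y⟩ = ⟨(b^g)^x⟩) if and only if ⟨y⟩ = ⟨b^{a^δ b^k g}⟩ for some k ∈ ℤ and δ ∈ {1, -1}. -/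
open Subgroup

/-- The 1-conjugacy relation: `C(x, y)` holds if there is `z` such that `{x, z}`
is a basis of `F2` and `⟨y⟩ = ⟨x^z⟩`. -/
def CRel (x y : F2) : Prop :=
  ∃ z : F2, IsBasis x z ∧ zpowers y = zpowers (z⁻¹ * x * z)

namespace OneConj
abbrev X := (Fin 2) × Bool
def invL (x : X) : X := (x.1, !x.2)


def pfun (f g : ℕ → Option ℕ) : ℕ ⊕ ℕ → ℕ ⊕ ℕ
  | .inl s => (f s).elim (.inr s) .inl
  | .inr s => (g s).elim (.inl s) .inr

lemma pfun_comp {f g : ℕ → Option ℕ} (hfg : ∀ x y, f x = some y ↔ g y = some x) :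
    ∀ z, pfun g f (pfun f g z) = z := by
  intro z
  cases z with
  | inl s =>
    cases hf : f s with
    | none => simp [pfun, hf]
    | some t =>
      have hg : g t = some s := (hfg s t).1 hf
      simp [pfun, hf, hg]
  | inr s =>
    cases hg : g s with
    | none => simp [pfun, hg]
    | some t =>
      have hf : f t = some s := (hfg t s).2 hg
      simp [pfun, hg, hf]

def pperm (f g : ℕ → Option ℕ) (hfg : ∀ x y, f x = some y ↔ g y = some x) :
    Equiv.Perm (ℕ ⊕ ℕ) where
  toFun := pfun f g
  invFun := pfun g f
  left_inv := pfun_comp hfg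
  right_inv := pfun_comp (fun x y => (hfg y x).symm)

lemma pperm_apply_of_some {f g : ℕ → Option ℕ} (hfg) {s t : ℕ} (h : f s = some t) :
    pperm f g hfg (Sum.inl s) = Sum.inl t := by
  simp [pperm, pfun, h]

lemma pperm_apply_of_none {f g : ℕ → Option ℕ} (hfg) {s : ℕ} (h : f s = none) :
    pperm f g hfg (Sum.inl s) = Sum.inr s := by
  simp [pperm, pfun, h]



section Graph

variable (p n : ℕ) (lab : ℕ → X)

def nxt (i : ℕ) : ℕ := if i = p + n - 1 then p else i + 1

def M (x : Fin 2) (s t : ℕ) : Prop :=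
  (∃ i, i < p + n ∧ ((lab i = (x, true) ∧ s = nxt p n i ∧ t = i) ∨
      (lab i = (x, false) ∧ s = i ∧ t = nxt p n i))) ∨ (x = 1 ∧ s = 0 ∧ t = 0)

structure Good : Prop where
  hn : 1 ≤ n
  hN : 2 ≤ p + n
  hred : ∀ i, i + 1 < p + n → lab (i + 1) ≠ invL (lab i)
  hjunc : 1 ≤ p → lab (p + n - 1) ≠ lab (p - 1)
  hcyc : lab p ≠ invL (lab (p + n - 1))
  hfirst : (lab 0).1 = 0
  hlast : p = 0 → (lab (p + n - 1)).1 = 0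

variable {p n lab}

lemma nxt_cases (i : ℕ) : nxt p n i = i + 1 ∨ (i = p + n - 1 ∧ nxt p n i = p) := by
  unfold nxt; split_ifs with h
  · exact Or.inr ⟨h, rfl⟩
  · exact Or.inl rfl

lemma hAB (G : Good p n lab) {x : Fin 2} {i j : ℕ} (hi : i < p + n) (hj : j < p + n)
    (hli : lab i = (x, true)) (hlj : lab j = (x, false)) (hij : i = nxt p n j) : False := by
  rcases nxt_cases (p := p) (n := n) j with h | ⟨hj2, h⟩
  · rw [h] at hij
    subst hij
    exact G.hred j hi (by rw [hli, hlj]; rfl)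
  · rw [h] at hij
    subst hij
    subst hj2
    exact G.hcyc (by rw [hli, hlj]; rfl)

lemma hBA (G : Good p n lab) {x : Fin 2} {i j : ℕ} (hi : i < p + n) (hj : j < p + n)
    (hli : lab i = (x, true)) (hlj : lab j = (x, false)) (hij : j = nxt p n i) : False := by
  rcases nxt_cases (p := p) (n := n) i with h | ⟨hi2, h⟩
  · rw [h] at hij
    subst hij
    exact G.hred i hj (by rw [hli, hlj]; rfl)
  · rw [h] at hij
    subst hij
    subst hi2
    exact G.hcyc (by rw [hli, hlj]; rfl)

lemma nxt_eq_zero (G : Good p n lab) {i : ℕ} (h : nxt p n i = 0) : p = 0 ∧ i = p + n - 1 := by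
  have := G.hn
  rcases nxt_cases (p := p) (n := n) i with h2 | ⟨h1, h2⟩ <;> omega

lemma nxt_inj (G : Good p n lab) {i j : ℕ} (hi : i < p + n) (hj : j < p + n)
    (h : nxt p n i = nxt p n j) (hne : i ≠ j) :
    1 ≤ p ∧ ((i = p - 1 ∧ j = p + n - 1) ∨ (i = p + n - 1 ∧ j = p - 1)) := by
  have := G.hn
  unfold nxt at h
  split_ifs at h with h1 h2 h2 <;> omega

lemma not_lab0 (G : Good p n lab) (d : Bool) : lab 0 ≠ (1, d) := by
  intro h
  have := G.hfirst
  rw [h] at this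
  exact absurd this (by norm_num)

lemma not_lablast (G : Good p n lab) (hp : p = 0) (d : Bool) : lab (p + n - 1) ≠ (1, d) := by
  intro h
  have := G.hlast hp
  rw [h] at this
  exact absurd this (by norm_num)

lemma U1 (G : Good p n lab) {x : Fin 2} {s t t' : ℕ} (h1 : M p n lab x s t)
    (h2 : M p n lab x s t') : t = t' := by
  rcases h1 with ⟨i, hi, ⟨hli, hsi, hti⟩ | ⟨hli, hsi, hti⟩⟩ | ⟨hx, hs, ht⟩ <;>
    rcases h2 with ⟨j, hj, ⟨hlj, hsj, htj⟩ | ⟨hlj, hsj, htj⟩⟩ | ⟨hx', hs', ht'⟩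
  · -- A A : s = nxt i = nxt j
    by_cases hij : i = j
    · subst hij; rw [hti, htj]
    · obtain ⟨hp, hc⟩ := nxt_inj G hi hj (hsi.symm.trans hsj) hij
      exfalso
      rcases hc with ⟨rfl, rfl⟩ | ⟨rfl, rfl⟩
      · exact G.hjunc hp (hlj ▸ hli ▸ rfl)
      · exact G.hjunc hp (hli ▸ hlj ▸ rfl)
  · -- A B : j = nxt i
    exact absurd (hsj.symm.trans hsi) (fun h => hBA G hi hj hli hlj h)
  · -- A loop : nxt i = 0
    subst hx'
    obtain ⟨hp, hieq⟩ := nxt_eq_zero G (hsi.symm.trans hs')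
    rw [hieq] at hli
    exact absurd hli (not_lablast G hp true)
  · -- B A : i = nxt j
    exact absurd (hsi.symm.trans hsj) (fun h => hBA G hj hi hlj hli h)
  · -- B B : s = i = j
    have : i = j := hsi.symm.trans hsj
    subst this; rw [hti, htj]
  · -- B loop : s = i = 0
    subst hx'
    rw [hsi.symm.trans hs'] at hli
    exact absurd hli (not_lab0 G false)
  · -- loop A : nxt j = 0
    subst hx
    obtain ⟨hp, hjeq⟩ := nxt_eq_zero G (hsj.symm.trans hs)
    rw [hjeq] at hlj
    exact absurd hlj (not_lablast G hp true)
  · -- loop B : j = 0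
    subst hx
    rw [hsj.symm.trans hs] at hlj
    exact absurd hlj (not_lab0 G false)
  · rw [ht, ht']

lemma U2 (G : Good p n lab) {x : Fin 2} {s s' t : ℕ} (h1 : M p n lab x s t)
    (h2 : M p n lab x s' t) : s = s' := by
  rcases h1 with ⟨i, hi, ⟨hli, hsi, hti⟩ | ⟨hli, hsi, hti⟩⟩ | ⟨hx, hs, ht⟩ <;>
    rcases h2 with ⟨j, hj, ⟨hlj, hsj, htj⟩ | ⟨hlj, hsj, htj⟩⟩ | ⟨hx', hs', ht'⟩
  · -- A A : t = i = j
    have : i = j := hti.symm.trans htj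
    subst this; rw [hsi, hsj]
  · -- A B : i = nxt j
    exact absurd (hti.symm.trans htj) (fun h => hAB G hi hj hli hlj h)
  · -- A loop : t = i = 0
    subst hx'
    rw [hti.symm.trans ht'] at hli
    exact absurd hli (not_lab0 G true)
  · -- B A : j = nxt i
    exact absurd (htj.symm.trans hti) (fun h => hAB G hj hi hlj hli h)
  · -- B B : nxt i = nxt j
    by_cases hij : i = j
    · subst hij; rw [hsi, hsj]
    · obtain ⟨hp, hc⟩ := nxt_inj G hi hj (hti.symm.trans htj) hij
      exfalso
      rcases hc with ⟨rfl, rfl⟩ | ⟨rfl, rfl⟩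
      · exact G.hjunc hp (hlj ▸ hli ▸ rfl)
      · exact G.hjunc hp (hli ▸ hlj ▸ rfl)
  · -- B loop : nxt i = 0
    subst hx'
    obtain ⟨hp, hieq⟩ := nxt_eq_zero G (hti.symm.trans ht')
    rw [hieq] at hli
    exact absurd hli (not_lablast G hp false)
  · -- loop A : j = 0
    subst hx
    rw [htj.symm.trans ht] at hlj
    exact absurd hlj (not_lab0 G true)
  · -- loop B : nxt j = 0
    subst hx
    obtain ⟨hp, hjeq⟩ := nxt_eq_zero G (htj.symm.trans ht)
    rw [hjeq] at hlj
    exact absurd hlj (not_lablast G hp false)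
  · rw [hs, hs']

lemma Mzero (G : Good p n lab) {t : ℕ} (h : M p n lab 0 0 t) : t ≠ 0 := by
  intro rfl_t
  subst rfl_t
  rcases h with ⟨i, hi, ⟨hli, hsi, hti⟩ | ⟨hli, hsi, hti⟩⟩ | ⟨hx, hs, ht⟩
  · -- A : 0 = nxt i and 0 = i
    obtain ⟨hp, hieq⟩ := nxt_eq_zero G hsi.symm
    have := G.hN
    omega
  · -- B : 0 = i, 0 = nxt i
    obtain ⟨hp, hieq⟩ := nxt_eq_zero G hti.symm
    have := G.hN
    omega
  · exact absurd hx (by decide)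


variable (p n lab)

open Classical in
noncomputable def ffun (x : Fin 2) (s : ℕ) : Option ℕ :=
  if h : ∃ t, M p n lab x s t then some h.choose else none

open Classical in
noncomputable def gfun (x : Fin 2) (t : ℕ) : Option ℕ :=
  if h : ∃ s, M p n lab x s t then some h.choose else none

variable {p n lab}

lemma ffun_eq_some (G : Good p n lab) {x : Fin 2} {s t : ℕ} :
    ffun p n lab x s = some t ↔ M p n lab x s t := by
  unfold ffun
  split_ifs with h
  · constructor
    · intro he
      have := h.choose_spec
      rwa [Option.some_inj.1 he] at this
    · intro hm
      exact congrArg some (U1 G h.choose_spec hm)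
  · simp only [false_iff, reduceCtorEq]
    exact fun hm => h ⟨t, hm⟩

lemma gfun_eq_some (G : Good p n lab) {x : Fin 2} {s t : ℕ} :
    gfun p n lab x t = some s ↔ M p n lab x s t := by
  unfold gfun
  split_ifs with h
  · constructor
    · intro he
      have := h.choose_spec
      rwa [Option.some_inj.1 he] at this
    · intro hm
      exact congrArg some (U2 G h.choose_spec hm)
  · simp only [false_iff, reduceCtorEq]
    exact fun hm => h ⟨s, hm⟩

lemma fg (G : Good p n lab) (x : Fin 2) :
    ∀ s t, ffun p n lab x s = some t ↔ gfun p n lab x t = some s := by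
  intro s t
  rw [ffun_eq_some G, gfun_eq_some G]

noncomputable def permOf (G : Good p n lab) (x : Fin 2) : Equiv.Perm (ℕ ⊕ ℕ) :=
  pperm (ffun p n lab x) (gfun p n lab x) (fg G x)

lemma permOf_apply (G : Good p n lab) {x : Fin 2} {s t : ℕ} (h : M p n lab x s t) :
    permOf G x (Sum.inl s) = Sum.inl t :=
  pperm_apply_of_some _ ((ffun_eq_some G).2 h)

lemma permOf_inv_apply (G : Good p n lab) {x : Fin 2} {s t : ℕ} (h : M p n lab x s t) :
    (permOf G x)⁻¹ (Sum.inl t) = Sum.inl s := by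
  rw [← permOf_apply G h, ← Equiv.Perm.mul_apply, inv_mul_cancel, Equiv.Perm.one_apply]

lemma permOf_zero_ne (G : Good p n lab) : permOf G 0 (Sum.inl 0) ≠ Sum.inl 0 := by
  unfold permOf
  cases hf : ffun p n lab 0 0 with
  | none => rw [pperm_apply_of_none _ hf]; simp
  | some t =>
    rw [pperm_apply_of_some _ hf]
    have := Mzero G ((ffun_eq_some G).1 hf)
    simp [this]

end Graph

/-! ### Word evaluation along a path -/

lemma path_eval (Φ : Fin 2 → Equiv.Perm (ℕ ⊕ ℕ)) :
    ∀ (L : List X) (V : ℕ → ℕ ⊕ ℕ),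
      (∀ j (hj : j < L.length),
          ((L.get ⟨j, hj⟩).2 = true → Φ (L.get ⟨j, hj⟩).1 (V (j+1)) = V j) ∧
          ((L.get ⟨j, hj⟩).2 = false → Φ (L.get ⟨j, hj⟩).1 (V j) = V (j+1))) →
      (L.map fun e => cond e.2 (Φ e.1) (Φ e.1)⁻¹).prod (V L.length) = V 0 := by
  intro L
  induction L with
  | nil => intro V _; simp
  | cons e t ih =>
    intro V hstep
    rw [List.map_cons, List.prod_cons, Equiv.Perm.mul_apply]
    have ht : (t.map fun e => cond e.2 (Φ e.1) (Φ e.1)⁻¹).prod (V (e :: t).length) = V 1 := by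
      have := ih (fun j => V (j + 1)) (fun j hj => hstep (j+1) (by simpa using Nat.succ_lt_succ hj))
      simpa using this
    rw [ht]
    have h1 := (hstep 0 (by simp)).1
    have h2 := (hstep 0 (by simp)).2
    have hget : (e :: t).get ⟨0, by simp⟩ = e := rfl
    rw [hget] at h1 h2
    rcases hb : e.2 with _ | _
    · simp only [hb, cond_false]
      rw [← h2 hb, ← Equiv.Perm.mul_apply, inv_mul_cancel, Equiv.Perm.one_apply]
    · simp only [hb, cond_true]
      exact h1 hb


/-! ### Cyclic decomposition -/

lemma invL_ne (x : X) : invL x ≠ x := by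
  cases x with
  | mk a b => simp [invL]

lemma invL_invL (x : X) : invL (invL x) = x := by simp [invL]

def Rr : X → X → Prop := fun u v => v ≠ invL u

lemma rev_map_getElem (l : List X) (k : ℕ) (hk : k < l.length) :
    ((l.map invL).reverse)[k]'(by simpa using hk) = invL (l[l.length - 1 - k]'(by omega)) := by
  rw [List.getElem_reverse (by simpa using hk)]
  rw [List.getElem_map]
  simp only [List.length_map]

lemma cyc_decomp : ∀ (N : ℕ) (L : List X), L.length ≤ N → L.Chain' Rr →
    ∃ c v : List X, L = c ++ v ++ (c.map invL).reverse ∧ (v = [] → c = []) ∧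
      ∀ (hv : v ≠ []), v.head hv ≠ invL (v.getLast hv) := by
  intro N
  induction N with
  | zero =>
    intro L hl _
    have : L = [] := List.length_eq_zero_iff.1 (Nat.le_antisymm hl (Nat.zero_le _))
    exact ⟨[], [], by simp [this], fun _ => rfl, by simp⟩
  | succ N ih =>
    intro L hl hch
    match L with
    | [] => exact ⟨[], [], by simp, fun _ => rfl, by simp⟩
    | [x] =>
      refine ⟨[], [x], by simp, by simp, fun hv => ?_⟩
      simpa using (invL_ne x).symm
    | x :: y :: rest =>
      set t := y :: rest with htdef
      have ht : t ≠ [] := by simp [htdef]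
      by_cases hc : (x :: t).getLast (by simp) = invL x
      · have hlast : t.getLast ht = invL x := by
          rw [← hc]; exact (List.getLast_cons ht).symm
        have hsplit : t.dropLast ++ [invL x] = t := by
          rw [← hlast]; exact List.dropLast_append_getLast ht
        have hmidlen : t.dropLast.length ≤ N := by
          have h2 : (x :: t).length ≤ N + 1 := hl
          simp only [List.length_dropLast]
          simp only [htdef, List.length_cons] at h2 ⊢
          omega
        have hmidch : t.dropLast.Chain' Rr := by
          refine hch.infix ⟨[x], [invL x], ?_⟩
          conv_rhs => rw [← hsplit]
          simp
        obtain ⟨c', v', hdec, himp, hcyc⟩ := ih t.dropLast hmidlen hmidch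
        refine ⟨x :: c', v', ?_, ?_, hcyc⟩
        · conv_lhs => rw [← hsplit]
          rw [hdec]
          simp
        · intro hv'
          exfalso
          have hc' := himp hv'
          rw [hc', hv'] at hdec
          simp at hdec
          rw [hdec] at hsplit
          simp at hsplit
          have h3 : t = [invL x] := hsplit.symm
          rw [h3] at hch
          have := (List.isChain_cons_cons.1 hch).1
          exact this rfl
      · refine ⟨[], x :: t, by simp, by simp, fun hv => ?_⟩
        intro heq
        apply hc
        have h1 : (x :: t).head hv = x := rfl
        rw [h1] at heq
        have h2 := congrArg invL heq
        rw [invL_invL] at h2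
        exact h2.symm

/-! ### The core non-membership lemma -/

set_option maxHeartbeats 1000000 in
lemma core_not_mem (L : List X) (hch : L.Chain' Rr) (hlen : 2 ≤ L.length)
    (hfst : (L[0]'(by omega)).1 = 0)
    (hlst : (L[L.length - 1]'(by omega)).1 = 0) :
    ga ∉ closure {gb, FreeGroup.mk L} := by
  obtain ⟨c, v, hdec, himp, hcv⟩ := cyc_decomp L.length L le_rfl hch
  set p := c.length with hp
  set n := v.length with hn
  have hv : v ≠ [] := by
    intro h
    have hc0 := himp h
    rw [hc0, h] at hdec
    simp at hdec
    rw [hdec] at hlen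
    simp at hlen
  have hn1 : 1 ≤ n := by
    rw [hn]
    exact List.length_pos_iff.2 hv
  have hdec' : L = (c ++ v) ++ (c.map invL).reverse := by rw [hdec]
  have hlenL : L.length = p + n + p := by
    rw [hdec']
    simp only [List.length_append, List.length_reverse, List.length_map]
    try omega
  have hWlen : (c ++ v).length = p + n := by simp [hp, hn]
  set lab : ℕ → X := fun i => L.getD i default with hlab
  have hlabL : ∀ i (h : i < L.length), lab i = L[i]'h := by
    intro i h
    exact List.getD_eq_getElem L default h
  have hlabW : ∀ i, i < p + n → lab i = (c ++ v).getD i default := by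
    intro i h
    simp only [hlab]
    rw [hdec']
    exact List.getD_append _ _ _ _ (by simp only [List.length_append]; omega)
  have hlabc : ∀ i, i < p → lab i = c.getD i default := by
    intro i h
    rw [hlabW i (by omega)]
    exact List.getD_append _ _ _ _ (by omega)
  have hlabv : ∀ i, i < n → lab (p + i) = v.getD i default := by
    intro i h
    rw [hlabW (p + i) (by omega)]
    rw [List.getD_append_right _ _ _ _ (by omega : c.length ≤ p + i)]
    congr 1
    omega
  have hrev : ∀ k, k < p → lab (p + n + k) = invL (lab (p - 1 - k)) := by
    intro k hk
    have h1 : lab (p + n + k) = ((c.map invL).reverse).getD k default := by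
      simp only [hlab]
      rw [hdec']
      rw [List.getD_append_right _ _ _ _ (by simp only [List.length_append]; omega)]
      congr 1
      simp only [List.length_append]
      omega
    rw [h1, List.getD_eq_getElem _ default (by simp; omega), rev_map_getElem c k (by omega)]
    rw [hlabc (p - 1 - k) (by omega), List.getD_eq_getElem _ default (by omega)]
  have hchain : ∀ i, i + 1 < L.length → lab (i+1) ≠ invL (lab i) := by
    intro i h
    have h2 := List.isChain_iff_getElem.1 hch i (by omega)
    rw [hlabL (i+1) (by omega), hlabL i (by omega)]
    simpa [Rr, List.get_eq_getElem] using h2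
  have hN2 : 2 ≤ p + n := by omega
  have hred : ∀ i, i + 1 < p + n → lab (i + 1) ≠ invL (lab i) := by
    intro i h
    exact hchain i (by omega)
  have hjunc : 1 ≤ p → lab (p + n - 1) ≠ lab (p - 1) := by
    intro hp1
    have hL1 : lab (p + n) = invL (lab (p - 1)) := by
      have := hrev 0 (by omega)
      simpa using this
    have hstep := hchain (p + n - 1) (by omega)
    rw [(by omega : p + n - 1 + 1 = p + n), hL1] at hstep
    intro heq
    exact hstep (by rw [heq])
  have hcyc : lab p ≠ invL (lab (p + n - 1)) := by
    have h1 : lab p = v.head hv := by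
      rw [(by omega : p = p + 0), hlabv 0 (by omega), List.getD_eq_getElem _ default (by omega),
        List.head_eq_getElem]
    have h2 : lab (p + n - 1) = v.getLast hv := by
      rw [(by omega : p + n - 1 = p + (n - 1)), hlabv (n-1) (by omega),
        List.getD_eq_getElem _ default (by omega), List.getLast_eq_getElem]
    rw [h1, h2]
    exact hcv hv
  have hfirst : (lab 0).1 = 0 := by
    rw [hlabL 0 (by omega)]
    exact hfst
  have hlst' : (lab (L.length - 1)).1 = 0 := by
    rw [hlabL (L.length - 1) (by omega)]
    exact hlst
  have hlastg : p = 0 → (lab (p + n - 1)).1 = 0 := by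
    intro hp0
    rw [(by omega : p + n - 1 = L.length - 1)]
    exact hlst'
  have G : Good p n lab := ⟨hn1, hN2, hred, hjunc, hcyc, hfirst, hlastg⟩
  -- the homomorphism to permutations
  set Φv : Fin 2 → Equiv.Perm (ℕ ⊕ ℕ) := ![permOf G 0, permOf G 1] with hΦvdef
  have hΦv : ∀ x : Fin 2, Φv x = permOf G x := by
    intro x
    fin_cases x <;> rfl
  set Φ : F2 →* Equiv.Perm (ℕ ⊕ ℕ) := FreeGroup.lift Φv with hΦdef
  set V : ℕ → ℕ ⊕ ℕ := fun j => Sum.inl (if j < p + n then j else 2*p + n - j) with hV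
  have hstep : ∀ j (hj : j < L.length),
      ((L.get ⟨j, hj⟩).2 = true → Φv (L.get ⟨j, hj⟩).1 (V (j+1)) = V j) ∧
      ((L.get ⟨j, hj⟩).2 = false → Φv (L.get ⟨j, hj⟩).1 (V j) = V (j+1)) := by
    intro j hj
    have hgetlab : L.get ⟨j, hj⟩ = lab j := by
      rw [List.get_eq_getElem, hlabL j (by omega)]
    rw [hgetlab]
    by_cases hjN : j < p + n
    · have hVj : V j = Sum.inl j := by simp only [hV]; rw [if_pos hjN]
      have hVj1 : V (j+1) = Sum.inl (nxt p n j) := by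
        simp only [hV]
        unfold nxt
        split_ifs with h1 h2 h2
        · exfalso; omega
        · rfl
        · congr 1
          omega
        · exfalso; omega
      constructor
      · intro hb
        have hlj : lab j = ((lab j).1, true) := by
          rw [← hb]
        have hm : M p n lab (lab j).1 (nxt p n j) j :=
          Or.inl ⟨j, hjN, Or.inl ⟨hlj, rfl, rfl⟩⟩
        rw [hΦv, hVj1, hVj]
        exact permOf_apply G hm
      · intro hb
        have hlj : lab j = ((lab j).1, false) := by
          rw [← hb]
        have hm : M p n lab (lab j).1 j (nxt p n j) :=
          Or.inl ⟨j, hjN, Or.inr ⟨hlj, rfl, rfl⟩⟩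
        rw [hΦv, hVj1, hVj]
        exact permOf_apply G hm
    · -- j in the tail copy of c reversed
      have hj2 : j < 2*p + n := by omega
      set i := 2*p + n - 1 - j with hidef
      have hiP : i < p := by omega
      have hlabj : lab j = invL (lab i) := by
        have := hrev (j - (p + n)) (by omega)
        rw [(by omega : p + n + (j - (p + n)) = j)] at this
        rw [this]
        congr 2
        omega
      have hVj : V j = Sum.inl (i+1) := by
        simp only [hV]; rw [if_neg (by omega)]; congr 1; omega
      have hVj1 : V (j+1) = Sum.inl i := by
        simp only [hV]; rw [if_neg (by omega)]; congr 1; omega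
      have hnxt : nxt p n i = i + 1 := by
        unfold nxt; rw [if_neg (by omega)]
      constructor
      · intro hb
        -- lab j = (x, true), so lab i = (x, false)
        have hli : lab i = ((lab j).1, false) := by
          have h4 := congrArg invL hlabj
          rw [invL_invL] at h4
          rw [← h4]
          simp only [invL]
          rw [hb]
          simp
        have hm : M p n lab (lab j).1 i (nxt p n i) :=
          Or.inl ⟨i, by omega, Or.inr ⟨hli, rfl, rfl⟩⟩
        rw [hΦv, hVj1, hVj, ← hnxt]
        exact permOf_apply G hm
      · intro hb
        have hli : lab i = ((lab j).1, true) := by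
          have h4 := congrArg invL hlabj
          rw [invL_invL] at h4
          rw [← h4]
          simp only [invL]
          rw [hb]
          simp
        have hm : M p n lab (lab j).1 (nxt p n i) i :=
          Or.inl ⟨i, by omega, Or.inl ⟨hli, rfl, rfl⟩⟩
        rw [hΦv, hVj1, hVj, ← hnxt]
        exact permOf_apply G hm
  have heval : Φ (FreeGroup.mk L) (Sum.inl 0) = Sum.inl 0 := by
    have hpe := path_eval Φv L V hstep
    have h0 : V 0 = Sum.inl 0 := by simp only [hV]; rw [if_pos (by omega)]
    have hLl : V L.length = Sum.inl 0 := by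
      simp only [hV]; rw [if_neg (by omega)]; congr 1; omega
    rw [h0, hLl] at hpe
    rw [hΦdef, FreeGroup.lift_mk]
    exact hpe
  have hbfix : Φ gb (Sum.inl 0) = Sum.inl 0 := by
    have h1 : Φ gb = Φv 1 := FreeGroup.lift_apply_of
    rw [h1, hΦv]
    exact permOf_apply G (Or.inr ⟨rfl, rfl, rfl⟩)
  have hafix : Φ ga (Sum.inl 0) ≠ Sum.inl 0 := by
    have h1 : Φ ga = Φv 0 := FreeGroup.lift_apply_of
    rw [h1, hΦv]
    exact permOf_zero_ne G
  intro hmem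
  have hle : closure {gb, FreeGroup.mk L} ≤
      (MulAction.stabilizer (Equiv.Perm (ℕ ⊕ ℕ)) (Sum.inl 0 : ℕ ⊕ ℕ)).comap Φ := by
    rw [closure_le]
    rintro w hw
    simp only [Set.mem_insert_iff, Set.mem_singleton_iff] at hw
    rcases hw with rfl | rfl
    · simp only [SetLike.mem_coe, Subgroup.mem_comap, MulAction.mem_stabilizer_iff,
        Equiv.Perm.smul_def]
      exact hbfix
    · simp only [SetLike.mem_coe, Subgroup.mem_comap, MulAction.mem_stabilizer_iff,
        Equiv.Perm.smul_def]
      exact heval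
  have hst := hle hmem
  simp only [Subgroup.mem_comap, MulAction.mem_stabilizer_iff, Equiv.Perm.smul_def] at hst
  exact hafix hst


/-! ### Reducedness gives Chain' -/

lemma not_chain'_split : ∀ (L : List X), ¬ L.Chain' Rr →
    ∃ (L₁ L₂ : List X) (x : Fin 2) (b : Bool), L = L₁ ++ (x, b) :: (x, !b) :: L₂ := by
  intro L
  induction L with
  | nil => intro h; exact absurd List.isChain_nil h
  | cons u t ih =>
    intro h
    cases t with
    | nil => exact absurd (List.isChain_singleton u) h
    | cons w rest =>
      rw [show List.Chain' Rr (u :: w :: rest) ↔ Rr u w ∧ List.Chain' Rr (w :: rest) from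
        List.isChain_cons_cons] at h
      by_cases hv : Rr u w
      · obtain ⟨L₁, L₂, x, b, hd⟩ := ih (fun hc => h ⟨hv, hc⟩)
        exact ⟨u :: L₁, L₂, x, b, by rw [hd]; rfl⟩
      · simp only [Rr, not_not] at hv
        exact ⟨[], rest, u.1, u.2, by rw [hv]; rfl⟩

lemma chain'_of_reduce (L : List X) (h : FreeGroup.reduce L = L) : L.Chain' Rr := by
  by_contra hc
  obtain ⟨L₁, L₂, x, b, hd⟩ := not_chain'_split L hc
  exact FreeGroup.reduce.not (by rw [h, hd] : FreeGroup.reduce L = L₁ ++ (x, b) :: (x, !b) :: L₂)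

/-! ### ga is not in ⟨gb⟩ -/

lemma not_mem_b_one : ga ∉ closure {gb, (1 : F2)} := by
  intro h
  set σ : F2 →* Multiplicative ℤ := FreeGroup.lift ![Multiplicative.ofAdd 1, 1] with hσ
  have hσb : σ gb = 1 := by
    rw [hσ]
    show FreeGroup.lift _ (FreeGroup.of 1) = 1
    rw [FreeGroup.lift_apply_of]
    rfl
  have hσa : σ ga = Multiplicative.ofAdd 1 := by
    rw [hσ]
    show FreeGroup.lift _ (FreeGroup.of 0) = _
    rw [FreeGroup.lift_apply_of]
    rfl
  have hle : closure {gb, (1:F2)} ≤ σ.ker := by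
    rw [closure_le]
    rintro w hw
    simp only [Set.mem_insert_iff, Set.mem_singleton_iff] at hw
    rcases hw with rfl | rfl
    · simp [SetLike.mem_coe, MonoidHom.mem_ker, hσb]
    · simp [SetLike.mem_coe, MonoidHom.mem_ker]
  have h2 := hle h
  rw [MonoidHom.mem_ker, hσa] at h2
  exact absurd h2 (by decide)

/-! ### Single letter values -/

lemma mk_single_true (x : Fin 2) : FreeGroup.mk [(x, true)] = FreeGroup.of x := rfl

lemma mk_single_false (x : Fin 2) : FreeGroup.mk [(x, false)] = (FreeGroup.of x)⁻¹ := by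
  rw [← mk_single_true, FreeGroup.inv_mk]
  rfl

lemma mk_single_zpow (x : Fin 2) (d : Bool) :
    FreeGroup.mk [(x, d)] = (FreeGroup.of x) ^ (cond d 1 (-1) : ℤ) := by
  cases d
  · rw [mk_single_false]; simp
  · rw [mk_single_true]; simp

lemma closure_pair_congr {w w' : F2} (h1 : w ∈ closure {gb, w'}) (h2 : w' ∈ closure {gb, w}) :
    closure {gb, w} = closure {gb, w'} := by
  apply le_antisymm
  · rw [closure_le]
    rintro u hu
    simp only [Set.mem_insert_iff, Set.mem_singleton_iff] at hu
    rcases hu with rfl | rfl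
    · exact subset_closure (by simp)
    · exact h1
  · rw [closure_le]
    rintro u hu
    simp only [Set.mem_insert_iff, Set.mem_singleton_iff] at hu
    rcases hu with rfl | rfl
    · exact subset_closure (by simp)
    · exact h2

lemma gb_mem (w : F2) : gb ∈ closure {gb, w} := subset_closure (by simp)

lemma mem_self (w : F2) : w ∈ closure {gb, w} := subset_closure (by simp)

lemma closure_shift_left (e : ℤ) (w : F2) :
    closure {gb, gb ^ e * w} = closure {gb, w} := by
  apply closure_pair_congr
  · exact mul_mem (zpow_mem (gb_mem _) e) (mem_self _)
  · have hm := mul_mem (zpow_mem (gb_mem (gb ^ e * w)) (-e)) (mem_self (gb ^ e * w))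
    simpa using hm

lemma closure_shift_right (e : ℤ) (w : F2) :
    closure {gb, w * gb ^ e} = closure {gb, w} := by
  apply closure_pair_congr
  · exact mul_mem (mem_self _) (zpow_mem (gb_mem _) e)
  · have hm := mul_mem (mem_self (w * gb ^ e)) (zpow_mem (gb_mem (w * gb ^ e)) (-e))
    simpa using hm

/-! ### The crux classification -/

lemma crux : ∀ (B : ℕ) (L : List X), L.length ≤ B → L.Chain' Rr →
    ga ∈ closure {gb, FreeGroup.mk L} →
    ∃ (m k δ : ℤ), (δ = 1 ∨ δ = -1) ∧ FreeGroup.mk L = gb ^ m * ga ^ δ * gb ^ k := by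
  intro B
  induction B with
  | zero =>
    intro L hl _ hmem
    have hnil : L = [] := List.length_eq_zero_iff.1 (Nat.le_antisymm hl (Nat.zero_le _))
    subst hnil
    rw [show FreeGroup.mk ([] : List X) = 1 from rfl] at hmem
    exact absurd hmem not_mem_b_one
  | succ B ih =>
    intro L hl hch hmem
    cases hLc : L with
    | nil =>
      subst hLc
      rw [show FreeGroup.mk ([] : List X) = 1 from rfl] at hmem
      exact absurd hmem not_mem_b_one
    | cons e L' =>
      subst hLc
      by_cases hb1 : e.1 = 1
      · -- strip leading b-letter
        have he : e = ((1:Fin 2), e.2) := by rw [← hb1]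
        have hmk : FreeGroup.mk (e :: L') = gb ^ (cond e.2 1 (-1) : ℤ) * FreeGroup.mk L' := by
          conv_lhs => rw [he]
          rw [show ((1:Fin 2), e.2) :: L' = [((1:Fin 2), e.2)] ++ L' from rfl]
          rw [← FreeGroup.mul_mk, mk_single_zpow]
          rfl
        rw [hmk, closure_shift_left] at hmem
        obtain ⟨m, k, δ, hδ, heq⟩ := ih L' (by simp at hl; omega) hch.tail hmem
        refine ⟨(cond e.2 1 (-1) : ℤ) + m, k, δ, hδ, ?_⟩
        rw [hmk, heq, zpow_add]
        group
      · by_cases hb2 : ((e :: L').getLast (by simp)).1 = 1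
        · -- strip trailing b-letter
          set lst := (e :: L').getLast (by simp) with hlst
          have hsplit : (e :: L').dropLast ++ [lst] = e :: L' :=
            List.dropLast_append_getLast _
          have hmk : FreeGroup.mk (e :: L') =
              FreeGroup.mk ((e :: L').dropLast) * gb ^ (cond lst.2 1 (-1) : ℤ) := by
            conv_lhs => rw [← hsplit]
            rw [← FreeGroup.mul_mk]
            congr 1
            have hl2 : lst = ((1:Fin 2), lst.2) := by rw [← hb2]
            rw [hl2, mk_single_zpow]
            rfl
          rw [hmk, closure_shift_right] at hmem
          obtain ⟨m, k, δ, hδ, heq⟩ := ih ((e :: L').dropLast)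
            (by simp only [List.length_dropLast, List.length_cons]; simp at hl; omega)
            (hch.prefix (List.dropLast_prefix _)) hmem
          refine ⟨m, k + (cond lst.2 1 (-1) : ℤ), δ, hδ, ?_⟩
          rw [hmk, heq, zpow_add]
          group
        · -- first letter is a-type, last letter is a-type
          have hb0 : e.1 = 0 := by
            have h2 := e.1.isLt
            have h3 : e.1.val ≠ 1 := fun hh => hb1 (Fin.ext hh)
            exact Fin.ext (by omega)
          cases hL' : L' with
          | nil =>
            subst hL'
            cases hd : e.2 with
            | false =>
              refine ⟨0, 0, -1, Or.inr rfl, ?_⟩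
              have he : e = ((0 : Fin 2), false) := by
                rw [← hb0, ← hd]
              rw [he, mk_single_false]
              show (ga)⁻¹ = _
              group
            | true =>
              refine ⟨0, 0, 1, Or.inl rfl, ?_⟩
              have he : e = ((0 : Fin 2), true) := by
                rw [← hb0, ← hd]
              rw [he, mk_single_true]
              show ga = _
              group
          | cons f L'' =>
            subst hL'
            exfalso
            refine core_not_mem (e :: f :: L'') hch (by simp) ?_ ?_ hmem
            · exact hb0
            · have hlast0 : ((e :: f :: L'').getLast (by simp)).1 = 0 := by
                have h2 := ((e :: f :: L'').getLast (by simp)).1.isLt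
                have h3 : ((e :: f :: L'').getLast (by simp)).1.val ≠ 1 :=
                  fun hh => hb2 (Fin.ext hh)
                exact Fin.ext (by omega)
              rw [← List.getLast_eq_getElem]
              exact hlast0

lemma crux' (w : F2) (h : ga ∈ closure {gb, w}) :
    ∃ (m k δ : ℤ), (δ = 1 ∨ δ = -1) ∧ w = gb ^ m * ga ^ δ * gb ^ k := by
  have hch : w.toWord.Chain' Rr := chain'_of_reduce _ (FreeGroup.reduce_toWord w)
  have h2 := crux w.toWord.length w.toWord le_rfl hch (by rwa [FreeGroup.mk_toWord])
  rwa [FreeGroup.mk_toWord] at h2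


/-! ### The standard automorphisms -/

def theta (δ k : ℤ) : F2 →* F2 := FreeGroup.lift ![gb, ga ^ δ * gb ^ k]

def thetaInv (δ k : ℤ) : F2 →* F2 := FreeGroup.lift ![(gb * ga ^ (-k)) ^ δ, ga]

lemma theta_bij (δ k : ℤ) (hδ : δ = 1 ∨ δ = -1) : Function.Bijective (theta δ k) := by
  have h1 : (thetaInv δ k).comp (theta δ k) = MonoidHom.id F2 := by
    apply FreeGroup.ext_hom
    intro x
    fin_cases x
    · simp [theta, thetaInv, ga, gb]
    · rcases hδ with rfl | rfl <;>
        simp [theta, thetaInv, ga, gb] <;> group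
  have h2 : (theta δ k).comp (thetaInv δ k) = MonoidHom.id F2 := by
    apply FreeGroup.ext_hom
    intro x
    fin_cases x
    · rcases hδ with rfl | rfl <;>
        simp [theta, thetaInv, ga, gb] <;> group
    · simp [theta, thetaInv, ga, gb]
  exact Function.bijective_iff_has_inverse.2
    ⟨thetaInv δ k,
     fun x => by simpa using DFunLike.congr_fun h1 x,
     fun x => by simpa using DFunLike.congr_fun h2 x⟩

lemma isBasis_conj (g : F2) (δ k : ℤ) (hδ : δ = 1 ∨ δ = -1) :
    Function.Bijective
      (FreeGroup.lift ![g⁻¹ * gb * g, g⁻¹ * (ga ^ δ * gb ^ k) * g] : F2 →* F2) := by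
  have hcomp : (FreeGroup.lift ![g⁻¹ * gb * g, g⁻¹ * (ga ^ δ * gb ^ k) * g] : F2 →* F2)
      = (MulAut.conj g⁻¹).toMonoidHom.comp (theta δ k) := by
    apply FreeGroup.ext_hom
    intro x
    fin_cases x <;> simp [theta, MulAut.conj, ga, gb] <;> group
  rw [hcomp, MonoidHom.coe_comp]
  exact Function.Bijective.comp (MulAut.conj g⁻¹).bijective (theta_bij δ k hδ)

lemma range_pair (x z : F2) : Set.range ![x, z] = {x, z} := by
  ext u
  constructor
  · rintro ⟨i, rfl⟩
    fin_cases i <;> simp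
  · rintro (rfl | rfl)
    exacts [⟨0, rfl⟩, ⟨1, rfl⟩]

end OneConj

open OneConj in
/-- For `g ∈ F2`, `C(b^g, y)` holds iff `⟨y⟩ = ⟨b^{a^δ b^k g}⟩` for some `k ∈ ℤ`,
`δ ∈ {1, -1}`. -/
theorem one_conjugates_of_conjugate_of_b (g y : F2) :
    CRel (g⁻¹ * gb * g) y ↔
      ∃ (k δ : ℤ), (δ = 1 ∨ δ = -1) ∧
        zpowers y = zpowers ((ga ^ δ * gb ^ k * g)⁻¹ * gb * (ga ^ δ * gb ^ k * g)) := by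
  constructor
  · rintro ⟨z, hbasis, hzp⟩
    have hsurj : Function.Surjective (FreeGroup.lift ![g⁻¹ * gb * g, z] : F2 →* F2) := hbasis.2
    have htop : closure {g⁻¹ * gb * g, z} = ⊤ := by
      rw [← range_pair, ← FreeGroup.range_lift_eq_closure]
      exact MonoidHom.range_eq_top_of_surjective _ hsurj
    have hconjtop : closure {gb, g * z * g⁻¹} = ⊤ := by
      have hmap := MonoidHom.map_closure (MulAut.conj g).toMonoidHom
        ({g⁻¹ * gb * g, z} : Set F2)
      have himg : ((MulAut.conj g).toMonoidHom : F2 → F2) '' {g⁻¹ * gb * g, z}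
          = {gb, g * z * g⁻¹} := by
        rw [Set.image_pair]
        have e1 : (MulAut.conj g).toMonoidHom (g⁻¹ * gb * g) = gb := by
          simp [MulAut.conj]
          group
        have e2 : (MulAut.conj g).toMonoidHom z = g * z * g⁻¹ := by
          simp [MulAut.conj]
        rw [e1, e2]
      rw [himg, htop] at hmap
      rw [← hmap]
      exact (Subgroup.map_top_of_surjective _ (MulAut.conj g).surjective)
    have hmem : ga ∈ closure {gb, g * z * g⁻¹} := by
      rw [hconjtop]
      trivial
    obtain ⟨m, k, δ, hδ, heq⟩ := crux' _ hmem
    refine ⟨k, δ, hδ, ?_⟩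
    rw [hzp]
    have hz : z = g⁻¹ * (gb ^ m * ga ^ δ * gb ^ k) * g := by
      rw [← heq]
      group
    congr 1
    rw [hz]
    group
  · rintro ⟨k, δ, hδ, hzp⟩
    refine ⟨g⁻¹ * (ga ^ δ * gb ^ k) * g, isBasis_conj g δ k hδ, ?_⟩
    rw [hzp]
    congr 1
    group
end

section
/- Let F_2 = ⟨a, b⟩. The automorphism group of F_2 acts transitively on ordered pairs (x, y) of primitive cyclic subgroups with C(x, y), i.e., on 1-conjugacy edges: given bases {a,b}, {c,d} of F_2 and integers m, k with signs δ_1, δ_2 ∈ {±1}, there is an automorphism of F_2 sending the pair (⟨b⟩, ⟨b^{a^{δ_1} b^m}⟩) to (⟨d⟩, ⟨d^{c^{δ_2} d^k}⟩). -/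
open Subgroup

lemma hom_ext_of_basis {a b : F2} (hab : IsBasis a b)
    (f g : F2 →* F2) (h1 : f a = g a) (h2 : f b = g b) : f = g := by
  have key : f.comp (FreeGroup.lift ![a, b]) = g.comp (FreeGroup.lift ![a, b]) := by
    apply FreeGroup.ext_hom
    intro i
    fin_cases i <;> simp [h1, h2]
  refine MonoidHom.ext fun x => ?_
  obtain ⟨y, rfl⟩ := hab.2 x
  exact DFunLike.congr_fun key y

noncomputable def basisHom {a b : F2} (hab : IsBasis a b) (u v : F2) : F2 →* F2 :=
  (FreeGroup.lift ![u, v]).comp (MulEquiv.ofBijective _ hab).symm.toMonoidHom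

lemma basisHom_fst {a b : F2} (hab : IsBasis a b) (u v : F2) :
    basisHom hab u v a = u := by
  have : (MulEquiv.ofBijective _ hab).symm a = FreeGroup.of 0 := by
    rw [MulEquiv.symm_apply_eq]
    change a = FreeGroup.lift ![a, b] (FreeGroup.of 0); simp
  simp [basisHom, this]

lemma basisHom_snd {a b : F2} (hab : IsBasis a b) (u v : F2) :
    basisHom hab u v b = v := by
  have : (MulEquiv.ofBijective _ hab).symm b = FreeGroup.of 1 := by
    rw [MulEquiv.symm_apply_eq]
    change b = FreeGroup.lift ![a, b] (FreeGroup.of 1); simp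
  simp [basisHom, this]

lemma main_aux (a b c d : F2) (hab : IsBasis a b) (hcd : IsBasis c d)
    (u v : F2)
    (h1 : ∀ (f : F2 →* F2), f c = v → f d = b → f u = a)
    (h2 : ∀ (f : F2 →* F2), f a = u → f b = d → f v = c)
    (w w' : F2) (hw : ∀ (f : F2 →* F2), f a = u → f b = d → f w = w') :
    ∃ σ : F2 ≃* F2,
      Subgroup.map σ.toMonoidHom (zpowers b) = zpowers d ∧
      Subgroup.map σ.toMonoidHom (zpowers (w⁻¹ * b * w)) = zpowers (w'⁻¹ * d * w') := by
  set f := basisHom hab u d with hf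
  set g := basisHom hcd v b with hg
  have hfa : f a = u := basisHom_fst hab u d
  have hfb : f b = d := basisHom_snd hab u d
  have hgc : g c = v := basisHom_fst hcd v b
  have hgd : g d = b := basisHom_snd hcd v b
  have hgf : g.comp f = MonoidHom.id F2 := by
    apply hom_ext_of_basis hab
    · simpa [hfa] using h1 g hgc hgd
    · simp [hfb, hgd]
  have hfg : f.comp g = MonoidHom.id F2 := by
    apply hom_ext_of_basis hcd
    · simpa [hgc] using h2 f hfa hfb
    · simp [hgd, hfb]
  have hbij : Function.Bijective f := by
    refine Function.bijective_iff_has_inverse.2 ⟨g, ?_, ?_⟩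
    · intro x; exact DFunLike.congr_fun hgf x
    · intro x; exact DFunLike.congr_fun hfg x
  refine ⟨MulEquiv.ofBijective f hbij, ?_, ?_⟩
  · have : (MulEquiv.ofBijective f hbij).toMonoidHom = f := rfl
    rw [this, MonoidHom.map_zpowers, hfb]
  · have : (MulEquiv.ofBijective f hbij).toMonoidHom = f := rfl
    rw [this, MonoidHom.map_zpowers]
    congr 1
    simp [map_mul, hfb, hw f hfa hfb]

/-- `Aut(F2)` acts transitively on 1-conjugacy edges: given bases `{a, b}` and
`{c, d}` of `F2` and `m, k ∈ ℤ`, `δ₁, δ₂ ∈ {±1}`, some automorphism sends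
`(⟨b⟩, ⟨b^{a^{δ₁} b^m}⟩)` to `(⟨d⟩, ⟨d^{c^{δ₂} d^k}⟩)`. -/
theorem aut_transitive_on_C_edges (a b c d : F2)
    (hab : IsBasis a b) (hcd : IsBasis c d) (m k δ₁ δ₂ : ℤ)
    (hδ₁ : δ₁ = 1 ∨ δ₁ = -1) (hδ₂ : δ₂ = 1 ∨ δ₂ = -1) :
    ∃ σ : F2 ≃* F2,
      Subgroup.map σ.toMonoidHom (zpowers b) = zpowers d ∧
      Subgroup.map σ.toMonoidHom
          (zpowers ((a ^ δ₁ * b ^ m)⁻¹ * b * (a ^ δ₁ * b ^ m)))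
        = zpowers ((c ^ δ₂ * d ^ k)⁻¹ * d * (c ^ δ₂ * d ^ k)) := by
  rcases hδ₁ with rfl | rfl <;> rcases hδ₂ with rfl | rfl
  · exact main_aux a b c d hab hcd (c * d ^ (k - m)) (a * b ^ (m - k))
      (fun f h1 h2 => by simp only [map_mul, map_inv, map_zpow, h1, h2]; group)
      (fun f h1 h2 => by simp only [map_mul, map_inv, map_zpow, h1, h2]; group)
      _ _ (fun f h1 h2 => by simp only [map_mul, map_inv, map_zpow, h1, h2]; group)
  · exact main_aux a b c d hab hcd (c⁻¹ * d ^ (k - m)) (b ^ (k - m) * a⁻¹)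
      (fun f h1 h2 => by simp only [map_mul, map_inv, map_zpow, h1, h2]; group)
      (fun f h1 h2 => by simp only [map_mul, map_inv, map_zpow, h1, h2]; group)
      _ _ (fun f h1 h2 => by simp only [map_mul, map_inv, map_zpow, h1, h2]; group)
  · exact main_aux a b c d hab hcd (d ^ (m - k) * c⁻¹) (a⁻¹ * b ^ (m - k))
      (fun f h1 h2 => by simp only [map_mul, map_inv, map_zpow, h1, h2]; group)
      (fun f h1 h2 => by simp only [map_mul, map_inv, map_zpow, h1, h2]; group)
      _ _ (fun f h1 h2 => by simp only [map_mul, map_inv, map_zpow, h1, h2]; group)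
  · exact main_aux a b c d hab hcd (d ^ (m - k) * c) (b ^ (k - m) * a)
      (fun f h1 h2 => by simp only [map_mul, map_inv, map_zpow, h1, h2]; group)
      (fun f h1 h2 => by simp only [map_mul, map_inv, map_zpow, h1, h2]; group)
      _ _ (fun f h1 h2 => by simp only [map_mul, map_inv, map_zpow, h1, h2]; group)
end

section
/- The stabilizer in Aut(F_2) of an ordered edge (⟨a⟩, ⟨b⟩) of AF_2 (where {a,b} is a basis) is isomorphic to ℤ/2 × ℤ/2, generated by the automorphisms a ↦ a^{-1}, b ↦ b and a ↦ a, b ↦ b^{-1}. -/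
open Subgroup Pointwise

/-- The stabilizer in `Aut(F2)` of the ordered edge `(⟨a⟩, ⟨b⟩)` of `AF₂`. -/
def edgeStab : Subgroup (MulAut F2) :=
  MulAction.stabilizer (MulAut F2)
    ((zpowers ga, zpowers gb) : Subgroup F2 × Subgroup F2)

-- test area
def sHom : F2 →* F2 := FreeGroup.lift ![ga⁻¹, gb]
def tHom : F2 →* F2 := FreeGroup.lift ![ga, gb⁻¹]

lemma sHom_invol : sHom.comp sHom = MonoidHom.id F2 := by
  apply FreeGroup.ext_hom; intro i; fin_cases i <;> simp [sHom, ga, gb]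

lemma tHom_invol : tHom.comp tHom = MonoidHom.id F2 := by
  apply FreeGroup.ext_hom; intro i; fin_cases i <;> simp [tHom, ga, gb]

def sAut : MulAut F2 := MonoidHom.toMulEquiv sHom sHom sHom_invol sHom_invol
def tAut : MulAut F2 := MonoidHom.toMulEquiv tHom tHom tHom_invol tHom_invol

lemma sAut_ga : sAut ga = ga⁻¹ := by simp [sAut, sHom, ga]
lemma sAut_gb : sAut gb = gb := by simp [sAut, sHom, gb]
lemma tAut_ga : tAut ga = ga := by simp [tAut, tHom, ga]
lemma tAut_gb : tAut gb = gb⁻¹ := by simp [tAut, tHom, gb]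

lemma smul_zpowers (φ : MulAut F2) (g : F2) : φ • zpowers g = zpowers (φ g) := by
  rw [Subgroup.pointwise_smul_def]
  exact MonoidHom.map_zpowers (MulDistribMulAction.toMonoidEnd (MulAut F2) F2 φ : F2 →* F2) g

lemma sAut_mem : sAut ∈ edgeStab := by
  show _ • _ = _
  rw [Prod.smul_def]
  simp [smul_zpowers, sAut_ga, sAut_gb, zpowers_inv]

lemma tAut_mem : tAut ∈ edgeStab := by
  show _ • _ = _
  rw [Prod.smul_def]
  simp [smul_zpowers, tAut_ga, tAut_gb, zpowers_inv]

def pa : F2 →* Multiplicative ℤ := FreeGroup.lift ![Multiplicative.ofAdd 1, 1]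
def pb : F2 →* Multiplicative ℤ := FreeGroup.lift ![1, Multiplicative.ofAdd 1]

lemma pa_ga_zpow (k : ℤ) : pa (ga ^ k) = Multiplicative.ofAdd k := by
  rw [map_zpow]
  simp [pa, ga, ← ofAdd_zsmul]

lemma pb_gb_zpow (k : ℤ) : pb (gb ^ k) = Multiplicative.ofAdd k := by
  rw [map_zpow]
  simp [pb, gb, ← ofAdd_zsmul]

lemma ga_zpow_inj {k l : ℤ} (h : ga ^ k = ga ^ l) : k = l := by
  have := congrArg pa h
  rw [pa_ga_zpow, pa_ga_zpow] at this
  exact Multiplicative.ofAdd.injective this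

lemma gb_zpow_inj {k l : ℤ} (h : gb ^ k = gb ^ l) : k = l := by
  have := congrArg pb h
  rw [pb_gb_zpow, pb_gb_zpow] at this
  exact Multiplicative.ofAdd.injective this

lemma classify_gen {φ : MulAut F2} (g : F2)
    (hinj : ∀ {k l : ℤ}, g ^ k = g ^ l → k = l)
    (h : zpowers (φ g) = zpowers g) : φ g = g ∨ φ g = g⁻¹ := by
  obtain ⟨n, hn⟩ := mem_zpowers_iff.mp (h ▸ mem_zpowers (φ g))
  obtain ⟨m, hm⟩ := mem_zpowers_iff.mp (h ▸ mem_zpowers g : g ∈ zpowers (φ g))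
  rw [← hn, ← zpow_mul] at hm
  have hnm : n * m = 1 := hinj (by rw [hm, zpow_one])
  rcases Int.mul_eq_one_iff_eq_one_or_neg_one.mp hnm with ⟨h1, _⟩ | ⟨h1, _⟩
  · left; rw [← hn, h1, zpow_one]
  · right; rw [← hn, h1, zpow_neg_one]

lemma classify {φ : MulAut F2} (h : φ ∈ edgeStab) :
    (φ ga = ga ∨ φ ga = ga⁻¹) ∧ (φ gb = gb ∨ φ gb = gb⁻¹) := by
  have h' : (φ • zpowers ga, φ • zpowers gb) = ((zpowers ga : Subgroup F2), zpowers gb) := by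
    rw [← Prod.smul_mk]; exact h
  rw [Prod.mk.injEq] at h'
  obtain ⟨h1, h2⟩ := h'
  rw [smul_zpowers] at h1 h2
  exact ⟨classify_gen ga (fun h => ga_zpow_inj h) h1,
    classify_gen gb (fun h => gb_zpow_inj h) h2⟩

lemma aut_ext {φ ψ : MulAut F2} (h0 : φ ga = ψ ga) (h1 : φ gb = ψ gb) : φ = ψ := by
  have : φ.toMonoidHom = ψ.toMonoidHom := by
    apply FreeGroup.ext_hom
    intro i; fin_cases i
    · exact h0
    · exact h1
  exact MulEquiv.toMonoidHom_injective this

lemma ga_ne_inv : ga⁻¹ ≠ ga := fun h => by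
  have := ga_zpow_inj (k := -1) (l := 1) (by simpa using h)
  omega

lemma gb_ne_inv : gb⁻¹ ≠ gb := fun h => by
  have := gb_zpow_inj (k := -1) (l := 1) (by simpa using h)
  omega

lemma sAut_sq : sAut * sAut = 1 := by
  apply aut_ext <;>
    simp [MulAut.mul_apply, sAut_ga, sAut_gb, MulAut.one_apply]

lemma tAut_sq : tAut * tAut = 1 := by
  apply aut_ext <;>
    simp [MulAut.mul_apply, tAut_ga, tAut_gb, MulAut.one_apply]

lemma st_comm : Commute sAut tAut := by
  apply aut_ext <;>
    simp [MulAut.mul_apply, sAut_ga, sAut_gb, tAut_ga, tAut_gb]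

lemma st_ga : (sAut * tAut) ga = ga⁻¹ := by simp [MulAut.mul_apply, tAut_ga, sAut_ga]
lemma st_gb : (sAut * tAut) gb = gb⁻¹ := by simp [MulAut.mul_apply, tAut_gb, sAut_gb]

/-- The four possible elements. -/
lemma edgeStab_cases {φ : MulAut F2} (h : φ ∈ edgeStab) :
    φ = 1 ∨ φ = sAut ∨ φ = tAut ∨ φ = sAut * tAut := by
  obtain ⟨ha | ha, hb | hb⟩ := classify h
  · exact Or.inl (aut_ext (by simp [ha]) (by simp [hb]))
  · exact Or.inr (Or.inr (Or.inl (aut_ext (by simp [ha, tAut_ga]) (by simp [hb, tAut_gb]))))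
  · exact Or.inr (Or.inl (aut_ext (by simp [ha, sAut_ga]) (by simp [hb, sAut_gb])))
  · exact Or.inr (Or.inr (Or.inr (aut_ext (by simp [ha, MulAut.mul_apply, tAut_ga, sAut_ga]) (by simp [hb, MulAut.mul_apply, tAut_gb, sAut_gb]))))

lemma closure_eq : Subgroup.closure {sAut, tAut} = edgeStab := by
  apply le_antisymm
  · rw [Subgroup.closure_le]
    rintro x (rfl | rfl)
    · exact sAut_mem
    · exact tAut_mem
  · intro φ hφ
    rcases edgeStab_cases hφ with rfl | rfl | rfl | rfl
    · exact one_mem _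
    · exact Subgroup.subset_closure (by left; rfl)
    · exact Subgroup.subset_closure (by right; rfl)
    · exact mul_mem (Subgroup.subset_closure (by left; rfl))
        (Subgroup.subset_closure (by right; rfl))

def eHom : Multiplicative (ZMod 2) × Multiplicative (ZMod 2) →* MulAut F2 where
  toFun p := sAut ^ p.1.toAdd.val * tAut ^ p.2.toAdd.val
  map_one' := by simp
  map_mul' p q := by
    obtain ⟨x, y⟩ := p; obtain ⟨z, w⟩ := q
    show sAut ^ ((x * z).toAdd).val * tAut ^ ((y * w).toAdd).val = _
    rw [toAdd_mul, toAdd_mul, ZMod.val_add, ZMod.val_add,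
      ← pow_eq_pow_mod _ (by rw [pow_two]; exact sAut_sq),
      ← pow_eq_pow_mod _ (by rw [pow_two]; exact tAut_sq),
      pow_add, pow_add]
    have h := (st_comm.pow_pow z.toAdd.val y.toAdd.val).eq
    show _ = sAut ^ x.toAdd.val * tAut ^ y.toAdd.val * (sAut ^ z.toAdd.val * tAut ^ w.toAdd.val)
    rw [mul_assoc, mul_assoc, ← mul_assoc (sAut ^ z.toAdd.val), h, mul_assoc]

lemma eHom_mem (p : Multiplicative (ZMod 2) × Multiplicative (ZMod 2)) : eHom p ∈ edgeStab :=
  mul_mem (pow_mem sAut_mem _) (pow_mem tAut_mem _)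

lemma val01 : ((0 : ZMod 2).val = 0) ∧ ((1 : ZMod 2).val = 1) := by decide

lemma eHom_s : eHom (Multiplicative.ofAdd 1, 1) = sAut := by
  show sAut ^ (1 : ZMod 2).val * tAut ^ (0 : ZMod 2).val = sAut
  rw [val01.1, val01.2, pow_one, pow_zero, mul_one]

lemma eHom_t : eHom (1, Multiplicative.ofAdd 1) = tAut := by
  show sAut ^ (0 : ZMod 2).val * tAut ^ (1 : ZMod 2).val = tAut
  rw [val01.1, val01.2, pow_one, pow_zero, one_mul]

lemma eHom_st : eHom (Multiplicative.ofAdd 1, Multiplicative.ofAdd 1) = sAut * tAut := by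
  show sAut ^ (1 : ZMod 2).val * tAut ^ (1 : ZMod 2).val = sAut * tAut
  rw [val01.2, pow_one, pow_one]

lemma zmod2_cases : ∀ z : ZMod 2, z = 0 ∨ z = 1 := by decide

lemma eHom_inj : Function.Injective eHom := by
  rw [injective_iff_map_eq_one]
  rintro ⟨x, y⟩ h
  rcases zmod2_cases x.toAdd with hx | hx <;> rcases zmod2_cases y.toAdd with hy | hy
  · ext
    · exact hx
    · exact hy
  · exfalso
    have h1 : eHom (x, y) = tAut := by
      show sAut ^ x.toAdd.val * tAut ^ y.toAdd.val = tAut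
      rw [hx, hy, val01.1, val01.2, pow_one, pow_zero, one_mul]
    rw [h1] at h
    exact gb_ne_inv (by rw [← tAut_gb, h, MulAut.one_apply])
  · exfalso
    have h1 : eHom (x, y) = sAut := by
      show sAut ^ x.toAdd.val * tAut ^ y.toAdd.val = sAut
      rw [hx, hy, val01.1, val01.2, pow_one, pow_zero, mul_one]
    rw [h1] at h
    exact ga_ne_inv (by rw [← sAut_ga, h, MulAut.one_apply])
  · exfalso
    have h1 : eHom (x, y) = sAut * tAut := by
      show sAut ^ x.toAdd.val * tAut ^ y.toAdd.val = sAut * tAut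
      rw [hx, hy, val01.2, pow_one, pow_one]
    rw [h1] at h
    exact ga_ne_inv (by rw [← st_ga, h, MulAut.one_apply])

noncomputable def eIso : edgeStab ≃* Multiplicative (ZMod 2) × Multiplicative (ZMod 2) := by
  refine (MulEquiv.ofBijective (eHom.codRestrict edgeStab eHom_mem) ⟨?_, ?_⟩).symm
  · intro p q hpq
    exact eHom_inj (congrArg Subtype.val hpq)
  · rintro ⟨φ, hφ⟩
    rcases edgeStab_cases hφ with rfl | rfl | rfl | rfl
    · exact ⟨1, Subtype.ext (map_one eHom)⟩
    · exact ⟨(Multiplicative.ofAdd 1, 1), Subtype.ext eHom_s⟩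
    · exact ⟨(1, Multiplicative.ofAdd 1), Subtype.ext eHom_t⟩
    · exact ⟨(Multiplicative.ofAdd 1, Multiplicative.ofAdd 1), Subtype.ext eHom_st⟩

/-- The stabilizer of the ordered edge `(⟨a⟩, ⟨b⟩)` is isomorphic to
`ℤ/2 × ℤ/2`, generated by `a ↦ a⁻¹, b ↦ b` and `a ↦ a, b ↦ b⁻¹`. -/
theorem edge_stabilizer_klein_four :
    ∃ σ τ : MulAut F2,
      σ ga = ga⁻¹ ∧ σ gb = gb ∧ τ ga = ga ∧ τ gb = gb⁻¹ ∧
      σ ∈ edgeStab ∧ τ ∈ edgeStab ∧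
      Subgroup.closure {σ, τ} = edgeStab ∧
      Nonempty (edgeStab ≃* Multiplicative (ZMod 2) × Multiplicative (ZMod 2)) :=
  ⟨sAut, tAut, sAut_ga, sAut_gb, tAut_ga, tAut_gb, sAut_mem, tAut_mem, closure_eq, ⟨eIso⟩⟩
end

section
/- Let F_2 = ⟨a, b⟩ and let w ∈ F_2 have a reduced expression w = y a^{±1} b^k with k ∈ ℤ, and let t be a word starting with a, containing no occurrence of a^{-1}, whose b-tiles (maximal b-powers between occurrences of a) all have exponent of absolute value differing from |k| by at least 2. Then in the reduced form of w·t, all b-tiles of y remain unchanged. -/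
/-- The `b`-tiles of a word in the letters `a^{±1}` (index `0`) and `b^{±1}`
(index `1`): the list of exponents of the maximal powers of `b` between
consecutive occurrences of `a^{±1}`, including before the first and after the
last such occurrence. -/
def bTiles : List (Fin 2 × Bool) → List ℤ
  | [] => [0]
  | l :: rest =>
    let ts := bTiles rest
    if l.1 = 0 then 0 :: ts
    else ((if l.2 then (1 : ℤ) else -1) + ts.headI) :: ts.tail

section Aux

open FreeGroup List

variable {α : Type*} [DecidableEq α]

/-- The no-cancellation relation between adjacent letters. -/
def NC (p q : α × Bool) : Prop := p.1 = q.1 → p.2 = q.2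

lemma reduce_eq_self_of_chain' : ∀ {L : List (α × Bool)}, List.Chain' NC L → reduce L = L := by
  intro L h
  induction L with
  | nil => rfl
  | cons x L ih =>
    have hL : reduce L = L := ih h.tail
    rw [reduce.cons, hL]
    cases L with
    | nil => rfl
    | cons y rest =>
      have hxy : NC x y := (List.isChain_cons_cons.mp h).1
      simp only
      rw [if_neg]
      rintro ⟨h1, h2⟩
      have := hxy h1
      rw [this] at h2
      simp at h2

lemma reduce_tail_of_reduce_eq_self {L : List (α × Bool)} (h : reduce L = L) :
    reduce L.tail = L.tail := by
  cases L with
  | nil => rfl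
  | cons x L =>
    simp only [List.tail_cons]
    rw [reduce.cons] at h
    cases hL : reduce L with
    | nil =>
      rw [hL] at h
      cases L with
      | nil => rfl
      | cons y rest => simp at h
    | cons hd tl =>
      rw [hL] at h
      simp only at h
      by_cases hc : x.1 = hd.1 ∧ x.2 = !hd.2
      · rw [if_pos hc] at h
        have h1 : tl.length = L.length + 1 := by
          have := congrArg List.length h; simpa using this
        have h2 : (hd :: tl).length ≤ L.length := by
          rw [← hL]; exact (Red.length_le reduce.red)
        simp at h2; omega
      · rw [if_neg hc] at h
        have := (List.cons.injEq _ _ _ _).mp h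
        exact this.2

lemma chain'_of_reduce_eq_self : ∀ {L : List (α × Bool)}, reduce L = L → List.Chain' NC L := by
  intro L
  induction L with
  | nil => exact fun _ => List.isChain_nil
  | cons x L ih =>
    intro h
    have hL : reduce L = L := reduce_tail_of_reduce_eq_self h
    refine List.isChain_cons.mpr ⟨?_, ih hL⟩
    intro y hy
    cases L with
    | nil => simp at hy
    | cons z rest =>
      simp only [List.head?_cons, Option.mem_some_iff] at hy
      subst hy
      intro h1
      by_contra h2
      have h2' : x.2 = !z.2 := by
        revert h2; cases x.2 <;> cases z.2 <;> simp
      rw [reduce.cons, hL] at h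
      simp only at h
      rw [if_pos (show x.1 = z.1 ∧ x.2 = !z.2 from ⟨h1, h2'⟩)] at h
      have hlen : rest.length = rest.length + 1 + 1 := by
        simpa using congrArg List.length h
      omega

lemma chain'_toWord (x : FreeGroup α) : List.Chain' NC x.toWord :=
  chain'_of_reduce_eq_self (reduce_toWord x)

lemma bTiles_ne_nil : ∀ L, bTiles L ≠ []
  | [] => by simp [bTiles]
  | l :: rest => by
    unfold bTiles
    split <;> simp

lemma bTiles_append (s : Bool) : ∀ (L rest : List (Fin 2 × Bool)),
    bTiles (L ++ ((0 : Fin 2), s) :: rest) = bTiles L ++ bTiles rest := by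
  intro L rest
  induction L with
  | nil => simp [bTiles]
  | cons x L ih =>
    by_cases hx : x.1 = 0
    · simp [bTiles, hx, ih]
    · obtain ⟨a, as, ha⟩ := List.exists_cons_of_ne_nil (bTiles_ne_nil L)
      simp [bTiles, hx, ih, ha]

lemma toWord_of_zpow (x : α) (k : ℤ) (hk : k ≠ 0) :
    (FreeGroup.of x ^ k).toWord = List.replicate k.natAbs (x, decide (0 < k)) := by
  rcases lt_trichotomy k 0 with h | h | h
  · have : FreeGroup.of x ^ k = (FreeGroup.of x ^ (-k).toNat)⁻¹ := by
      rw [← zpow_natCast, ← zpow_neg]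
      congr 1
      omega
    rw [this, toWord_inv, toWord_of_pow, invRev]
    have hd : decide (0 < k) = false := by simp; omega
    rw [hd]
    simp only [List.map_replicate, Bool.not_true, List.reverse_replicate]
    congr 1
    omega
  · exact absurd h hk
  · have : FreeGroup.of x ^ k = FreeGroup.of x ^ k.toNat := by
      rw [← zpow_natCast]; congr 1; omega
    rw [this, toWord_of_pow]
    have hd : decide (0 < k) = true := by simpa using h
    rw [hd]
    congr 1
    omega

lemma chain'_NC_replicate (n : ℕ) (c : α × Bool) : List.Chain' NC (List.replicate n c) := by
  induction n with
  | zero => exact List.isChain_nil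
  | succ n ih =>
    cases n with
    | zero => exact List.isChain_singleton _
    | succ m =>
      rw [List.replicate_succ]
      exact List.isChain_cons_cons.mpr ⟨fun _ => rfl, ih⟩

end Aux

open FreeGroup List

/-- If `w` has reduced expression `w = y a^{±1} b^k` and `t` is a word starting
with `a`, containing no `a⁻¹`, all of whose `b`-tiles have absolute value
differing from `|k|` by at least `2`, then in the reduced form of `w·t` all
`b`-tiles of `y` remain unchanged. -/
theorem b_tiles_unchanged (w y t : F2) (δ k : ℤ)
    (hδ : δ = 1 ∨ δ = -1)
    (hw : w = y * ga ^ δ * gb ^ k)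
    (hred : FreeGroup.toWord w = FreeGroup.toWord y ++ FreeGroup.toWord (ga ^ δ * gb ^ k))
    (ht1 : (FreeGroup.toWord t).head? = some (0, true))
    (ht2 : ((0 : Fin 2), false) ∉ FreeGroup.toWord t)
    (ht3 : ∀ m ∈ bTiles (FreeGroup.toWord t), 2 ≤ |(|m| - |k|)|) :
    (bTiles (FreeGroup.toWord (w * t))).take (bTiles (FreeGroup.toWord y)).length
      = bTiles (FreeGroup.toWord y) := by
  -- toWord t starts with (0, true)
  obtain ⟨rest, hrest⟩ : ∃ rest, toWord t = ((0 : Fin 2), true) :: rest := by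
    cases h : toWord t with
    | nil => rw [h] at ht1; simp at ht1
    | cons a as =>
      rw [h] at ht1
      simp only [List.head?_cons, Option.some.injEq] at ht1
      exact ⟨as, by rw [ht1]⟩
  -- |k| ≥ 2
  have hk2 : 2 ≤ |k| := by
    have h0 : (0 : ℤ) ∈ bTiles (toWord t) := by rw [hrest]; simp [bTiles]
    have := ht3 0 h0
    simpa using this
  have hk : k ≠ 0 := by intro h; rw [h] at hk2; simp at hk2
  have hn : k.natAbs ≠ 0 := by omega
  set u := decide (0 < k) with hu
  have hbw : toWord (gb ^ k) = List.replicate k.natAbs ((1 : Fin 2), u) :=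
    toWord_of_zpow 1 k hk
  -- toWord (ga^δ)
  set s : Bool := decide (δ = 1) with hs
  have haw : toWord (ga ^ δ) = [((0 : Fin 2), s)] := by
    rcases hδ with h | h
    · rw [h]; simp [ga, hs, h, toWord_of]
    · rw [h]
      have : ga ^ (-1 : ℤ) = ga⁻¹ := by simp
      rw [this]
      simp [ga, toWord_inv, toWord_of, invRev, hs, h]
  -- toWord (ga^δ * gb^k)
  have hab : toWord (ga ^ δ * gb ^ k)
      = ((0 : Fin 2), s) :: List.replicate k.natAbs ((1 : Fin 2), u) := by
    have h1 : ga ^ δ * gb ^ k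
        = FreeGroup.mk ([((0 : Fin 2), s)] ++ List.replicate k.natAbs ((1 : Fin 2), u)) := by
      rw [← mul_mk]
      rw [← haw, ← hbw, mk_toWord, mk_toWord]
    rw [h1, toWord_mk]
    apply reduce_eq_self_of_chain'
    refine List.isChain_cons.mpr ⟨?_, chain'_NC_replicate _ _⟩
    intro z hz
    have : z = ((1 : Fin 2), u) := by
      cases hm : k.natAbs with
      | zero => omega
      | succ m => rw [hm, List.replicate_succ] at hz; simp at hz; exact hz.symm
    rw [this]
    intro h
    exact absurd h (by decide : ¬((0 : Fin 2) = 1))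
  -- toWord (w * t) = toWord w ++ toWord t
  have hwt : toWord (w * t) = toWord w ++ toWord t := by
    have h1 : w * t = FreeGroup.mk (toWord w ++ toWord t) := by
      rw [← mul_mk, mk_toWord, mk_toWord]
    rw [h1, toWord_mk]
    apply reduce_eq_self_of_chain'
    apply List.isChain_append.mpr
    refine ⟨chain'_toWord w, chain'_toWord t, ?_⟩
    intro p hp q hq
    -- p is the last letter of toWord w, a b-letter
    have hlast : (toWord w).getLast? = some ((1 : Fin 2), u) := by
      obtain ⟨m, hm⟩ : ∃ m, k.natAbs = m + 1 := ⟨k.natAbs - 1, by omega⟩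
      rw [hred, hab, hm, List.replicate_succ']
      rw [show toWord y ++ ((0 : Fin 2), s)
            :: (List.replicate m ((1 : Fin 2), u) ++ [((1 : Fin 2), u)])
          = (toWord y ++ ((0 : Fin 2), s) :: List.replicate m ((1 : Fin 2), u))
            ++ [((1 : Fin 2), u)] by simp]
      rw [List.getLast?_concat]
    rw [hlast] at hp
    simp only [Option.mem_some_iff] at hp
    subst hp
    intro h
    exfalso
    rw [hrest] at hq
    simp only [List.head?_cons, Option.mem_some_iff] at hq
    rw [← hq] at h
    exact absurd h (by decide : ¬((1 : Fin 2) = 0))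
  rw [hwt, hred, hab, hrest]
  have : (toWord y ++ ((0 : Fin 2), s) :: List.replicate k.natAbs ((1 : Fin 2), u))
      ++ ((0 : Fin 2), true) :: rest
      = toWord y ++ ((0 : Fin 2), s)
        :: (List.replicate k.natAbs ((1 : Fin 2), u) ++ ((0 : Fin 2), true) :: rest) := by
    simp
  rw [this]
  have h2 : bTiles (toWord y ++ ((0 : Fin 2), s)
      :: (List.replicate k.natAbs ((1 : Fin 2), u) ++ ((0 : Fin 2), true) :: rest))
      = bTiles (toWord y)
        ++ bTiles (List.replicate k.natAbs ((1 : Fin 2), u) ++ ((0 : Fin 2), true) :: rest) :=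
    bTiles_append s _ _
  rw [h2]
  exact List.take_left
end
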